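/- arXiv:1908.04195 — 8 statements merged into one kernel-verified Lean document; each statement's English description precedes it below -/
import Mathlib

section
/- A subgroup of a finitely generated profinite abelian group is open if and only if it has finite index; consequently, two topologically finitely generated profinite abelian groups are topologically isomorphic if and only if they are isomorphic as abstract abelian groups. -/
/-- `A` and `B` are topologically isomorphic topological (additive) groups. -/
def TopIso (A B : Type) [AddCommGroup A] [AddCommGroup B] [TopologicalSpace A]
    [TopologicalSpace B] : Prop :=
  ∃ e : A ≃+ B, Continuous e ∧ Continuous e.symm

section Aux

/-- In a profinite additive group, every neighborhood of `0` contains an open subgroup. -/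
lemma aux_exists_openAddSubgroup {G : Type} [AddGroup G] [TopologicalSpace G]
    [IsTopologicalAddGroup G] [CompactSpace G] [T2Space G] [TotallyDisconnectedSpace G]
    {U : Set G} (hU : U ∈ nhds (0 : G)) :
    ∃ V : OpenAddSubgroup G, (V : Set G) ⊆ U := by
  obtain ⟨W, ⟨h0W, hW⟩, hWU⟩ := (nhds_basis_clopen (0 : G)).mem_iff.mp hU
  obtain ⟨V, hV⟩ :=
    IsTopologicalAddGroup.exist_openAddSubgroup_sub_clopen_nhds_of_zero hW h0W
  exact ⟨V, hV.trans hWU⟩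

/-- A finitely generated `n`-torsion abelian group has cardinality at most `n ^ d`. -/
lemma aux_card_bound {Q : Type} [AddCommGroup Q] {ι : Type} [Fintype ι] {n : ℕ} (hn : n ≠ 0)
    (g : ι → Q) (htor : ∀ q : Q, n • q = 0)
    (hgen : AddSubgroup.closure (Set.range g) = ⊤) :
    Nat.card Q ≤ n ^ Fintype.card ι := by
  classical
  haveI : NeZero n := ⟨hn⟩
  have hsm : ∀ i, (zmultiplesHom Q (g i)) ((n : ℤ)) = 0 := by
    intro i
    simpa [zmultiplesHom_apply, natCast_zsmul] using htor (g i)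
  let ψ : ι → (ZMod n →+ Q) := fun i => ZMod.lift n ⟨zmultiplesHom Q (g i), hsm i⟩
  let φ : ((ι → ZMod n)) →+ Q :=
    ∑ i : ι, (ψ i).comp (Pi.evalAddMonoidHom (fun _ => ZMod n) i)
  have hψ : ∀ i, ψ i 1 = g i := by
    intro i
    have h1 : ψ i (((1 : ℤ) : ZMod n)) = (zmultiplesHom Q (g i)) 1 :=
      ZMod.lift_coe n _ 1
    simpa using h1
  have hφ : Function.Surjective φ := by
    rw [← AddMonoidHom.range_eq_top, eq_top_iff, ← hgen, AddSubgroup.closure_le]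
    rintro _ ⟨i, rfl⟩
    refine ⟨(Pi.single i (1 : ZMod n) : ι → ZMod n), ?_⟩
    have : φ (Pi.single i (1 : ZMod n) : ι → ZMod n) =
        ∑ j : ι, ψ j ((Pi.single i (1 : ZMod n) : ι → ZMod n) j) := by
      simp [φ, AddMonoidHom.finset_sum_apply]
    rw [this, Finset.sum_eq_single i]
    · rw [Pi.single_eq_same, hψ]
    · intro j _ hji
      rw [Pi.single_eq_of_ne hji]
      simp
    · intro h; exact absurd (Finset.mem_univ i) h
  calc Nat.card Q ≤ Nat.card (ι → ZMod n) := Nat.card_le_card_of_surjective φ hφ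
    _ = n ^ Fintype.card ι := by
        simp [Nat.card_pi, Nat.card_zmod, Finset.prod_const, Finset.card_univ]

/-- A dense subgroup together with an open subgroup generate everything. -/
lemma aux_dense_sup {G : Type} [AddCommGroup G] [TopologicalSpace G] [IsTopologicalAddGroup G]
    {D : AddSubgroup G} (hD : Dense (D : Set G)) (W : AddSubgroup G) (hW : IsOpen (W : Set G)) :
    D ⊔ W = ⊤ := by
  rw [eq_top_iff]
  intro x _
  have hop : IsOpen ((fun y => y - x) ⁻¹' (W : Set G)) :=
    hW.preimage (continuous_id.sub continuous_const)
  have hne : ((fun y => y - x) ⁻¹' (W : Set G)).Nonempty := ⟨x, by simp [W.zero_mem]⟩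
  obtain ⟨d, hdD, hdW⟩ := hD.exists_mem_open hop hne
  -- d - x ∈ W, so x = d - (d - x) ∈ D ⊔ W
  have : x = d + (-(d - x)) := by abel
  rw [this]
  exact AddSubgroup.add_mem_sup hdD (neg_mem hdW)

/-- Key lemma: in a topologically finitely generated profinite abelian group,
a subgroup is open iff it has finite index. -/
lemma aux_key {G : Type} [AddCommGroup G] [TopologicalSpace G] [IsTopologicalAddGroup G]
    [CompactSpace G] [T2Space G] [TotallyDisconnectedSpace G]
    (hfg : ∃ S : Finset G, Dense ((AddSubgroup.closure (S : Set G) : AddSubgroup G) : Set G))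
    (H : AddSubgroup G) : IsOpen (H : Set G) ↔ Finite (G ⧸ H) := by
  constructor
  · exact fun h => AddSubgroup.quotient_finite_of_isOpen H h
  · intro hfin
    obtain ⟨S, hS⟩ := hfg
    set n : ℕ := Nat.card (G ⧸ H) with hn
    have hn0 : n ≠ 0 := Nat.card_ne_zero.mpr ⟨inferInstance, inferInstance⟩
    -- `n • x ∈ H` for all `x`
    have hnH : ∀ x : G, n • x ∈ H := by
      intro x
      haveI := Fintype.ofFinite (G ⧸ H)
      have : (n : ℕ) • ((x : G ⧸ H)) = 0 := by
        rw [hn, Nat.card_eq_fintype_card]; exact card_nsmul_eq_zero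
      rwa [← QuotientAddGroup.mk_nsmul, QuotientAddGroup.eq_zero_iff] at this
    -- the subgroup `nG`
    set φ : G →+ G := n • AddMonoidHom.id G with hφ
    set N : AddSubgroup G := φ.range with hN
    have hφx : ∀ x : G, φ x = n • x := fun x => rfl
    have hNle : N ≤ H := by rintro _ ⟨x, rfl⟩; exact hnH x
    have hNclosed : IsClosed (N : Set G) := by
      have : (N : Set G) = Set.range (fun x : G => n • x) := by
        ext y; simp [hN, AddMonoidHom.mem_range, hφx]
      rw [this]
      exact (isCompact_range (continuous_nsmul n)).isClosed
    -- torsion: n • q = 0 in G ⧸ (N ⊔ V)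
    -- bound indices of N ⊔ V over open subgroups V
    have hopen : ∀ V : OpenAddSubgroup G, IsOpen ((N ⊔ V.toAddSubgroup : AddSubgroup G) : Set G) :=
      fun V => AddSubgroup.isOpen_mono le_sup_right V.isOpen
    have hfinV : ∀ V : OpenAddSubgroup G, Finite (G ⧸ (N ⊔ V.toAddSubgroup)) :=
      fun V => AddSubgroup.quotient_finite_of_isOpen _ (hopen V)
    have hne0 : ∀ V : OpenAddSubgroup G, (N ⊔ V.toAddSubgroup).index ≠ 0 := by
      intro V
      haveI := hfinV V
      exact AddSubgroup.index_ne_zero_of_finite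
    have hbound : ∀ V : OpenAddSubgroup G,
        (N ⊔ V.toAddSubgroup).index ≤ n ^ S.card := by
      intro V
      set K : AddSubgroup G := N ⊔ V.toAddSubgroup with hK
      set π : G →+ G ⧸ K := QuotientAddGroup.mk' K with hπ
      have hπsurj : Function.Surjective π := QuotientAddGroup.mk'_surjective K
      have htor : ∀ q : G ⧸ K, n • q = 0 := by
        intro q
        obtain ⟨x, rfl⟩ := hπsurj q
        have : π (n • x) = n • π x := map_nsmul π n x
        rw [← this]
        rw [hπ, QuotientAddGroup.mk'_apply, QuotientAddGroup.eq_zero_iff]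
        exact AddSubgroup.mem_sup_left ⟨x, rfl⟩
      have hgen : AddSubgroup.closure (Set.range (fun s : S => π s)) = ⊤ := by
        have hrange : Set.range (fun s : S => π (s : G)) = π '' (S : Set G) := by
          ext q; constructor
          · rintro ⟨⟨s, hs⟩, rfl⟩; exact ⟨s, hs, rfl⟩
          · rintro ⟨s, hs, rfl⟩; exact ⟨⟨s, hs⟩, rfl⟩
        rw [hrange, ← AddMonoidHom.map_closure]
        have hsup : AddSubgroup.closure (S : Set G) ⊔ K = ⊤ :=
          aux_dense_sup hS K (hopen V)
        rw [eq_top_iff]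
        intro q _
        obtain ⟨x, rfl⟩ := hπsurj q
        have hx : x ∈ AddSubgroup.closure (S : Set G) ⊔ K := hsup ▸ AddSubgroup.mem_top x
        rw [AddSubgroup.mem_sup] at hx
        obtain ⟨y, hy, z, hz, rfl⟩ := hx
        have : π (y + z) = π y := by
          rw [map_add]
          have : π z = 0 := by
            rw [hπ, QuotientAddGroup.mk'_apply, QuotientAddGroup.eq_zero_iff]; exact hz
          rw [this, add_zero]
        rw [this]
        exact AddSubgroup.mem_map_of_mem π hy
      have := aux_card_bound (ι := S) hn0 (fun s => π s) htor hgen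
      calc K.index = Nat.card (G ⧸ K) := rfl
        _ ≤ n ^ Fintype.card S := this
        _ = n ^ S.card := by rw [Fintype.card_coe]
    -- pick the open subgroup maximizing the index
    set T : Set ℕ := Set.range (fun V : OpenAddSubgroup G => (N ⊔ V.toAddSubgroup).index) with hT
    have hTne : T.Nonempty := ⟨(N ⊔ (⊤ : OpenAddSubgroup G).toAddSubgroup).index, ⟨⊤, rfl⟩⟩
    have hTbdd : BddAbove T := by
      refine ⟨n ^ S.card, ?_⟩
      rintro _ ⟨V, rfl⟩
      exact hbound V
    obtain ⟨V₀, hV₀⟩ := Nat.sSup_mem hTne hTbdd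
    -- maximality forces `N ⊔ V₀ ≤ N ⊔ V` for every open `V`
    have hmin : ∀ V : OpenAddSubgroup G, (N ⊔ V₀.toAddSubgroup) ≤ N ⊔ V.toAddSubgroup := by
      intro V
      have hle : N ⊔ (V₀ ⊓ V).toAddSubgroup ≤ N ⊔ V₀.toAddSubgroup :=
        sup_le_sup_left inf_le_left _
      have hdvd : (N ⊔ V₀.toAddSubgroup).index ∣ (N ⊔ (V₀ ⊓ V).toAddSubgroup).index :=
        AddSubgroup.index_dvd_of_le hle
      have hV₀' : (N ⊔ V₀.toAddSubgroup).index = sSup T := hV₀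
      have hle2 : (N ⊔ (V₀ ⊓ V).toAddSubgroup).index ≤ (N ⊔ V₀.toAddSubgroup).index := by
        rw [hV₀']
        exact le_csSup hTbdd ⟨V₀ ⊓ V, rfl⟩
      have heq : (N ⊔ (V₀ ⊓ V).toAddSubgroup).index = (N ⊔ V₀.toAddSubgroup).index :=
        le_antisymm hle2 (Nat.le_of_dvd (Nat.pos_of_ne_zero (hne0 _)) hdvd)
      -- equal index and inclusion force equality of subgroups
      have hrel : (N ⊔ (V₀ ⊓ V).toAddSubgroup).relIndex (N ⊔ V₀.toAddSubgroup) = 1 := by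
        have := AddSubgroup.relIndex_mul_index hle
        rw [heq] at this
        have hpos : (N ⊔ V₀.toAddSubgroup).index ≠ 0 := hne0 V₀
        exact Nat.mul_right_cancel (Nat.pos_of_ne_zero hpos) (by rw [one_mul]; exact this)
      have : N ⊔ V₀.toAddSubgroup ≤ N ⊔ (V₀ ⊓ V).toAddSubgroup :=
        AddSubgroup.relIndex_eq_one.mp hrel
      exact this.trans (sup_le_sup_left inf_le_right _)
    -- hence `N ⊔ V₀ ⊆ closure N = N`
    have hsub : (N ⊔ V₀.toAddSubgroup : AddSubgroup G) ≤ N := by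
      intro x hx
      have hxcl : x ∈ closure (N : Set G) := by
        rw [mem_closure_iff_nhds]
        intro U hU
        have hU' : (fun y => x + y) ⁻¹' U ∈ nhds (0 : G) := by
          have hcont : Continuous (fun y : G => x + y) := continuous_const.add continuous_id
          have hU'' : U ∈ nhds (x + 0) := by simpa using hU
          exact hcont.continuousAt.preimage_mem_nhds hU''
        obtain ⟨V, hV⟩ := aux_exists_openAddSubgroup hU'
        have hxV : x ∈ N ⊔ V.toAddSubgroup := hmin V hx
        rw [AddSubgroup.mem_sup] at hxV
        obtain ⟨g, hg, v, hv, rfl⟩ := hxV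
        refine ⟨g, ?_, hg⟩
        have : g = (g + v) + (-v) := by abel
        rw [this]
        exact hV (neg_mem hv)
      rwa [hNclosed.closure_eq] at hxcl
    have hNopen : IsOpen (N : Set G) := by
      have : (N : AddSubgroup G) = N ⊔ V₀.toAddSubgroup := le_antisymm le_sup_left hsub
      rw [this]
      exact hopen V₀
    exact AddSubgroup.isOpen_mono hNle hNopen

/-- An abstract isomorphism between suitable profinite groups is continuous. -/
lemma aux_cont {G G' : Type}
    [AddCommGroup G] [TopologicalSpace G] [IsTopologicalAddGroup G]
    [CompactSpace G] [T2Space G] [TotallyDisconnectedSpace G]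
    [AddCommGroup G'] [TopologicalSpace G'] [IsTopologicalAddGroup G']
    [CompactSpace G'] [T2Space G'] [TotallyDisconnectedSpace G']
    (hfg : ∃ S : Finset G, Dense ((AddSubgroup.closure (S : Set G) : AddSubgroup G) : Set G))
    (e : G ≃+ G') : Continuous e := by
  apply continuous_of_continuousAt_zero e
  rw [ContinuousAt, map_zero]
  intro U hU
  obtain ⟨V', hV'⟩ := aux_exists_openAddSubgroup (G := G') hU
  set H : AddSubgroup G := AddSubgroup.comap e.toAddMonoidHom V'.toAddSubgroup with hH
  have hidx : H.index = V'.toAddSubgroup.index :=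
    AddSubgroup.index_comap_of_surjective _ e.surjective
  have hfinH : Finite (G ⧸ H) := by
    haveI : Finite (G' ⧸ V'.toAddSubgroup) :=
      AddSubgroup.quotient_finite_of_isOpen _ V'.isOpen
    haveI : H.FiniteIndex := ⟨by rw [hidx]; exact AddSubgroup.index_ne_zero_of_finite⟩
    exact AddSubgroup.finite_quotient_of_finiteIndex (H := H)
  have hHopen : IsOpen (H : Set G) := (aux_key hfg H).mpr hfinH
  refine Filter.mem_of_superset (hHopen.mem_nhds H.zero_mem) ?_
  intro x hx
  exact hV' hx

end Aux

/-- In a topologically finitely generated profinite abelian group, a subgroup is open iff it has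
finite index; consequently two such groups are topologically isomorphic iff they are isomorphic
as abstract abelian groups. -/
theorem stmt2 {G G' : Type}
    [AddCommGroup G] [TopologicalSpace G] [IsTopologicalAddGroup G]
    [CompactSpace G] [T2Space G] [TotallyDisconnectedSpace G]
    [AddCommGroup G'] [TopologicalSpace G'] [IsTopologicalAddGroup G']
    [CompactSpace G'] [T2Space G'] [TotallyDisconnectedSpace G']
    (hfg : ∃ S : Finset G, Dense ((AddSubgroup.closure (S : Set G) : AddSubgroup G) : Set G))
    (hfg' : ∃ S : Finset G', Dense ((AddSubgroup.closure (S : Set G') : AddSubgroup G') : Set G')) :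
    (∀ H : AddSubgroup G, IsOpen (H : Set G) ↔ Finite (G ⧸ H)) ∧
      (TopIso G G' ↔ Nonempty (G ≃+ G')) := by
  refine ⟨aux_key hfg, ?_, ?_⟩
  · rintro ⟨e, _, _⟩; exact ⟨e⟩
  · rintro ⟨e⟩
    exact ⟨e, aux_cont hfg e, aux_cont hfg' e.symm⟩
end

section
/- If G is a torus-free protorus and Δ is a compact totally disconnected (profinite) subgroup of G such that G/Δ is topologically isomorphic to a finite-dimensional torus 𝕋^{dim G}, then the kernel of the map φ_Δ : Δ × 𝔏(G) → G, φ_Δ(α, r) = α + exp_G(r), is a discrete free abelian group of rank dim G. -/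
/-- `Δ` is a profinite (closed, totally disconnected) subgroup of `G` such that the
quotient `G/Δ` is a torus; i.e. `Δ ∈ L(G)`. -/
def IsTQS {G : Type} [AddCommGroup G] [TopologicalSpace G] [IsTopologicalAddGroup G]
    (Δ : AddSubgroup G) : Prop :=
  IsClosed (Δ : Set G) ∧ TotallyDisconnectedSpace Δ ∧
    ∃ n : ℕ, TopIso (G ⧸ Δ) (Fin n → AddCircle (1 : ℝ))

/-- `G` is torus-free: no subgroup of `G` is topologically isomorphic to `𝕋 = ℝ/ℤ`. -/
def TorusFree (G : Type) [AddCommGroup G] [TopologicalSpace G] : Prop :=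
  ∀ H : AddSubgroup G, ¬ TopIso H (AddCircle (1 : ℝ))

/-- The image `exp_G 𝔏(G)` of the exponential map: the path component of `0` in `G`. -/
def expImg (G : Type) [AddCommGroup G] [TopologicalSpace G] : Set G :=
  {g : G | ∃ r : ContinuousAddMonoidHom ℝ G, r 1 = g}

/-- Evaluation at `1` of a one-parameter subgroup, as a homomorphism `𝔏(G) →+ G`. -/
def evalOne (G : Type) [AddCommGroup G] [TopologicalSpace G] [IsTopologicalAddGroup G] :
    ContinuousAddMonoidHom ℝ G →+ G where
  toFun r := r 1
  map_zero' := rfl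
  map_add' _ _ := rfl

/-- The resolution map `φ_Δ : Δ × 𝔏(G) →+ G`, `(α, r) ↦ α + exp_G r = α + r(1)`. -/
def resolutionHom (G : Type) [AddCommGroup G] [TopologicalSpace G] [IsTopologicalAddGroup G]
    (Δ : AddSubgroup G) : (Δ × ContinuousAddMonoidHom ℝ G) →+ G :=
  (Δ.subtype.comp (AddMonoidHom.fst _ _)) + ((evalOne G).comp (AddMonoidHom.snd _ _))


open Set

set_option linter.unusedSectionVars false
section Lift
variable {H T : Type*} [AddCommGroup H] [TopologicalSpace H] [IsTopologicalAddGroup H]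
  [AddCommGroup T] [TopologicalSpace T]

/-- Uniqueness of lifts of a map from `ℝ` through a hom whose kernel meets a
neighborhood `U₀` of `0` only in `0`. -/
theorem lift_unique (ψ : H →+ T) (U₀ : Set H) (hU₀ : IsOpen U₀) (h0U : (0 : H) ∈ U₀)
    (hdisc : ∀ x ∈ U₀, ψ x = 0 → x = 0)
    (r r' : ℝ →+ H) (hr : Continuous r) (hr' : Continuous r')
    (hagree : ∀ t, ψ (r t) = ψ (r' t)) : ∀ t, r t = r' t := by
  -- the difference is a continuous map into the kernel
  set d : ℝ → H := fun t => r t - r' t with hd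
  have hdc : Continuous d := hr.sub hr'
  have hker : ∀ t, ψ (d t) = 0 := by
    intro t; simp [hd, map_sub, hagree t]
  -- choose a symmetric open neighborhood U₁ ⊆ U₀
  obtain ⟨U₁, hU₁o, h0U₁, hU₁s, hU₁U₀⟩ : ∃ U₁ : Set H, IsOpen U₁ ∧ (0 : H) ∈ U₁ ∧
      (∀ x ∈ U₁, -x ∈ U₁) ∧ U₁ ⊆ U₀ := by
    refine ⟨U₀ ∩ (-U₀), hU₀.inter (hU₀.neg), ⟨h0U, by simpa using h0U⟩, ?_, inter_subset_left⟩
    rintro x ⟨h1, h2⟩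
    exact ⟨h2, by simpa using h1⟩
  have key : ∀ t, d t = 0 := by
    have hA : IsOpen {t : ℝ | d t = 0} := by
      rw [isOpen_iff_mem_nhds]
      intro t ht
      have : d ⁻¹' U₁ ∈ nhds t := hdc.continuousAt.preimage_mem_nhds
        (by simpa [mem_setOf_eq.mp ht] using hU₁o.mem_nhds h0U₁)
      filter_upwards [this] with s hs
      exact hdisc _ (hU₁U₀ hs) (hker s)
    have hB : IsOpen {t : ℝ | d t ≠ 0} := by
      rw [isOpen_iff_mem_nhds]
      intro t ht
      have hsub : Continuous fun s => d s - d t := hdc.sub continuous_const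
      have : (fun s => d s - d t) ⁻¹' U₁ ∈ nhds t := hsub.continuousAt.preimage_mem_nhds
        (by simpa using hU₁o.mem_nhds h0U₁)
      filter_upwards [this] with s hs
      intro hds
      apply ht
      have h1 : -(d s - d t) ∈ U₁ := hU₁s _ hs
      have h2 : d t - d s ∈ U₁ := by simpa [neg_sub] using h1
      have : d t - d s = 0 → d t = 0 := by
        intro h; have := sub_eq_zero.mp h; rw [this, hds]
      exact this (hdisc _ (hU₁U₀ h2) (by simp [map_sub, hker]))
    have : {t : ℝ | d t = 0} = univ := by
      have hne : ({t : ℝ | d t = 0}).Nonempty := ⟨0, by simp [hd]⟩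
      have := isClopen_iff.mp ⟨⟨(hB : IsOpen {t : ℝ | d t = 0}ᶜ)⟩, hA⟩
      rcases this with h | h
      · exact absurd hne (Set.not_nonempty_iff_eq_empty.mpr h)
      · exact h
    intro t
    have ht : t ∈ {t : ℝ | d t = 0} := this ▸ mem_univ t
    exact ht
  intro t
  have := key t
  simpa [hd, sub_eq_zero] using this

end Lift

section LiftEx
set_option linter.unusedSectionVars false
set_option maxHeartbeats 1000000
variable {H T : Type*} [AddCommGroup H] [TopologicalSpace H] [IsTopologicalAddGroup H]
  [AddCommGroup T] [TopologicalSpace T]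

/-- Existence of lifts of one-parameter subgroups through an open homomorphism with
"locally trivial" kernel. -/
theorem lift_exists (ψ : H →+ T) (hψo : IsOpenMap ψ) (U₀ : Set H) (hU₀ : IsOpen U₀)
    (h0U : (0 : H) ∈ U₀) (hdisc : ∀ x ∈ U₀, ψ x = 0 → x = 0)
    (χ : ℝ →+ T) (hχ : Continuous χ) :
    ∃ r : ℝ →+ H, Continuous r ∧ ∀ t, ψ (r t) = χ t := by
  classical
  -- Step A : W with W - W ⊆ U₀
  obtain ⟨W, hWo, h0W, hWsub⟩ : ∃ W : Set H, IsOpen W ∧ (0 : H) ∈ W ∧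
      ∀ x ∈ W, ∀ y ∈ W, x - y ∈ U₀ := by
    have hc : Continuous fun p : H × H => p.1 - p.2 := continuous_sub
    have hm : (fun p : H × H => p.1 - p.2) ⁻¹' U₀ ∈ nhds ((0 : H), (0 : H)) :=
      hc.continuousAt.preimage_mem_nhds (by simpa using hU₀.mem_nhds h0U)
    rw [nhds_prod_eq, Filter.mem_prod_iff] at hm
    obtain ⟨s, hs, t, ht, hst⟩ := hm
    obtain ⟨s', hs's, hs'o, h0s'⟩ := mem_nhds_iff.mp hs
    obtain ⟨t', ht't, ht'o, h0t'⟩ := mem_nhds_iff.mp ht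
    refine ⟨s' ∩ t', hs'o.inter ht'o, ⟨h0s', h0t'⟩, ?_⟩
    intro x hx y hy
    exact hst (Set.mk_mem_prod (hs's hx.1) (ht't hy.2))
  have huniq : ∀ x ∈ W, ∀ y ∈ W, ψ x = ψ y → x = y := by
    intro x hx y hy hxy
    have : x - y = 0 := hdisc _ (hWsub x hx y hy) (by simp [map_sub, hxy])
    exact sub_eq_zero.mp this
  -- generic small-plus-small lemma
  have plusmaker : ∀ Z : Set H, IsOpen Z → (0 : H) ∈ Z → ∃ Y : Set H, IsOpen Y ∧ (0 : H) ∈ Y ∧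
      ∀ x ∈ Y, ∀ y ∈ Y, x + y ∈ Z := by
    intro Z hZo h0Z
    have hc : Continuous fun p : H × H => p.1 + p.2 := continuous_add
    have hm : (fun p : H × H => p.1 + p.2) ⁻¹' Z ∈ nhds ((0 : H), (0 : H)) :=
      hc.continuousAt.preimage_mem_nhds (by simpa using hZo.mem_nhds h0Z)
    rw [nhds_prod_eq, Filter.mem_prod_iff] at hm
    obtain ⟨s, hs, t, ht, hst⟩ := hm
    obtain ⟨s', hs's, hs'o, h0s'⟩ := mem_nhds_iff.mp hs
    obtain ⟨t', ht't, ht'o, h0t'⟩ := mem_nhds_iff.mp ht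
    refine ⟨s' ∩ t', hs'o.inter ht'o, ⟨h0s', h0t'⟩, ?_⟩
    intro x hx y hy
    exact hst (Set.mk_mem_prod (hs's hx.1) (ht't hy.2))
  -- Step B : V + V ⊆ W
  obtain ⟨V, hVo, h0V, hVadd⟩ := plusmaker W hWo h0W
  have hVW : V ⊆ W := fun x hx => by simpa using hVadd x hx 0 h0V
  -- Step C : ε
  have himg : ψ '' V ∈ nhds (0 : T) := by
    have := hψo.image_mem_nhds (hVo.mem_nhds h0V)
    simpa using this
  obtain ⟨ε, hε, hball⟩ : ∃ ε > 0, ∀ t : ℝ, |t| < ε → χ t ∈ ψ '' V := by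
    have : χ ⁻¹' (ψ '' V) ∈ nhds (0 : ℝ) :=
      hχ.continuousAt.preimage_mem_nhds (by simpa using himg)
    obtain ⟨ε, hε, hb⟩ := Metric.mem_nhds_iff.mp this
    exact ⟨ε, hε, fun t ht => hb (by simpa [Real.dist_eq] using ht)⟩
  -- Step D : the local lift f
  set f : ℝ → H := fun t => if h : ∃ x, x ∈ V ∧ ψ x = χ t then h.choose else 0 with hfdef
  have hfspec : ∀ t : ℝ, |t| < ε → f t ∈ V ∧ ψ (f t) = χ t := by
    intro t ht
    obtain ⟨x, hxV, hxψ⟩ := hball t ht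
    have hex : ∃ x, x ∈ V ∧ ψ x = χ t := ⟨x, hxV, hxψ⟩
    simp only [hfdef, dif_pos hex]
    exact hex.choose_spec
  have huniq' : ∀ t x, |t| < ε → x ∈ W → ψ x = χ t → f t = x := by
    intro t x ht hxW hxψ
    exact huniq _ (hVW (hfspec t ht).1) _ hxW (by rw [(hfspec t ht).2, hxψ])
  have hf0 : f 0 = 0 := huniq' 0 0 (by simpa using hε) h0W (by simp)
  -- Step E : continuity of f on |t| < ε
  have hfc : ∀ t₀ : ℝ, |t₀| < ε → ContinuousAt f t₀ := by
    intro t₀ ht₀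
    rw [ContinuousAt, tendsto_nhds]
    intro O hOo hO
    have hO' : f t₀ ∈ O ∩ V := ⟨hO, (hfspec t₀ ht₀).1⟩
    have himg' : IsOpen (ψ '' (O ∩ V)) := hψo _ (hOo.inter hVo)
    have hχmem : χ t₀ ∈ ψ '' (O ∩ V) := ⟨f t₀, hO', (hfspec t₀ ht₀).2⟩
    have h1 : χ ⁻¹' (ψ '' (O ∩ V)) ∈ nhds t₀ :=
      hχ.continuousAt.preimage_mem_nhds (himg'.mem_nhds hχmem)
    have h2 : {t : ℝ | |t| < ε} ∈ nhds t₀ :=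
      (isOpen_lt (continuous_abs) continuous_const).mem_nhds ht₀
    filter_upwards [h1, h2] with t h1t h2t
    obtain ⟨y, hyOV, hyψ⟩ := h1t
    have hfy : f t = y := huniq' t y h2t (hVW hyOV.2) hyψ
    show f t ∈ O
    rw [hfy]; exact hyOV.1
  -- Step F : δ and local additivity
  obtain ⟨V₂, hV₂o, h0V₂, hV₂add⟩ := plusmaker V hVo h0V
  obtain ⟨δ, hδpos, hδε, hδmap⟩ : ∃ δ > 0, δ ≤ ε / 2 ∧ ∀ t : ℝ, |t| < δ → f t ∈ V₂ := by
    have : f ⁻¹' V₂ ∈ nhds (0 : ℝ) := by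
      have := (hfc 0 (by simpa using hε)).preimage_mem_nhds
        (by rw [hf0]; exact hV₂o.mem_nhds h0V₂)
      exact this
    obtain ⟨δ₀, hδ₀, hb⟩ := Metric.mem_nhds_iff.mp this
    refine ⟨min δ₀ (ε / 2), lt_min hδ₀ (by linarith), min_le_right _ _, ?_⟩
    intro t ht
    exact hb (by simpa [Real.dist_eq] using lt_of_lt_of_le ht (min_le_left _ _))
  have hδε' : ∀ t : ℝ, |t| < δ → |t| < ε := fun t ht => lt_of_lt_of_le ht (by linarith)
  have hadd : ∀ s t : ℝ, |s| < δ → |t| < δ → f (s + t) = f s + f t := by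
    intro s t hs ht
    have hst : |s + t| < ε := lt_of_le_of_lt (abs_add_le s t) (by
      have := hδε; linarith)
    have hmemV : f s + f t ∈ V := hV₂add _ (hδmap s hs) _ (hδmap t ht)
    exact huniq' (s + t) (f s + f t) hst (hVW hmemV)
      (by simp [map_add, (hfspec s (hδε' s hs)).2, (hfspec t (hδε' t ht)).2])
  -- doubling
  have hhalf : ∀ t : ℝ, |t| < δ → f t = f (t / 2) + f (t / 2) := by
    intro t ht
    have h2 : |t / 2| < δ := by
      rw [abs_div, abs_two]
      linarith [abs_nonneg t]
    have := hadd (t / 2) (t / 2) h2 h2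
    rw [add_halves] at this
    exact this
  -- Step G : well-definedness under doubling
  have hwd : ∀ (k : ℕ) (t : ℝ), |t| < δ → (2 ^ k : ℕ) • f (t / 2 ^ k) = f t := by
    intro k
    induction k with
    | zero => intro t ht; simp
    | succ k ih =>
      intro t ht
      have h2 : |t / 2| < δ := by
        rw [abs_div, abs_two]; linarith [abs_nonneg t]
      have harg : t / 2 ^ (k + 1) = (t / 2) / 2 ^ k := by
        rw [div_div, ← pow_succ']
      calc (2 ^ (k + 1) : ℕ) • f (t / 2 ^ (k + 1))
          = (2 ^ k * 2 : ℕ) • f ((t / 2) / 2 ^ k) := by rw [harg, pow_succ]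
        _ = 2 • ((2 ^ k : ℕ) • f ((t / 2) / 2 ^ k)) := mul_nsmul _ (2 ^ k) 2
        _ = 2 • f (t / 2) := by rw [ih (t / 2) h2]
        _ = f t := by rw [two_nsmul]; exact (hhalf t ht).symm
  -- consistency of rescalings
  have hcons : ∀ (k m : ℕ) (t : ℝ), |t| < δ * 2 ^ k →
      (2 ^ (k + m) : ℕ) • f (t / 2 ^ (k + m)) = (2 ^ k : ℕ) • f (t / 2 ^ k) := by
    intro k m t ht
    have hpow : (0 : ℝ) < 2 ^ k := by positivity
    have hu : |t / 2 ^ k| < δ := by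
      rw [abs_div, abs_of_pos hpow, div_lt_iff₀ hpow]
      exact ht
    have harg : t / 2 ^ (k + m) = (t / 2 ^ k) / 2 ^ m := by
      rw [div_div, ← pow_add]
    rw [harg, pow_add, mul_comm, mul_nsmul, hwd m (t / 2 ^ k) hu]
  have hK : ∀ t : ℝ, ∃ k : ℕ, |t| < δ * 2 ^ k := by
    intro t
    obtain ⟨k, hk⟩ := pow_unbounded_of_one_lt (|t| / δ) (one_lt_two (α := ℝ))
    refine ⟨k, ?_⟩
    rw [div_lt_iff₀ hδpos] at hk
    linarith
  set K : ℝ → ℕ := fun t => (hK t).choose with hKdef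
  set r : ℝ → H := fun t => (2 ^ K t : ℕ) • f (t / 2 ^ K t) with hrdef
  have hrspec : ∀ (t : ℝ) (k : ℕ), |t| < δ * 2 ^ k →
      r t = (2 ^ k : ℕ) • f (t / 2 ^ k) := by
    intro t k hk
    have hKt : |t| < δ * 2 ^ K t := (hK t).choose_spec
    rcases le_total (K t) k with h | h
    · obtain ⟨m, rfl⟩ := Nat.exists_eq_add_of_le h
      exact (hcons (K t) m t hKt).symm
    · obtain ⟨m, hm⟩ := Nat.exists_eq_add_of_le h
      show (2 ^ K t : ℕ) • f (t / 2 ^ K t) = _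
      rw [hm]
      exact hcons k m t hk
  have hpowmono : ∀ {a b : ℕ}, a ≤ b → (2 : ℝ) ^ a ≤ 2 ^ b := by
    intro a b h
    exact pow_le_pow_right₀ one_le_two h
  have hsmalldiv : ∀ (t : ℝ) (k : ℕ), |t| < δ * 2 ^ k → |t / 2 ^ k| < δ := by
    intro t k ht
    have hpow : (0 : ℝ) < 2 ^ k := by positivity
    rw [abs_div, abs_of_pos hpow, div_lt_iff₀ hpow]
    exact ht
  have hradd : ∀ s t : ℝ, r (s + t) = r s + r t := by
    intro s t
    obtain ⟨ks, hks⟩ := hK s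
    obtain ⟨kt, hkt⟩ := hK t
    set k := max ks kt with hkdef
    have hδnn : (0 : ℝ) ≤ δ := le_of_lt hδpos
    have hs : |s| < δ * 2 ^ k :=
      lt_of_lt_of_le hks (by
        apply mul_le_mul_of_nonneg_left (hpowmono (le_max_left ks kt)) hδnn)
    have ht : |t| < δ * 2 ^ k :=
      lt_of_lt_of_le hkt (by
        apply mul_le_mul_of_nonneg_left (hpowmono (le_max_right ks kt)) hδnn)
    have hs' : |s| < δ * 2 ^ (k + 1) :=
      lt_of_lt_of_le hs (by
        apply mul_le_mul_of_nonneg_left (hpowmono (Nat.le_succ k)) hδnn)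
    have ht' : |t| < δ * 2 ^ (k + 1) :=
      lt_of_lt_of_le ht (by
        apply mul_le_mul_of_nonneg_left (hpowmono (Nat.le_succ k)) hδnn)
    have hst : |s + t| < δ * 2 ^ (k + 1) := by
      have := abs_add_le s t
      have h2 : (2 : ℝ) ^ (k + 1) = 2 ^ k + 2 ^ k := by ring
      rw [h2]
      calc |s + t| ≤ |s| + |t| := abs_add_le s t
        _ < δ * 2 ^ k + δ * 2 ^ k := by linarith
        _ = δ * (2 ^ k + 2 ^ k) := by ring
    have h1 : |s / 2 ^ (k + 1)| < δ := hsmalldiv s (k + 1) hs'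
    have h2 : |t / 2 ^ (k + 1)| < δ := hsmalldiv t (k + 1) ht'
    rw [hrspec (s + t) (k + 1) hst, hrspec s (k + 1) hs', hrspec t (k + 1) ht']
    have harg : (s + t) / 2 ^ (k + 1) = s / 2 ^ (k + 1) + t / 2 ^ (k + 1) := by ring
    rw [harg, hadd _ _ h1 h2, smul_add]
  have hrc : Continuous r := by
    rw [continuous_iff_continuousAt]
    intro t₀
    obtain ⟨k, hk⟩ := hK t₀
    have hSopen : IsOpen {t : ℝ | |t| < δ * 2 ^ k} :=
      isOpen_lt continuous_abs continuous_const
    have hg : ContinuousAt (fun t : ℝ => (2 ^ k : ℕ) • f (t / 2 ^ k)) t₀ := by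
      have hdivc : ContinuousAt (fun t : ℝ => t / 2 ^ k) t₀ :=
        (continuous_id.div_const _).continuousAt
      have hf2 : ContinuousAt f (t₀ / 2 ^ k) :=
        hfc _ (hδε' _ (hsmalldiv t₀ k hk))
      exact ((continuous_nsmul _).continuousAt).comp
        (ContinuousAt.comp (g := f) hf2 hdivc)
    exact hg.congr (Filter.eventuallyEq_of_mem (hSopen.mem_nhds hk)
      (fun t ht => (hrspec t k ht).symm))
  have hψr : ∀ t, ψ (r t) = χ t := by
    intro t
    obtain ⟨k, hk⟩ := hK t
    rw [hrspec t k hk, map_nsmul, (hfspec _ (hδε' _ (hsmalldiv t k hk))).2, ← map_nsmul]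
    congr 1
    rw [nsmul_eq_mul]
    push_cast
    field_simp
  exact ⟨AddMonoidHom.mk' r hradd, hrc, hψr⟩

section Slope
open AddSubgroup

/-- classification of continuous homs `ℝ →+ 𝕋`. -/
theorem slope_existsUnique (s : ℝ →+ AddCircle (1 : ℝ)) (hs : Continuous s) :
    ∃! c : ℝ, ∀ t : ℝ, s t = ((t * c : ℝ) : AddCircle (1 : ℝ)) := by
  have hψo : IsOpenMap (⇑(QuotientAddGroup.mk' (zmultiples (1 : ℝ)))) :=
    QuotientAddGroup.isOpenMap_coe
  have hdisc : ∀ x ∈ Set.Ioo (-(1/2) : ℝ) (1/2),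
      (QuotientAddGroup.mk' (zmultiples (1 : ℝ))) x = 0 → x = 0 := by
    intro x hx h0
    have : x ∈ zmultiples (1 : ℝ) := by
      rwa [QuotientAddGroup.mk'_apply, QuotientAddGroup.eq_zero_iff] at h0
    obtain ⟨k, hk⟩ := mem_zmultiples_iff.mp this
    rw [zsmul_eq_mul, mul_one] at hk
    obtain ⟨h1, h2⟩ := hx
    rw [← hk] at h1 h2 ⊢
    have : k = 0 := by
      have h1' : (-1 : ℝ) < k := by linarith
      have h2' : (k : ℝ) < 1 := by linarith
      exact_mod_cast (by
        have : (-1 : ℤ) < k := by exact_mod_cast h1'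
        have : k < 1 := by exact_mod_cast h2'
        omega : k = 0)
    simp [this]
  obtain ⟨r, hrc, hrψ⟩ := lift_exists (QuotientAddGroup.mk' (zmultiples (1 : ℝ))) hψo
    (Set.Ioo (-(1/2)) (1/2)) isOpen_Ioo (by norm_num) hdisc s hs
  have hlin : ∀ t : ℝ, r t = t * r 1 := by
    have h1 : ∀ q : ℚ, r (q : ℝ) = (q : ℝ) * r 1 := by
      intro q
      have := map_ratCast_smul r ℝ ℝ q (1 : ℝ)
      simpa [smul_eq_mul] using this
    have hfun : (fun t : ℝ => r t) = fun t : ℝ => t * r 1 := by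
      apply Continuous.ext_on (Rat.denseRange_cast (𝕜 := ℝ)) hrc
        (continuous_id.mul continuous_const)
      rintro _ ⟨q, rfl⟩
      exact h1 q
    exact fun t => congrFun hfun t
  have key : ∀ t : ℝ, s t = ((t * r 1 : ℝ) : AddCircle (1 : ℝ)) := by
    intro t
    rw [← hrψ t, hlin t]
    rfl
  refine ⟨r 1, key, ?_⟩
  intro y hy
  by_contra hne
  have hsub : ∀ t : ℝ, t * y - t * r 1 ∈ zmultiples (1 : ℝ) := by
    intro t
    have := (hy t).symm.trans (key t)
    exact (QuotientAddGroup.eq_iff_sub_mem).mp this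
  have hd : y - r 1 ≠ 0 := sub_ne_zero.mpr hne
  set t₀ : ℝ := (2 * (y - r 1))⁻¹ with ht₀
  have hval : t₀ * y - t₀ * r 1 = 1 / 2 := by
    rw [← mul_sub, ht₀]
    field_simp
  obtain ⟨k, hk⟩ := mem_zmultiples_iff.mp (hsub t₀)
  rw [zsmul_eq_mul, mul_one, hval] at hk
  have : (2 * k : ℤ) = 1 := by
    have : (2 * k : ℝ) = 1 := by rw [mul_comm]; rw [hk]; ring
    exact_mod_cast this
  omega

end Slope

section Clopen
variable {D : Type*} [AddCommGroup D] [TopologicalSpace D] [IsTopologicalAddGroup D]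
  [CompactSpace D] [T2Space D] [TotallyDisconnectedSpace D]

theorem exists_isOpen_addSubgroup_not_mem (δ : D) (hδ : δ ≠ 0) :
    ∃ S : AddSubgroup D, IsOpen (S : Set D) ∧ IsClosed (S : Set D) ∧ δ ∉ S := by
  have : TotallySeparatedSpace D := loc_compact_t2_tot_disc_iff_tot_sep.mp ‹_›
  obtain ⟨U, hUclopen, h0U, hδU⟩ := exists_isClopen_of_totally_separated (Ne.symm hδ : (0:D) ≠ δ)
  have hUc : IsCompact U := hUclopen.isClosed.isCompact
  -- O₁ is open
  have hO₁ : IsOpen {g : D | ∀ x ∈ U, g + x ∈ U} := by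
    rw [isOpen_iff_mem_nhds]
    intro g₀ hg₀
    have hpair : ∀ x : D, x ∈ U → ∃ A B : Set D, IsOpen A ∧ IsOpen B ∧ g₀ ∈ A ∧ x ∈ B ∧
        ∀ a ∈ A, ∀ b ∈ B, a + b ∈ U := by
      intro x hx
      have hmem : (fun p : D × D => p.1 + p.2) ⁻¹' U ∈ nhds (g₀, x) :=
        continuous_add.continuousAt.preimage_mem_nhds
          (hUclopen.isOpen.mem_nhds (hg₀ x hx))
      rw [nhds_prod_eq, Filter.mem_prod_iff] at hmem
      obtain ⟨a, ha, b, hb, hab⟩ := hmem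
      obtain ⟨A, hAa, hAo, hgA⟩ := mem_nhds_iff.mp ha
      obtain ⟨B, hBb, hBo, hxB⟩ := mem_nhds_iff.mp hb
      exact ⟨A, B, hAo, hBo, hgA, hxB, fun p hp q hq =>
        hab (Set.mk_mem_prod (hAa hp) (hBb hq))⟩
    choose! A B hAo hBo hgA hxB hAB using hpair
    have hcover : U ⊆ ⋃ x ∈ U, B x := fun x hx =>
      Set.mem_biUnion hx (hxB x hx)
    obtain ⟨t, ht⟩ := hUc.elim_finite_subcover_image (fun x hx => hBo x hx) hcover
    obtain ⟨htU, htfin, htcov⟩ := ht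
    have hNo : IsOpen (⋂ x ∈ t, A x) := by
      exact htfin.isOpen_biInter (fun x hx => hAo x (htU hx))
    have hgN : g₀ ∈ ⋂ x ∈ t, A x := Set.mem_biInter (fun x hx => hgA x (htU hx))
    refine Filter.mem_of_superset (hNo.mem_nhds hgN) ?_
    intro g hg
    intro y hy
    obtain ⟨x, hxt, hyB⟩ : ∃ x ∈ t, y ∈ B x := by
      have := htcov hy
      simpa using this
    have hgA' : g ∈ A x := by
      have := Set.mem_iInter₂.mp hg x hxt
      exact this
    exact hAB x (htU hxt) g hgA' y hyB
  -- the stabilizer subgroup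
  have hO₂ : IsOpen {g : D | ∀ x ∈ U, -g + x ∈ U} := by
    have : {g : D | ∀ x ∈ U, -g + x ∈ U} = (fun g : D => -g) ⁻¹' {g : D | ∀ x ∈ U, g + x ∈ U} := by
      ext g; simp
    rw [this]
    exact hO₁.preimage continuous_neg
  set S : AddSubgroup D :=
    { carrier := {g : D | ∀ x ∈ U, g + x ∈ U} ∩ {g : D | ∀ x ∈ U, -g + x ∈ U}
      zero_mem' := by simp
      add_mem' := by
        rintro a b ⟨ha1, ha2⟩ ⟨hb1, hb2⟩
        constructor
        · intro x hx
          have : a + b + x = a + (b + x) := by abel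
          rw [this]
          exact ha1 _ (hb1 x hx)
        · intro x hx
          have : -(a + b) + x = -b + (-a + x) := by abel
          rw [this]
          exact hb2 _ (ha2 x hx)
      neg_mem' := by
        rintro a ⟨ha1, ha2⟩
        constructor
        · intro x hx; exact ha2 x hx
        · intro x hx; simpa using ha1 x hx } with hSdef
  have hSo : IsOpen (S : Set D) := hO₁.inter hO₂
  refine ⟨S, hSo, AddSubgroup.isClosed_of_isOpen S hSo, ?_⟩
  rintro ⟨h1, -⟩
  exact hδU (by simpa using h1 0 h0U)

end Clopen

section Main
open QuotientAddGroup

variable {G : Type} [AddCommGroup G] [TopologicalSpace G] [IsTopologicalAddGroup G]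
  [CompactSpace G] [T2Space G]

theorem protorus_lift (Δ : AddSubgroup G) (hcl : IsClosed (Δ : Set G))
    (htd : TotallyDisconnectedSpace Δ) {n : ℕ}
    (p : G →+ (Fin n → AddCircle (1 : ℝ))) (hpc : Continuous p) (hpo : IsOpenMap p)
    (hker : ∀ g : G, p g = 0 ↔ g ∈ Δ)
    (χ : ℝ →+ (Fin n → AddCircle (1 : ℝ))) (hχ : Continuous χ) :
    ∃ r : ℝ →+ G, Continuous r ∧ ∀ t, p (r t) = χ t := by
  classical
  set 𝒰 : Set (AddSubgroup G) :=
    {U | (U : Set G) ⊆ (Δ : Set G) ∧ IsClosed (U : Set G) ∧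
      ∃ O : Set G, IsOpen O ∧ (U : Set G) = (Δ : Set G) ∩ O} with h𝒰
  have hΔmem : Δ ∈ 𝒰 := ⟨subset_rfl, hcl, Set.univ, isOpen_univ, by simp⟩
  have hinf : ∀ U ∈ 𝒰, ∀ V ∈ 𝒰, U ⊓ V ∈ 𝒰 := by
    rintro U ⟨hU1, hU2, OU, hOU, hUO⟩ V ⟨hV1, hV2, OV, hOV, hVO⟩
    refine ⟨?_, ?_, OU ∩ OV, hOU.inter hOV, ?_⟩
    · rw [AddSubgroup.coe_inf]
      exact fun x hx => hU1 hx.1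
    · rw [AddSubgroup.coe_inf]
      exact hU2.inter hV2
    · rw [AddSubgroup.coe_inf, hUO, hVO]
      ext x
      constructor
      · rintro ⟨⟨h1, h2⟩, ⟨h3, h4⟩⟩; exact ⟨h1, h2, h4⟩
      · rintro ⟨h1, h2, h3⟩; exact ⟨⟨h1, h2⟩, ⟨h1, h3⟩⟩
  have hcptΔ : CompactSpace Δ := isCompact_iff_compactSpace.mp hcl.isCompact
  have hsep : ∀ g : G, g ∈ Δ → g ≠ 0 → ∃ U ∈ 𝒰, g ∉ U := by
    intro g hg hne
    have hne' : (⟨g, hg⟩ : Δ) ≠ 0 := fun h => hne (congrArg Subtype.val h)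
    obtain ⟨S, hSo, hScl, hgS⟩ := exists_isOpen_addSubgroup_not_mem (⟨g, hg⟩ : Δ) hne'
    have himg : ((S.map Δ.subtype : AddSubgroup G) : Set G) = Subtype.val '' (S : Set Δ) := by
      ext x
      simp [AddSubgroup.mem_map]
    refine ⟨S.map Δ.subtype, ⟨?_, ?_, ?_⟩, ?_⟩
    · rintro x hx
      rw [himg] at hx
      obtain ⟨y, _, rfl⟩ := hx
      exact y.2
    · rw [himg]
      exact (hScl.isCompact.image continuous_subtype_val).isClosed
    · obtain ⟨O, hOo, hOS⟩ := isOpen_induced_iff.mp hSo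
      refine ⟨O, hOo, ?_⟩
      rw [himg]
      ext x
      constructor
      · rintro ⟨y, hy, rfl⟩
        refine ⟨y.2, ?_⟩
        have : y ∈ Subtype.val ⁻¹' O := by rw [hOS]; exact hy
        exact this
      · rintro ⟨hxΔ, hxO⟩
        refine ⟨⟨x, hxΔ⟩, ?_, rfl⟩
        rw [← hOS]
        exact hxO
    · intro hmem
      obtain ⟨y, hy, hyx⟩ := AddSubgroup.mem_map.mp hmem
      have : y = ⟨g, hg⟩ := Subtype.ext hyx
      rw [this] at hy
      exact hgS hy
  -- index type
  set ι := {U : AddSubgroup G // U ∈ 𝒰} with hι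
  haveI : Nonempty ι := ⟨⟨Δ, hΔmem⟩⟩
  have hsubΔ : ∀ i : ι, ((i.1 : AddSubgroup G) : Set G) ⊆ (Δ : Set G) := fun i => i.2.1
  have hclU : ∀ i : ι, IsClosed ((i.1 : AddSubgroup G) : Set G) := fun i => i.2.2.1
  have hOU : ∀ i : ι, ∃ O : Set G, IsOpen O ∧
      ((i.1 : AddSubgroup G) : Set G) = (Δ : Set G) ∩ O := fun i => i.2.2.2
  -- quotient homs
  set pU : ∀ i : ι, G ⧸ (i.1 : AddSubgroup G) →+ (Fin n → AddCircle (1 : ℝ)) :=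
    fun i => QuotientAddGroup.lift i.1 p
      (fun x hx => AddMonoidHom.mem_ker.mpr ((hker x).mpr (hsubΔ i hx))) with hpU
  have hpUmk : ∀ (i : ι) (g : G), pU i (QuotientAddGroup.mk g) = p g := fun i g => rfl
  have hpUc : ∀ i : ι, Continuous (pU i) := by
    intro i
    rw [(isQuotientMap_mk (i.1 : AddSubgroup G)).continuous_iff]
    exact hpc
  have hpUo : ∀ i : ι, IsOpenMap (pU i) := by
    intro i
    intro O hO
    have himg : ⇑(pU i) '' O = ⇑p '' (QuotientAddGroup.mk ⁻¹' O) := by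
      ext y
      constructor
      · rintro ⟨x, hx, rfl⟩
        obtain ⟨g, rfl⟩ := mk_surjective x
        exact ⟨g, hx, rfl⟩
      · rintro ⟨g, hg, rfl⟩
        exact ⟨QuotientAddGroup.mk g, hg, rfl⟩
    rw [himg]
    exact hpo _ (hO.preimage continuous_mk)
  -- finiteness of the kernel of pU
  have hfin : ∀ i : ι, Set.Finite
      ((fun g : G => (QuotientAddGroup.mk g : G ⧸ (i.1 : AddSubgroup G))) '' (Δ : Set G)) := by
    intro i
    obtain ⟨O, hOo, hUO⟩ := hOU i
    have h0O : (0 : G) ∈ O := by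
      have : (0 : G) ∈ ((i.1 : AddSubgroup G) : Set G) := (i.1 : AddSubgroup G).zero_mem
      rw [hUO] at this
      exact this.2
    have hcover : (Δ : Set G) ⊆ ⋃ x ∈ (Δ : Set G), (fun y => x + y) '' O := by
      intro x hx
      exact Set.mem_biUnion hx ⟨0, h0O, by simp⟩
    obtain ⟨F, hFsub, hFfin, hFcov⟩ := hcl.isCompact.elim_finite_subcover_image
      (fun x _ => (Homeomorph.addLeft x).isOpenMap _ hOo) hcover
    apply Set.Finite.subset (hFfin.image (fun g : G => (QuotientAddGroup.mk g : G ⧸ (i.1 : AddSubgroup G))))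
    rintro y ⟨g, hgΔ, rfl⟩
    obtain ⟨x, hxF, o, hoO, hxo⟩ : ∃ x ∈ F, ∃ o ∈ O, x + o = g := by
      have := hFcov hgΔ
      simp only [Set.mem_iUnion, Set.mem_image] at this
      obtain ⟨x, hxF, o, hoO, hxo⟩ := this
      exact ⟨x, hxF, o, hoO, hxo⟩
    have hgx : g - x ∈ (i.1 : AddSubgroup G) := by
      have h1 : g - x ∈ (Δ : Set G) := Δ.sub_mem hgΔ (hFsub hxF)
      have h2 : g - x ∈ O := by
        have : g - x = o := by rw [← hxo]; abel
        rw [this]; exact hoO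
      have : g - x ∈ ((i.1 : AddSubgroup G) : Set G) := by rw [hUO]; exact ⟨h1, h2⟩
      exact this
    refine ⟨x, hxF, ?_⟩
    exact (QuotientAddGroup.eq_iff_sub_mem.mpr hgx).symm
  -- small neighborhoods of 0 in the quotients
  have hU₀ : ∀ i : ι, ∃ U₀ : Set (G ⧸ (i.1 : AddSubgroup G)), IsOpen U₀ ∧ 0 ∈ U₀ ∧
      ∀ x ∈ U₀, pU i x = 0 → x = 0 := by
    intro i
    haveI : IsClosed ((i.1 : AddSubgroup G) : Set G) := hclU i
    set K : Set (G ⧸ (i.1 : AddSubgroup G)) :=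
      ((fun g : G => (QuotientAddGroup.mk g : G ⧸ (i.1 : AddSubgroup G))) '' (Δ : Set G)) \ {0}
      with hK
    have hKfin : K.Finite := (hfin i).subset Set.diff_subset
    refine ⟨⋂ y ∈ K, {y}ᶜ, hKfin.isOpen_biInter (fun y _ => isOpen_compl_singleton), ?_, ?_⟩
    · apply Set.mem_biInter
      intro y hy
      intro h0
      exact hy.2 (by simpa using h0.symm)
    · intro x hx hpx
      obtain ⟨g, rfl⟩ := mk_surjective x
      have hgΔ : g ∈ Δ := (hker g).mp hpx
      by_contra hne
      have hxK : (QuotientAddGroup.mk g : G ⧸ (i.1 : AddSubgroup G)) ∈ K :=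
        ⟨⟨g, hgΔ, rfl⟩, hne⟩
      have := Set.mem_iInter₂.mp hx _ hxK
      exact this rfl
  choose U₀ hU₀o hU₀mem hU₀disc using hU₀
  -- lifts to the quotients
  have hexists : ∀ i : ι, ∃ r : ℝ →+ G ⧸ (i.1 : AddSubgroup G),
      Continuous r ∧ ∀ t, pU i (r t) = χ t :=
    fun i => lift_exists (pU i) (hpUo i) (U₀ i) (hU₀o i) (hU₀mem i) (hU₀disc i) χ hχ
  choose rU hrUc hrUp using hexists
  have huniqU : ∀ (i : ι) (r r' : ℝ →+ G ⧸ (i.1 : AddSubgroup G)), Continuous r →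
      Continuous r' → (∀ t, pU i (r t) = pU i (r' t)) → ∀ t, r t = r' t :=
    fun i => lift_unique (pU i) (U₀ i) (hU₀o i) (hU₀mem i) (hU₀disc i)
  -- compatibility
  have hcompat : ∀ (i j : ι) (hle : (i.1 : AddSubgroup G) ≤ j.1) (t : ℝ),
      QuotientAddGroup.map i.1 j.1 (AddMonoidHom.id G) (fun x hx => hle hx) (rU i t) = rU j t := by
    intro i j hle
    set π := QuotientAddGroup.map (i.1 : AddSubgroup G) (j.1 : AddSubgroup G)
      (AddMonoidHom.id G) (fun x hx => hle hx) with hπ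
    have hπmk : ∀ g : G, π (QuotientAddGroup.mk g) = QuotientAddGroup.mk g := by
      intro g
      rfl
    have hπc : Continuous π := by
      rw [(isQuotientMap_mk (i.1 : AddSubgroup G)).continuous_iff]
      have : (⇑π ∘ QuotientAddGroup.mk : G → G ⧸ (j.1 : AddSubgroup G)) = QuotientAddGroup.mk := by
        funext g
        exact hπmk g
      rw [this]
      exact continuous_mk
    have hagree : ∀ t, pU j (π.comp (rU i) t) = pU j (rU j t) := by
      intro t
      rw [hrUp j t]
      have hx : ∀ x : G ⧸ (i.1 : AddSubgroup G), pU j (π x) = pU i x := by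
        intro x
        obtain ⟨g, rfl⟩ := mk_surjective x
        rw [hπmk g]
        rfl
      show pU j (π (rU i t)) = χ t
      rw [hx (rU i t), hrUp i t]
    exact huniqU j (π.comp (rU i)) (rU j) (hπc.comp (hrUc i)) (hrUc j) hagree
  -- determination of points by all quotients
  have hdet : ∀ g g' : G,
      (∀ i : ι, (QuotientAddGroup.mk g : G ⧸ (i.1 : AddSubgroup G)) = QuotientAddGroup.mk g') →
      g = g' := by
    intro g g' h
    have hmem : ∀ i : ι, g - g' ∈ (i.1 : AddSubgroup G) :=
      fun i => QuotientAddGroup.eq_iff_sub_mem.mp (h i)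
    by_contra hne
    have hd0 : g - g' ≠ 0 := sub_ne_zero.mpr hne
    have hdΔ : g - g' ∈ Δ := hmem ⟨Δ, hΔmem⟩
    obtain ⟨U, hU𝒰, hgU⟩ := hsep (g - g') hdΔ hd0
    exact hgU (hmem ⟨U, hU𝒰⟩)
  -- construct the limit point for each t
  have hpoint : ∀ t : ℝ, ∃ g : G,
      ∀ i : ι, (QuotientAddGroup.mk g : G ⧸ (i.1 : AddSubgroup G)) = rU i t := by
    intro t
    set C : ι → Set G := fun i =>
      (fun g : G => (QuotientAddGroup.mk g : G ⧸ (i.1 : AddSubgroup G))) ⁻¹' {rU i t} with hC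
    have hCclosed : ∀ i : ι, IsClosed (C i) := by
      intro i
      haveI : IsClosed ((i.1 : AddSubgroup G) : Set G) := hclU i
      exact isClosed_singleton.preimage continuous_mk
    have hCne : ∀ i : ι, (C i).Nonempty := by
      intro i
      obtain ⟨g, hg⟩ := mk_surjective (rU i t)
      exact ⟨g, hg⟩
    have hCcpt : ∀ i : ι, IsCompact (C i) := fun i => (hCclosed i).isCompact
    have hCdir : Directed (· ⊇ ·) C := by
      intro i j
      refine ⟨⟨i.1 ⊓ j.1, hinf i.1 i.2 j.1 j.2⟩, ?_, ?_⟩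
      · intro g hg
        have hle : ((⟨i.1 ⊓ j.1, hinf i.1 i.2 j.1 j.2⟩ : ι).1 : AddSubgroup G) ≤ i.1 :=
          inf_le_left
        have := hcompat ⟨i.1 ⊓ j.1, hinf i.1 i.2 j.1 j.2⟩ i hle t
        show (QuotientAddGroup.mk g : G ⧸ (i.1 : AddSubgroup G)) = rU i t
        rw [← this, ← hg]
        rfl
      · intro g hg
        have hle : ((⟨i.1 ⊓ j.1, hinf i.1 i.2 j.1 j.2⟩ : ι).1 : AddSubgroup G) ≤ j.1 :=
          inf_le_right
        have := hcompat ⟨i.1 ⊓ j.1, hinf i.1 i.2 j.1 j.2⟩ j hle t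
        show (QuotientAddGroup.mk g : G ⧸ (j.1 : AddSubgroup G)) = rU j t
        rw [← this, ← hg]
        rfl
    obtain ⟨g, hg⟩ := IsCompact.nonempty_iInter_of_directed_nonempty_isCompact_isClosed
      C hCdir hCne hCcpt hCclosed
    exact ⟨g, fun i => Set.mem_iInter.mp hg i⟩
  choose R hR using hpoint
  have hRadd : ∀ s t : ℝ, R (s + t) = R s + R t := by
    intro s t
    apply hdet
    intro i
    have : (QuotientAddGroup.mk (R s + R t) : G ⧸ (i.1 : AddSubgroup G)) =
        QuotientAddGroup.mk (R s) + QuotientAddGroup.mk (R t) := rfl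
    rw [hR (s + t) i, this, hR s i, hR t i, ← map_add]
  have hRp : ∀ t, p (R t) = χ t := by
    intro t
    have := hR t ⟨Δ, hΔmem⟩
    have h2 : pU ⟨Δ, hΔmem⟩ (QuotientAddGroup.mk (R t)) = pU ⟨Δ, hΔmem⟩ (rU ⟨Δ, hΔmem⟩ t) := by
      rw [this]
    rw [hpUmk] at h2
    rw [h2, hrUp]
  have hRc : Continuous R := by
    haveI : ∀ i : ι, IsClosed ((i.1 : AddSubgroup G) : Set G) := hclU
    set J : G → ∀ i : ι, G ⧸ (i.1 : AddSubgroup G) :=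
      fun g i => QuotientAddGroup.mk g with hJ
    have hJc : Continuous J := continuous_pi fun i => continuous_mk
    have hJinj : Function.Injective J :=
      fun g g' h => hdet g g' (fun i => congrFun h i)
    haveI : ∀ i : ι, T3Space (G ⧸ (i.1 : AddSubgroup G)) := by
      intro i
      haveI : IsClosed ((i.1 : AddSubgroup G) : Set G) := hclU i
      infer_instance
    have hJemb := hJc.isClosedEmbedding hJinj
    rw [hJemb.isInducing.continuous_iff]
    have : (J ∘ R) = fun t i => rU i t := by
      funext t i
      exact hR t i
    rw [this]
    exact continuous_pi fun i => hrUc i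
  exact ⟨AddMonoidHom.mk' R hRadd, hRc, hRp⟩

end Main

/-- For a torus-free protorus `G` and `Δ` profinite with `G/Δ ≅ 𝕋ⁿ`, the kernel of
`φ_Δ : Δ × 𝔏(G) → G` is a discrete free abelian group of rank `n = dim G`. -/
theorem stmt5 {G : Type} [AddCommGroup G] [TopologicalSpace G] [IsTopologicalAddGroup G]
    [CompactSpace G] [T2Space G] [ConnectedSpace G]
    (htf : TorusFree G) (Δ : AddSubgroup G) (hcl : IsClosed (Δ : Set G))
    (htd : TotallyDisconnectedSpace Δ) (n : ℕ)
    (htor : TopIso (G ⧸ Δ) (Fin n → AddCircle (1 : ℝ))) :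
    DiscreteTopology (resolutionHom G Δ).ker ∧
      Nonempty ((resolutionHom G Δ).ker ≃+ (Fin n → ℤ)) := by
  classical
  obtain ⟨e, hec, hec'⟩ := htor
  -- the projection onto the torus
  set p : G →+ (Fin n → AddCircle (1 : ℝ)) :=
    e.toAddMonoidHom.comp (QuotientAddGroup.mk' Δ) with hpdef
  have hpapp : ∀ g : G, p g = e (QuotientAddGroup.mk g) := fun g => rfl
  have hpc : Continuous p := by
    show Continuous (⇑e ∘ ⇑(QuotientAddGroup.mk' Δ))
    exact hec.comp QuotientAddGroup.continuous_mk
  have hpo : IsOpenMap ⇑p := by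
    have heo : IsOpenMap ⇑e := by
      intro O hO
      have himg : ⇑e '' O = ⇑e.symm ⁻¹' O := by
        ext y
        constructor
        · rintro ⟨x, hx, rfl⟩; simpa using hx
        · intro hy; exact ⟨e.symm y, hy, by simp⟩
      rw [himg]
      exact hO.preimage hec'
    have hmko : IsOpenMap (⇑(QuotientAddGroup.mk' Δ)) := QuotientAddGroup.isOpenMap_coe
    have : ⇑p = ⇑e ∘ ⇑(QuotientAddGroup.mk' Δ) := rfl
    rw [this]
    exact heo.comp hmko
  have hker : ∀ g : G, p g = 0 ↔ g ∈ Δ := by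
    intro g
    constructor
    · intro h
      have h1 : (QuotientAddGroup.mk' Δ) g = 0 := by
        apply e.injective
        rw [map_zero]
        exact h
      rwa [QuotientAddGroup.mk'_apply, QuotientAddGroup.eq_zero_iff] at h1
    · intro h
      have h1 : (QuotientAddGroup.mk' Δ) g = 0 := by
        rw [QuotientAddGroup.mk'_apply, QuotientAddGroup.eq_zero_iff]
        exact h
      show e ((QuotientAddGroup.mk' Δ) g) = 0
      rw [h1, map_zero]
  -- a one-parameter subgroup with values in Δ is trivial
  have hzero : ∀ (r : ℝ →+ G), Continuous r → (∀ t, p (r t) = 0) → ∀ t, r t = 0 := by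
    intro r hrc hpr
    have hrΔ : ∀ t, r t ∈ Δ := fun t => (hker _).mp (hpr t)
    set r' : ℝ → Δ := fun t => ⟨r t, hrΔ t⟩ with hr'
    have hr'c : Continuous r' := Continuous.subtype_mk hrc _
    haveI := htd
    have hsub : (Set.range r').Subsingleton :=
      (isPreconnected_range hr'c).subsingleton
    intro t
    have h1 : r' t = r' 0 := hsub (Set.mem_range_self t) (Set.mem_range_self 0)
    have h2 : r t = r 0 := congrArg Subtype.val h1
    rw [h2, map_zero]
  -- slopes of one-parameter subgroups
  have hslope : ∀ (r : ℝ →+ G), Continuous r → ∀ i : Fin n,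
      ∃! c : ℝ, ∀ t : ℝ, p (r t) i = ((t * c : ℝ) : AddCircle (1 : ℝ)) := by
    intro r hrc i
    set s : ℝ →+ AddCircle (1 : ℝ) :=
      (Pi.evalAddMonoidHom (fun _ : Fin n => AddCircle (1 : ℝ)) i).comp (p.comp r) with hs
    have hsc : Continuous s := by
      show Continuous fun t => p (r t) i
      exact (continuous_apply i).comp (hpc.comp hrc)
    exact slope_existsUnique s hsc
  -- kernel membership
  have hkermem : ∀ x : Δ × ContinuousAddMonoidHom ℝ G,
      x ∈ (resolutionHom G Δ).ker ↔ ((x.1 : G) + x.2 1 = 0) := by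
    intro x
    rw [AddMonoidHom.mem_ker]
    rfl
  -- the integer slope vector of a kernel element
  have hint : ∀ x : (resolutionHom G Δ).ker,
      ∃! k : Fin n → ℤ, ∀ (i : Fin n) (t : ℝ),
        p ((x : Δ × ContinuousAddMonoidHom ℝ G).2 t) i
          = ((t * (k i : ℝ) : ℝ) : AddCircle (1 : ℝ)) := by
    intro x
    set r : ContinuousAddMonoidHom ℝ G := (x : Δ × ContinuousAddMonoidHom ℝ G).2 with hr
    have hrc : Continuous ⇑r.toAddMonoidHom := map_continuous r
    have hsl := fun i => hslope r.toAddMonoidHom hrc i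
    choose c hc hcu using hsl
    have hr1 : r 1 ∈ Δ := by
      have hx := (hkermem _).mp x.2
      have : r 1 = -((x : Δ × ContinuousAddMonoidHom ℝ G).1 : G) := by
        rw [eq_neg_iff_add_eq_zero, add_comm]
        exact hx
      rw [this]
      exact Δ.neg_mem (x : Δ × ContinuousAddMonoidHom ℝ G).1.2
    have hcint : ∀ i : Fin n, ∃ k : ℤ, (k : ℝ) = c i := by
      intro i
      have h1 : p (r 1) i = ((1 * c i : ℝ) : AddCircle (1 : ℝ)) := hc i 1
      have h2 : p (r 1) = 0 := (hker _).mpr hr1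
      rw [h2] at h1
      have h3 : ((c i : ℝ) : AddCircle (1 : ℝ)) = 0 := by
        rw [one_mul] at h1
        exact h1.symm
      have h4 : c i ∈ AddSubgroup.zmultiples (1 : ℝ) :=
        (QuotientAddGroup.eq_zero_iff _).mp h3
      obtain ⟨k, hk⟩ := AddSubgroup.mem_zmultiples_iff.mp h4
      exact ⟨k, by rw [← hk, zsmul_eq_mul, mul_one]⟩
    choose k hk using hcint
    refine ⟨k, ?_, ?_⟩
    · intro i t
      rw [hk i]
      exact hc i t
    · intro k' hk'
      funext i
      have h1 : (k' i : ℝ) = c i := hcu i _ (hk' i)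
      have h2 : (k i : ℝ) = c i := hk i
      exact_mod_cast h1.trans h2.symm
  have hcoeadd : ∀ a b : ℝ, ((a : AddCircle (1 : ℝ)) + (b : AddCircle (1 : ℝ)))
      = ((a + b : ℝ) : AddCircle (1 : ℝ)) :=
    fun a b => ((QuotientAddGroup.mk' (AddSubgroup.zmultiples (1 : ℝ))).map_add a b).symm
  -- the slope homomorphism θ
  set θ : (resolutionHom G Δ).ker → (Fin n → ℤ) := fun x => (hint x).choose with hθdef
  have hθ : ∀ (x : (resolutionHom G Δ).ker) (i : Fin n) (t : ℝ),
      p ((x : Δ × ContinuousAddMonoidHom ℝ G).2 t) i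
        = ((t * (θ x i : ℝ) : ℝ) : AddCircle (1 : ℝ)) :=
    fun x => (hint x).choose_spec.1
  have hθu : ∀ (x : (resolutionHom G Δ).ker) (k : Fin n → ℤ),
      (∀ (i : Fin n) (t : ℝ), p ((x : Δ × ContinuousAddMonoidHom ℝ G).2 t) i
        = ((t * (k i : ℝ) : ℝ) : AddCircle (1 : ℝ))) → k = θ x :=
    fun x k hk => (hint x).choose_spec.2 k hk
  have hθadd : ∀ x y : (resolutionHom G Δ).ker, θ (x + y) = θ x + θ y := by
    intro x y
    refine (hθu (x + y) (θ x + θ y) ?_).symm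
    intro i t
    have hsnd : ((x + y : (resolutionHom G Δ).ker) : Δ × ContinuousAddMonoidHom ℝ G).2 t
        = (x : Δ × ContinuousAddMonoidHom ℝ G).2 t
          + (y : Δ × ContinuousAddMonoidHom ℝ G).2 t := rfl
    rw [hsnd, map_add]
    show p ((x : Δ × ContinuousAddMonoidHom ℝ G).2 t) i
        + p ((y : Δ × ContinuousAddMonoidHom ℝ G).2 t) i = _
    rw [hθ x i t, hθ y i t, hcoeadd]
    congr 1
    rw [Pi.add_apply]
    push_cast
    ring
  set θh : (resolutionHom G Δ).ker →+ (Fin n → ℤ) := AddMonoidHom.mk' θ hθadd with hθh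
  -- injectivity
  have hinj : Function.Injective θh := by
    rw [injective_iff_map_eq_zero]
    intro x hx
    have hθx : θ x = 0 := hx
    have hp0 : ∀ t, p ((x : Δ × ContinuousAddMonoidHom ℝ G).2 t) = 0 := by
      intro t
      funext i
      have := hθ x i t
      rw [hθx] at this
      simpa using this
    have hr0 : ∀ t, (x : Δ × ContinuousAddMonoidHom ℝ G).2 t = 0 :=
      hzero (x : Δ × ContinuousAddMonoidHom ℝ G).2.toAddMonoidHom
        (map_continuous (x : Δ × ContinuousAddMonoidHom ℝ G).2) hp0
    have hsnd : (x : Δ × ContinuousAddMonoidHom ℝ G).2 = 0 := by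
      apply DFunLike.ext
      intro t
      exact hr0 t
    have hfst : (x : Δ × ContinuousAddMonoidHom ℝ G).1 = 0 := by
      have h1 := (hkermem _).mp x.2
      rw [hr0 1, add_zero] at h1
      exact Subtype.ext h1
    apply Subtype.ext
    exact Prod.ext hfst hsnd
  -- surjectivity
  have hsurj : Function.Surjective θh := by
    intro k
    set χk : ℝ →+ (Fin n → AddCircle (1 : ℝ)) :=
      { toFun := fun t i => ((t * (k i : ℝ) : ℝ) : AddCircle (1 : ℝ))
        map_zero' := by
          funext i
          norm_num
        map_add' := by
          intro a b
          funext i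
          show _ = ((a * (k i : ℝ) : ℝ) : AddCircle (1 : ℝ)) + ((b * (k i : ℝ) : ℝ) : AddCircle (1 : ℝ))
          rw [hcoeadd]
          congr 1
          ring } with hχk
    have hχkc : Continuous ⇑χk := by
      apply continuous_pi
      intro i
      exact QuotientAddGroup.continuous_mk.comp (continuous_id.mul continuous_const)
    obtain ⟨r, hrc, hrp⟩ := protorus_lift Δ hcl htd p hpc hpo hker χk hχkc
    have hr1Δ : r 1 ∈ Δ := by
      apply (hker _).mp
      rw [hrp 1]
      funext i
      show ((1 * (k i : ℝ) : ℝ) : AddCircle (1 : ℝ)) = 0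
      rw [one_mul]
      exact (QuotientAddGroup.eq_zero_iff _).mpr
        (AddSubgroup.mem_zmultiples_iff.mpr ⟨k i, by rw [zsmul_eq_mul, mul_one]⟩)
    set rc : ContinuousAddMonoidHom ℝ G := ⟨r, hrc⟩ with hrcdef
    have hxker : ((⟨-(r 1), Δ.neg_mem hr1Δ⟩ : Δ), rc) ∈ (resolutionHom G Δ).ker := by
      rw [hkermem]
      show -(r 1) + r 1 = 0
      exact neg_add_cancel _
    refine ⟨⟨((⟨-(r 1), Δ.neg_mem hr1Δ⟩ : Δ), rc), hxker⟩, ?_⟩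
    show θ _ = k
    refine (hθu _ k ?_).symm ▸ rfl
    intro i t
    show p (r t) i = _
    rw [hrp t]
    rfl
  -- the equivalence
  have hequiv : Nonempty ((resolutionHom G Δ).ker ≃+ (Fin n → ℤ)) :=
    ⟨AddEquiv.ofBijective θh ⟨hinj, hsurj⟩⟩
  -- discreteness
  set Bs : Set (AddCircle (1 : ℝ)) :=
    (fun x : ℝ => (x : AddCircle (1 : ℝ))) '' Set.Ioo (-(1/4) : ℝ) (1/4) with hBs
  have hBso : IsOpen Bs := QuotientAddGroup.isOpenMap_coe _ isOpen_Ioo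
  have h0Bs : (0 : AddCircle (1 : ℝ)) ∈ Bs := ⟨0, by norm_num, by norm_num⟩
  set Bset : Set (Fin n → AddCircle (1 : ℝ)) := {z | ∀ i, z i ∈ Bs} with hBset
  have hBseto : IsOpen Bset := by
    have : Bset = ⋂ i, (fun z : Fin n → AddCircle (1 : ℝ) => z i) ⁻¹' Bs := by
      ext z
      simp [hBset, Set.mem_iInter]
    rw [this]
    exact isOpen_iInter_of_finite fun i => hBso.preimage (continuous_apply i)
  set Ω : Set (ContinuousAddMonoidHom ℝ G) :=
    {r | Set.MapsTo ⇑r (Set.Icc (0 : ℝ) 1) (⇑p ⁻¹' Bset)} with hΩ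
  have hΩo : IsOpen Ω := by
    have h1 : IsOpen {f : C(ℝ, G) | Set.MapsTo ⇑f (Set.Icc (0 : ℝ) 1) (⇑p ⁻¹' Bset)} :=
      ContinuousMap.isOpen_setOf_mapsTo isCompact_Icc (hBseto.preimage hpc)
    have h2 : Ω = (ContinuousAddMonoidHom.toContinuousMap) ⁻¹'
        {f : C(ℝ, G) | Set.MapsTo ⇑f (Set.Icc (0 : ℝ) 1) (⇑p ⁻¹' Bset)} := rfl
    rw [h2]
    exact h1.preimage (ContinuousAddMonoidHom.isInducing_toContinuousMap ℝ G).continuous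
  have hsmall : ∀ x : (resolutionHom G Δ).ker,
      (x : Δ × ContinuousAddMonoidHom ℝ G).2 ∈ Ω → x = 0 := by
    intro x hxΩ
    apply hinj
    rw [map_zero]
    show θ x = 0
    funext i
    show θ x i = (0 : ℤ)
    by_contra hki
    set m : ℤ := θ x i with hm
    have ham : (1 : ℝ) ≤ |(m : ℝ)| := by
      have := Int.one_le_abs (by exact hki : m ≠ 0)
      calc (1 : ℝ) = ((1 : ℤ) : ℝ) := by norm_num
        _ ≤ ((|m| : ℤ) : ℝ) := by exact_mod_cast this
        _ = |(m : ℝ)| := by rw [Int.cast_abs]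
    have hapos : (0 : ℝ) < |(m : ℝ)| := lt_of_lt_of_le one_pos ham
    set t₀ : ℝ := 1 / (2 * |(m : ℝ)|) with ht₀
    have ht₀pos : 0 < t₀ := by positivity
    have ht₀le : t₀ ≤ 1 := by
      rw [ht₀, div_le_one (by positivity)]
      linarith
    have hmem : (x : Δ × ContinuousAddMonoidHom ℝ G).2 t₀ ∈ ⇑p ⁻¹' Bset :=
      hxΩ ⟨le_of_lt ht₀pos, ht₀le⟩
    have hmem2 : p ((x : Δ × ContinuousAddMonoidHom ℝ G).2 t₀) i ∈ Bs := hmem i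
    rw [hθ x i t₀] at hmem2
    obtain ⟨y, hy, hyeq⟩ := hmem2
    have hsub : y - t₀ * (m : ℝ) ∈ AddSubgroup.zmultiples (1 : ℝ) :=
      QuotientAddGroup.eq_iff_sub_mem.mp hyeq
    obtain ⟨j, hj⟩ := AddSubgroup.mem_zmultiples_iff.mp hsub
    rw [zsmul_eq_mul, mul_one] at hj
    have habs : |t₀ * (m : ℝ)| = 1 / 2 := by
      rw [abs_mul, abs_of_pos ht₀pos, ht₀]
      field_simp
    have hyabs : |y| < 1 / 4 := by
      rw [abs_lt]
      exact ⟨by linarith [hy.1], by linarith [hy.2]⟩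
    have hjlow : 1 / 4 < |(j : ℝ)| := by
      rw [hj]
      have := abs_sub_abs_le_abs_sub (t₀ * (m : ℝ)) y
      rw [habs] at this
      have h2 : |t₀ * (m : ℝ) - y| = |y - t₀ * (m : ℝ)| := abs_sub_comm _ _
      rw [h2] at this
      linarith
    have hjhigh : |(j : ℝ)| < 1 := by
      rw [hj]
      calc |y - t₀ * (m : ℝ)| ≤ |y| + |t₀ * (m : ℝ)| := abs_sub _ _
        _ < 1 / 4 + 1 / 2 := by rw [habs]; linarith
        _ < 1 := by norm_num
    have hj0 : j = 0 := by
      by_contra hj0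
      have : (1 : ℝ) ≤ |(j : ℝ)| := by
        have := Int.one_le_abs hj0
        calc (1 : ℝ) = ((1 : ℤ) : ℝ) := by norm_num
          _ ≤ ((|j| : ℤ) : ℝ) := by exact_mod_cast this
          _ = |(j : ℝ)| := by rw [Int.cast_abs]
      linarith
    rw [hj0] at hjlow
    norm_num at hjlow
  have h0Ω : ((0 : (resolutionHom G Δ).ker) : Δ × ContinuousAddMonoidHom ℝ G).2 ∈ Ω := by
    intro t _
    show p (((0 : (resolutionHom G Δ).ker) : Δ × ContinuousAddMonoidHom ℝ G).2 t) ∈ Bset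
    have : ((0 : (resolutionHom G Δ).ker) : Δ × ContinuousAddMonoidHom ℝ G).2 t = 0 := rfl
    rw [this, map_zero]
    intro i
    exact h0Bs
  have hdisc : DiscreteTopology (resolutionHom G Δ).ker := by
    rw [discreteTopology_iff_isOpen_singleton]
    intro x
    have hmapc : Continuous (fun y : (resolutionHom G Δ).ker =>
        ((y - x : (resolutionHom G Δ).ker) : Δ × ContinuousAddMonoidHom ℝ G).2) :=
      continuous_snd.comp (continuous_subtype_val.comp (continuous_id.sub continuous_const))
    have hset : ({x} : Set (resolutionHom G Δ).ker) = (fun y : (resolutionHom G Δ).ker =>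
        ((y - x : (resolutionHom G Δ).ker) : Δ × ContinuousAddMonoidHom ℝ G).2) ⁻¹' Ω := by
      ext y
      simp only [Set.mem_preimage, Set.mem_singleton_iff]
      constructor
      · rintro rfl
        have : (y - y : (resolutionHom G Δ).ker) = 0 := sub_self y
        rw [this]
        exact h0Ω
      · intro h
        have := hsmall (y - x) h
        have h2 : y - x = 0 := this
        exact sub_eq_zero.mp h2
    rw [hset]
    exact hΩo.preimage hmapc
  exact ⟨hdisc, hequiv⟩
end LiftEx
end

section
/- If Δ is a profinite subgroup of a torus-free protorus G such that G/Δ is topologically isomorphic to 𝕋^{dim G}, then the subgroup ℤ_Δ := Δ ∩ exp_G 𝔏(G) is dense in Δ, i.e., the closure of ℤ_Δ in G equals Δ. -/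
open Topology Set

namespace Stmt6Aux

/-- Coordinatewise quotient map `ℝⁿ → 𝕋ⁿ` as an `AddMonoidHom`. -/
noncomputable def mkT (n : ℕ) : (Fin n → ℝ) →+ (Fin n → AddCircle (1 : ℝ)) where
  toFun x := fun i => (x i : AddCircle (1:ℝ))
  map_zero' := rfl
  map_add' _ _ := rfl

lemma mkT_continuous (n : ℕ) : Continuous (mkT n) :=
  continuous_pi fun i => (AddCircle.continuous_mk' (1:ℝ)).comp (continuous_apply i)

lemma mkT_surjective (n : ℕ) : Function.Surjective (mkT n) := by
  intro y
  have h : ∀ i, ∃ t : ℝ, (t : AddCircle (1:ℝ)) = y i := fun i =>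
    QuotientAddGroup.mk_surjective (y i)
  choose t ht using h
  exact ⟨t, funext ht⟩

lemma const_of_finite_range {X Y : Type*} [TopologicalSpace X] [TopologicalSpace Y]
    [PreconnectedSpace X] [T1Space Y] {f : X → Y} (hf : Continuous f) {S : Set Y}
    (hS : S.Finite) (hr : ∀ x, f x ∈ S) (x y : X) : f x = f y := by
  have hcl : IsClosed (f ⁻¹' {f y}) := isClosed_singleton.preimage hf
  have hcompl : (f ⁻¹' {f y})ᶜ = ⋃ s ∈ S \ {f y}, f ⁻¹' {s} := by
    ext a
    simp only [mem_compl_iff, mem_preimage, mem_singleton_iff, mem_iUnion, mem_diff]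
    constructor
    · intro h; exact ⟨f a, ⟨hr a, h⟩, rfl⟩
    · rintro ⟨s, ⟨_, hs⟩, rfl⟩; exact hs
  have hop : IsOpen (f ⁻¹' {f y}) := by
    rw [← isClosed_compl_iff, hcompl]
    exact hS.diff.isClosed_biUnion fun s _ => isClosed_singleton.preimage hf
  have : f ⁻¹' {f y} = univ := IsClopen.eq_univ ⟨hcl, hop⟩ ⟨y, rfl⟩
  have hx : x ∈ f ⁻¹' {f y} := this ▸ mem_univ x
  exact hx

lemma isOpenMap_of_compact {A B : Type*} [AddCommGroup A] [TopologicalSpace A]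
    [IsTopologicalAddGroup A] [CompactSpace A] [AddCommGroup B] [TopologicalSpace B] [T2Space B]
    (φ : A →+ B) (hc : Continuous φ) (hs : Function.Surjective φ) : IsOpenMap φ := by
  have hq : Topology.IsQuotientMap φ := (hc.isClosedMap).isQuotientMap hc hs
  intro U hU
  rw [← hq.isOpen_preimage]
  have heq : ⇑φ ⁻¹' (⇑φ '' U) = ⋃ k ∈ (φ.ker : Set A), (fun x => k + x) '' U := by
    ext a
    simp only [mem_preimage, mem_image, mem_iUnion, SetLike.mem_coe]
    constructor
    · rintro ⟨u, hu, huv⟩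
      refine ⟨a - u, by simp [AddMonoidHom.mem_ker, map_sub, huv], u, hu, by abel⟩
    · rintro ⟨k, hk, u, hu, rfl⟩
      rw [AddMonoidHom.mem_ker] at hk
      exact ⟨u, hu, by simp [map_add, hk]⟩
  rw [heq]
  exact isOpen_biUnion fun k _ => (isOpenMap_add_left k) U hU

lemma key {A : Type} [AddCommGroup A] [TopologicalSpace A] [IsTopologicalAddGroup A]
    [CompactSpace A] [T2Space A] {n : ℕ}
    (φ : A →+ (Fin n → AddCircle (1:ℝ))) (hφc : Continuous φ)
    (hφs : Function.Surjective φ) (hker : ((φ.ker : Set A)).Finite) :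
    ∃ Ψ : (Fin n → ℝ) → A, Continuous Ψ ∧ (∀ x y, Ψ (x + y) = Ψ x + Ψ y) ∧ Ψ 0 = 0 ∧
      (∀ x, φ (Ψ x) = mkT n x) ∧ (PreconnectedSpace A → Function.Surjective Ψ) := by
  classical
  have hopen : IsOpenMap φ := isOpenMap_of_compact φ hφc hφs
  -- a small neighborhood of 0 on which φ is injective
  obtain ⟨W, hWopen, hW0, hWsep⟩ : ∃ W : Set A, IsOpen W ∧ 0 ∈ W ∧
      ∀ a ∈ W, ∀ b ∈ W, a - b ∈ φ.ker → a = b := by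
    have hC : IsClosed ((φ.ker : Set A) \ {0}) := hker.diff.isClosed
    have h0 : ((0:A), (0:A)) ∈ (fun p : A × A => p.1 - p.2) ⁻¹' ((φ.ker : Set A) \ {0})ᶜ := by
      simp
    have hopen' : IsOpen ((fun p : A × A => p.1 - p.2) ⁻¹' ((φ.ker : Set A) \ {0})ᶜ) :=
      hC.isOpen_compl.preimage (continuous_fst.sub continuous_snd)
    obtain ⟨U₁, U₂, hU₁, hU₂, h01, h02, hsub⟩ := isOpen_prod_iff.mp hopen' 0 0 h0
    refine ⟨U₁ ∩ U₂, hU₁.inter hU₂, ⟨h01, h02⟩, ?_⟩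
    intro a ha b hb hab
    have := hsub (Set.mk_mem_prod ha.1 hb.2)
    simp only [mem_compl_iff, mem_diff, SetLike.mem_coe, mem_preimage] at this
    by_contra hne
    exact this ⟨hab, fun h => hne (sub_eq_zero.mp h)⟩
  set D : Set (Fin n → ℝ) := ⇑(mkT n) ⁻¹' (⇑φ '' W) with hD
  have hDopen : IsOpen D := (hopen W hWopen).preimage (mkT_continuous n)
  have hD0 : (0 : Fin n → ℝ) ∈ D := by
    refine mem_preimage.mpr ⟨0, hW0, ?_⟩
    simp [map_zero]
  have hex : ∀ x ∈ D, ∃ a, a ∈ W ∧ φ a = mkT n x := by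
    intro x hx
    obtain ⟨a, ha, hfa⟩ := mem_preimage.mp hx
    exact ⟨a, ha, hfa⟩
  set σ : (Fin n → ℝ) → A := fun x => if h : x ∈ D then (hex x h).choose else 0 with hσdef
  have hσ : ∀ x (hx : x ∈ D), σ x ∈ W ∧ φ (σ x) = mkT n x := by
    intro x hx
    simp only [hσdef, dif_pos hx]
    exact (hex x hx).choose_spec
  have huniq : ∀ x (hx : x ∈ D), ∀ a, a ∈ W → φ a = mkT n x → a = σ x := by
    intro x hx a haW hfa
    refine hWsep a haW (σ x) (hσ x hx).1 ?_
    rw [AddMonoidHom.mem_ker, map_sub, hfa, (hσ x hx).2, sub_self]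
  have hσ0 : σ 0 = 0 := (huniq 0 hD0 0 hW0 (by simp [map_zero])).symm
  -- continuity of σ on D
  have hσcont : ∀ x ∈ D, ContinuousAt σ x := by
    intro x hx
    rw [ContinuousAt, tendsto_nhds]
    intro O hOopen hO
    have hO' : IsOpen (O ∩ W) := hOopen.inter hWopen
    have hmem : σ x ∈ O ∩ W := ⟨hO, (hσ x hx).1⟩
    have hN : IsOpen (⇑(mkT n) ⁻¹' (⇑φ '' (O ∩ W))) := (hopen _ hO').preimage (mkT_continuous n)
    have hxN : x ∈ ⇑(mkT n) ⁻¹' (⇑φ '' (O ∩ W)) := ⟨σ x, hmem, (hσ x hx).2⟩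
    refine Filter.mem_of_superset (hN.mem_nhds hxN) ?_
    intro y hy
    obtain ⟨a, haOW, hfa⟩ := hy
    have hyD : y ∈ D := ⟨a, haOW.2, hfa⟩
    have := huniq y hyD a haOW.2 hfa
    simpa [mem_preimage, ← this] using haOW.1
  -- a ball inside D
  obtain ⟨ε, hεpos, hball⟩ := Metric.mem_nhds_iff.mp (hDopen.mem_nhds hD0)
  set ρ : ℝ := ε / 2 with hρdef
  have hρpos : 0 < ρ := by positivity
  have hball2 : ∀ x : Fin n → ℝ, ‖x‖ < 2 * ρ → x ∈ D := by
    intro x hx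
    apply hball
    rw [mem_ball_zero_iff]
    rw [hρdef] at hx
    linarith
  have hballD : ∀ x : Fin n → ℝ, ‖x‖ < ρ → x ∈ D := fun x hx =>
    hball2 x (by linarith)
  -- local additivity of σ
  have hadd : ∀ x y : Fin n → ℝ, ‖x‖ < ρ → ‖y‖ < ρ → σ (x + y) = σ x + σ y := by
    have hconv : Convex ℝ ((Metric.ball (0 : Fin n → ℝ) ρ) ×ˢ (Metric.ball (0 : Fin n → ℝ) ρ)) :=
      (convex_ball _ _).prod (convex_ball _ _)
    haveI hpc : PreconnectedSpace
        ↥((Metric.ball (0 : Fin n → ℝ) ρ) ×ˢ (Metric.ball (0 : Fin n → ℝ) ρ)) :=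
      Subtype.preconnectedSpace hconv.isPreconnected
    set s := (Metric.ball (0 : Fin n → ℝ) ρ) ×ˢ (Metric.ball (0 : Fin n → ℝ) ρ) with hs
    set F : (Fin n → ℝ) × (Fin n → ℝ) → A := fun p => σ (p.1 + p.2) - σ p.1 - σ p.2 with hF
    have hmemD : ∀ p ∈ s, p.1 + p.2 ∈ D ∧ p.1 ∈ D ∧ p.2 ∈ D := by
      intro p hp
      obtain ⟨hp1, hp2⟩ := hp
      rw [Metric.mem_ball, dist_zero_right] at hp1 hp2
      exact ⟨hball2 _ (lt_of_le_of_lt (norm_add_le _ _) (by linarith)),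
        hballD _ hp1, hballD _ hp2⟩
    have hFcont : ContinuousOn F s := by
      intro p hp
      obtain ⟨h1, h2, h3⟩ := hmemD p hp
      have c1 : ContinuousAt (σ ∘ fun q : (Fin n → ℝ) × (Fin n → ℝ) => q.1 + q.2) p :=
        ContinuousAt.comp (hσcont _ h1) ((continuous_fst.add continuous_snd).continuousAt)
      have c2 : ContinuousAt (σ ∘ fun q : (Fin n → ℝ) × (Fin n → ℝ) => q.1) p :=
        ContinuousAt.comp (hσcont _ h2) continuous_fst.continuousAt
      have c3 : ContinuousAt (σ ∘ fun q : (Fin n → ℝ) × (Fin n → ℝ) => q.2) p :=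
        ContinuousAt.comp (hσcont _ h3) continuous_snd.continuousAt
      exact ((c1.sub c2).sub c3).continuousWithinAt
    have hrange : ∀ p : ↥s, s.restrict F p ∈ (φ.ker : Set A) := by
      rintro ⟨p, hp⟩
      obtain ⟨h1, h2, h3⟩ := hmemD p hp
      simp only [restrict_apply, SetLike.mem_coe, AddMonoidHom.mem_ker, hF]
      show φ (σ (p.1 + p.2) - σ p.1 - σ p.2) = 0
      rw [map_sub, map_sub, (hσ _ h1).2, (hσ _ h2).2, (hσ _ h3).2, map_add]
      abel
    have h00 : ((0,0) : (Fin n → ℝ) × (Fin n → ℝ)) ∈ s :=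
      ⟨Metric.mem_ball_self hρpos, Metric.mem_ball_self hρpos⟩
    intro x y hx hy
    have hxy : ((x, y) : (Fin n → ℝ) × (Fin n → ℝ)) ∈ s := by
      constructor <;> rw [Metric.mem_ball, dist_zero_right] <;> assumption
    have hconst := const_of_finite_range (hFcont.restrict) hker hrange ⟨(x,y), hxy⟩ ⟨(0,0), h00⟩
    simp only [restrict_apply, hF] at hconst
    rw [add_zero, hσ0, sub_zero, sub_zero] at hconst
    rw [sub_sub, sub_eq_zero] at hconst
    exact hconst
  -- doubling
  have hdbl : ∀ x : Fin n → ℝ, ‖x‖ < ρ → σ x = σ ((2:ℝ)⁻¹ • x) + σ ((2:ℝ)⁻¹ • x) := by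
    intro x hx
    have hhalf : ‖(2:ℝ)⁻¹ • x‖ < ρ := by
      rw [norm_smul]
      have : ‖((2:ℝ)⁻¹)‖ = 2⁻¹ := by simp [abs_of_pos]
      rw [this]
      nlinarith [norm_nonneg x]
    have := hadd _ _ hhalf hhalf
    rw [← this]
    congr 1
    rw [← add_smul]
    norm_num
  -- the dyadic extension
  set g : ℕ → (Fin n → ℝ) → A := fun m x => (2^m : ℕ) • σ (((2:ℝ)^m)⁻¹ • x) with hg
  have hnorm_scaled : ∀ (m : ℕ) (x : Fin n → ℝ), ‖(((2:ℝ)^m)⁻¹ • x)‖ = ‖x‖ / 2^m := by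
    intro m x
    rw [norm_smul, norm_inv, norm_pow]
    simp [div_eq_inv_mul, Real.norm_ofNat]
  have hstep : ∀ (m : ℕ) (x : Fin n → ℝ), ‖x‖ < 2^m * ρ → g (m+1) x = g m x := by
    intro m x hx
    have hu : ‖(((2:ℝ)^m)⁻¹ • x)‖ < ρ := by
      rw [hnorm_scaled]
      rw [div_lt_iff₀ (by positivity)]
      linarith [hx]
    have hd := hdbl _ hu
    have harg : (2:ℝ)⁻¹ • (((2:ℝ)^m)⁻¹ • x) = ((2:ℝ)^(m+1))⁻¹ • x := by
      rw [smul_smul, ← mul_inv, ← pow_succ']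
    rw [hg]
    simp only []
    rw [harg] at hd
    have h2 : (2^(m+1) : ℕ) = 2^m * 2 := pow_succ 2 m
    calc (2^(m+1) : ℕ) • σ (((2:ℝ)^(m+1))⁻¹ • x)
        = (2^m : ℕ) • ((2:ℕ) • σ (((2:ℝ)^(m+1))⁻¹ • x)) := by
          rw [h2, mul_nsmul]
          exact smul_comm _ _ _
      _ = (2^m : ℕ) • σ (((2:ℝ)^m)⁻¹ • x) := by
          rw [two_nsmul, ← hd]
  have hup : ∀ (m k : ℕ) (x : Fin n → ℝ), ‖x‖ < 2^m * ρ → g (m+k) x = g m x := by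
    intro m k
    induction k with
    | zero => intro x _; rfl
    | succ k ih =>
      intro x hx
      have hx' : ‖x‖ < 2^(m+k) * ρ := by
        refine lt_of_lt_of_le hx ?_
        have : (2:ℝ)^m ≤ 2^(m+k) := by
          apply pow_le_pow_right₀ (by norm_num) (by omega)
        nlinarith
      rw [show m + (k+1) = (m+k)+1 by omega, hstep (m+k) x hx', ih x hx]
  have hindep : ∀ (m m' : ℕ) (x : Fin n → ℝ), ‖x‖ < 2^m * ρ → ‖x‖ < 2^m' * ρ →
      g m x = g m' x := by
    intro m m' x h1 h2
    rcases le_total m m' with h | h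
    · rw [show m' = m + (m' - m) by omega, hup m (m'-m) x h1]
    · rw [show m = m' + (m - m') by omega, hup m' (m-m') x h2]
  have hm : ∀ x : Fin n → ℝ, ∃ m : ℕ, ‖x‖ < 2^m * ρ := by
    intro x
    obtain ⟨m, hm⟩ := pow_unbounded_of_one_lt (‖x‖ / ρ) (by norm_num : (1:ℝ) < 2)
    exact ⟨m, by rwa [div_lt_iff₀ hρpos] at hm⟩
  set Ψ : (Fin n → ℝ) → A := fun x => g (hm x).choose x with hΨdef
  have hΨeq : ∀ (m : ℕ) (x : Fin n → ℝ), ‖x‖ < 2^m * ρ → Ψ x = g m x := by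
    intro m x h
    exact hindep _ _ x (hm x).choose_spec h
  have hΨsmall : ∀ x : Fin n → ℝ, ‖x‖ < ρ → Ψ x = σ x := by
    intro x h
    rw [hΨeq 0 x (by simpa using h), hg]
    simp
  have hΨadd : ∀ x y, Ψ (x + y) = Ψ x + Ψ y := by
    intro x y
    obtain ⟨m, hm'⟩ : ∃ m : ℕ, ‖x‖ + ‖y‖ < 2^m * ρ := by
      obtain ⟨m, hm'⟩ := pow_unbounded_of_one_lt ((‖x‖ + ‖y‖) / ρ) (by norm_num : (1:ℝ) < 2)
      exact ⟨m, by rwa [div_lt_iff₀ hρpos] at hm'⟩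
    have hx : ‖x‖ < 2^m * ρ := lt_of_le_of_lt (le_add_of_nonneg_right (norm_nonneg y)) hm'
    have hy : ‖y‖ < 2^m * ρ := lt_of_le_of_lt (le_add_of_nonneg_left (norm_nonneg x)) hm'
    have hxy : ‖x + y‖ < 2^m * ρ := lt_of_le_of_lt (norm_add_le x y) hm'
    rw [hΨeq m _ hxy, hΨeq m _ hx, hΨeq m _ hy, hg]
    simp only []
    rw [smul_add (((2:ℝ)^m)⁻¹) x y]
    have hux : ‖((2:ℝ)^m)⁻¹ • x‖ < ρ := by
      rw [hnorm_scaled, div_lt_iff₀ (by positivity)]; linarith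
    have huy : ‖((2:ℝ)^m)⁻¹ • y‖ < ρ := by
      rw [hnorm_scaled, div_lt_iff₀ (by positivity)]; linarith
    rw [hadd _ _ hux huy, smul_add]
  have hΨ0 : Ψ 0 = 0 := by
    rw [hΨsmall 0 (by simpa using hρpos), hσ0]
  have hφΨ : ∀ x, φ (Ψ x) = mkT n x := by
    intro x
    obtain ⟨m, hxm⟩ := hm x
    rw [hΨeq m x hxm, hg]
    simp only []
    have hu : (((2:ℝ)^m)⁻¹ • x) ∈ D := by
      apply hballD
      rw [hnorm_scaled, div_lt_iff₀ (by positivity)]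
      rw [mul_comm]
      exact hxm
    rw [map_nsmul, (hσ _ hu).2, ← map_nsmul (mkT n)]
    congr 1
    rw [← Nat.cast_smul_eq_nsmul ℝ, smul_smul]
    push_cast
    rw [mul_inv_cancel₀ (by positivity), one_smul]
  have hΨcont : Continuous Ψ := by
    rw [continuous_iff_continuousAt]
    intro x₀
    have hc : ContinuousAt (fun y => Ψ x₀ + σ (y - x₀)) x₀ := by
      have h2 : ContinuousAt (σ ∘ fun y : Fin n → ℝ => y - x₀) x₀ :=
        ContinuousAt.comp (by simpa using hσcont 0 hD0)
          ((continuous_id.sub continuous_const).continuousAt)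
      exact continuousAt_const.add h2
    refine hc.congr ?_
    have hball' : Metric.ball x₀ ρ ∈ 𝓝 x₀ := Metric.ball_mem_nhds x₀ hρpos
    refine Filter.eventuallyEq_of_mem hball' ?_
    intro y hy
    rw [Metric.mem_ball, dist_eq_norm] at hy
    have : Ψ y = Ψ x₀ + Ψ (y - x₀) := by
      rw [← hΨadd]
      congr 1
      abel
    rw [this, hΨsmall _ hy]
  refine ⟨Ψ, hΨcont, hΨadd, hΨ0, hφΨ, ?_⟩
  -- surjectivity
  intro hconn a
  haveI : Finite ↥φ.ker := hker.to_subtype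
  haveI : Fintype ↥φ.ker := Fintype.ofFinite _
  set k : ℕ := Fintype.card ↥φ.ker with hk
  have hkpos : 0 < k := Fintype.card_pos_iff.mpr ⟨⟨0, φ.ker.zero_mem⟩⟩
  have hkk : ∀ b ∈ φ.ker, k • b = 0 := by
    intro b hb
    have h1 : k • (⟨b, hb⟩ : ↥φ.ker) = 0 := card_nsmul_eq_zero
    have h2 := congrArg Subtype.val h1
    simpa using h2
  set S : Set A := Set.range Ψ with hS
  have hsub : ∀ b : A, ∃ f ∈ (φ.ker : Set A), ∃ x, b = f + Ψ x := by
    intro b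
    obtain ⟨x, hx⟩ := mkT_surjective n (φ b)
    refine ⟨b - Ψ x, ?_, x, by abel⟩
    simp only [SetLike.mem_coe, AddMonoidHom.mem_ker, map_sub, hφΨ, hx, sub_self]
  have hSnsmul : ∀ x (c : ℕ), c • Ψ x = Ψ (c • x) := by
    intro x c
    induction c with
    | zero => simp [hΨ0]
    | succ c ih => rw [succ_nsmul, succ_nsmul, ih, ← hΨadd]
  have hSeq : S = Set.range (fun b : A => k • b) := by
    apply Set.Subset.antisymm
    · rintro _ ⟨x, rfl⟩
      refine ⟨Ψ ((k:ℝ)⁻¹ • x), ?_⟩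
      show k • Ψ ((k:ℝ)⁻¹ • x) = Ψ x
      rw [hSnsmul, ← Nat.cast_smul_eq_nsmul ℝ, smul_smul, mul_inv_cancel₀ (by
        exact_mod_cast hkpos.ne'), one_smul]
    · rintro _ ⟨b, rfl⟩
      show k • b ∈ S
      obtain ⟨f, hf, x, hxb⟩ := hsub b
      rw [hxb, smul_add, hkk f hf, zero_add, hSnsmul]
      exact ⟨_, rfl⟩
  have hSclosed : IsClosed S := by
    rw [hSeq]
    exact (isCompact_range (continuous_nsmul k)).isClosed
  have hSopen : IsOpen S := by
    rw [← isClosed_compl_iff]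
    have hcompl : Sᶜ = ⋃ f ∈ (φ.ker : Set A) \ S, (fun y => f + y) '' S := by
      ext b
      simp only [mem_compl_iff, mem_iUnion, mem_image, mem_diff]
      constructor
      · intro hb
        obtain ⟨f, hf, x, rfl⟩ := hsub b
        refine ⟨f, ⟨hf, ?_⟩, Ψ x, ⟨x, rfl⟩, rfl⟩
        intro hfS
        obtain ⟨x', hx'⟩ := hfS
        exact hb ⟨x' + x, by rw [hΨadd, hx']⟩
      · rintro ⟨f, ⟨hf, hfS⟩, y, ⟨x, rfl⟩, rfl⟩
        intro hmem
        obtain ⟨x', hx'⟩ := hmem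
        refine hfS ⟨x' - x, ?_⟩
        have hsum : Ψ (x' - x) + Ψ x = f + Ψ x := by
          rw [← hΨadd]
          rw [show x' - x + x = x' by abel, hx']
        exact add_right_cancel hsum
    rw [hcompl]
    exact Set.Finite.isClosed_biUnion (hker.diff : ((φ.ker : Set A) \ S).Finite) fun f _ =>
      (Homeomorph.addLeft f).isClosedMap S hSclosed
  have hSuniv : S = univ := IsClopen.eq_univ ⟨hSclosed, hSopen⟩ ⟨0, ⟨0, hΨ0⟩⟩
  have : a ∈ S := hSuniv ▸ mem_univ a
  exact this

lemma preconn_of_surj {X Y : Type*} [TopologicalSpace X] [TopologicalSpace Y]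
    [PreconnectedSpace X] {f : X → Y} (hc : Continuous f) (hs : Function.Surjective f) :
    PreconnectedSpace Y := by
  constructor
  have h := isPreconnected_univ.image f hc.continuousOn
  rwa [Set.image_univ, hs.range_eq] at h

end Stmt6Aux

open Stmt6Aux Set Topology in
/-- If `Δ` is a profinite subgroup of a torus-free protorus `G` with `G/Δ` a torus, then
`ℤ_Δ = Δ ∩ exp_G 𝔏(G)` is dense in `Δ`: its closure in `G` equals `Δ`. -/
theorem stmt6 {G : Type} [AddCommGroup G] [TopologicalSpace G] [IsTopologicalAddGroup G]
    [CompactSpace G] [T2Space G] [ConnectedSpace G]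
    (htf : TorusFree G) (Δ : AddSubgroup G) (hΔ : IsTQS Δ) :
    closure ((Δ : Set G) ∩ expImg G) = (Δ : Set G) := by
  classical
  obtain ⟨hclosed, htd, n, e, he, he'⟩ := hΔ
  haveI : TotallyDisconnectedSpace ↥Δ := htd
  apply subset_antisymm (closure_minimal inter_subset_left hclosed)
  intro δ hδmem
  rw [mem_closure_iff]
  intro U hUopen hUδ
  haveI : CompactSpace ↥Δ := isCompact_iff_compactSpace.mp hclosed.isCompact
  haveI : ∀ K : AddSubgroup G, K.Normal := fun K => AddSubgroup.normal_of_isAddCommutative K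
  -- the type of open subgroups of Δ
  let J := {H : AddSubgroup ↥Δ // IsOpen (H : Set ↥Δ)}
  haveI : Nonempty J := ⟨⟨⊤, by rw [AddSubgroup.coe_top]; exact isOpen_univ⟩⟩
  let MG : J → AddSubgroup G := fun H => H.1.map Δ.subtype
  have hMGset : ∀ H : J, (MG H : Set G) = Subtype.val '' (H.1 : Set ↥Δ) := by
    intro H
    rw [AddSubgroup.coe_map, AddSubgroup.coe_subtype]
  have hMGle : ∀ H : J, MG H ≤ Δ := by
    rintro H g hg
    rw [AddSubgroup.mem_map] at hg
    obtain ⟨y, _, rfl⟩ := hg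
    exact y.2
  have hMGclosed : ∀ H : J, IsClosed (MG H : Set G) := by
    intro H
    have h1 : IsClosed ((H.1 : Set ↥Δ)) := (⟨H.1, H.2⟩ : OpenAddSubgroup ↥Δ).isClosed
    have h2 : IsCompact ((H.1 : Set ↥Δ)) := h1.isCompact
    have h3 : IsCompact (Subtype.val '' (H.1 : Set ↥Δ)) := h2.image continuous_subtype_val
    rw [hMGset]
    exact h3.isClosed
  -- quotients
  let QM : J → Type := fun H => G ⧸ MG H
  haveI hT3 : ∀ H : J, T3Space (QM H) := by
    intro H
    haveI := hMGclosed H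
    infer_instance
  haveI hT2 : ∀ H : J, T2Space (QM H) := fun H => inferInstance
  haveI hCpt : ∀ H : J, CompactSpace (QM H) := fun H => inferInstance
  haveI hTAG : ∀ H : J, IsTopologicalAddGroup (QM H) := fun H => inferInstance
  haveI hConn : ∀ H : J, PreconnectedSpace (QM H) := fun H =>
    preconn_of_surj QuotientAddGroup.continuous_mk QuotientAddGroup.mk_surjective
  -- the maps to the torus
  have hle' : ∀ H : J, MG H ≤ Δ.comap (AddMonoidHom.id G) := fun H => hMGle H
  let φH : ∀ H : J, QM H →+ (Fin n → AddCircle (1:ℝ)) := fun H =>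
    e.toAddMonoidHom.comp (QuotientAddGroup.map (MG H) Δ (AddMonoidHom.id G) (hle' H))
  have hφHmk : ∀ (H : J) (g : G), φH H ((g : G ⧸ MG H)) = e ((g : G ⧸ Δ)) := by
    intro H g
    simp only [φH, AddMonoidHom.comp_apply, AddEquiv.coe_toAddMonoidHom]
    rw [QuotientAddGroup.map_mk]
    rfl
  have hφHcont : ∀ H : J, Continuous (φH H) := by
    intro H
    rw [(QuotientAddGroup.isQuotientMap_mk (MG H)).continuous_iff]
    have hfe : ⇑(φH H) ∘ (QuotientAddGroup.mk : G → G ⧸ MG H)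
        = ⇑e ∘ (QuotientAddGroup.mk : G → G ⧸ Δ) := funext fun g => hφHmk H g
    rw [hfe]
    exact he.comp QuotientAddGroup.continuous_mk
  have hφHsurj : ∀ H : J, Function.Surjective (φH H) := by
    intro H
    intro y
    obtain ⟨q, hq⟩ := e.surjective y
    obtain ⟨g, rfl⟩ := QuotientAddGroup.mk_surjective q
    exact ⟨(g : G ⧸ MG H), by rw [hφHmk H g]; exact hq⟩
  have hkerset : ∀ H : J, ((φH H).ker : Set (QM H))
      = (QuotientAddGroup.mk '' (Δ : Set G) : Set (G ⧸ MG H)) := by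
    intro H
    apply Set.Subset.antisymm
    · intro q hq
      obtain ⟨g, rfl⟩ := QuotientAddGroup.mk_surjective q
      rw [SetLike.mem_coe, AddMonoidHom.mem_ker, hφHmk H g] at hq
      have : ((g : G ⧸ Δ)) = 0 := by
        have := EmbeddingLike.map_eq_zero_iff.mp hq
        exact this
      rw [QuotientAddGroup.eq_zero_iff] at this
      exact ⟨g, this, rfl⟩
    · rintro _ ⟨g, hg, rfl⟩
      rw [SetLike.mem_coe, AddMonoidHom.mem_ker, hφHmk H g]
      have : ((g : G ⧸ Δ)) = 0 := (QuotientAddGroup.eq_zero_iff g).mpr hg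
      rw [this, map_zero]
  have hkerfin : ∀ H : J, ((φH H).ker : Set (QM H)).Finite := by
    intro H
    rw [hkerset H]
    obtain ⟨O, hOopen, hOeq⟩ := isOpen_induced_iff.mp H.2
    have hcover : (Δ : Set G) ⊆ ⋃ d : ↥Δ, ((fun x => (d : G) + x) '' O) := by
      intro g hg
      rw [mem_iUnion]
      refine ⟨⟨g, hg⟩, 0, ?_, by simp⟩
      have h0 : (0 : ↥Δ) ∈ Subtype.val ⁻¹' O := by
        rw [hOeq]; exact H.1.zero_mem
      exact h0
    obtain ⟨t, ht⟩ := hclosed.isCompact.elim_finite_subcover _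
      (fun d : ↥Δ => (isOpenMap_add_left (d : G)) O hOopen) hcover
    apply Set.Finite.subset (((t.finite_toSet.image Subtype.val).image
      (QuotientAddGroup.mk : G → G ⧸ MG H)))
    rintro _ ⟨g, hg, rfl⟩
    have := ht hg
    rw [mem_iUnion₂] at this
    obtain ⟨d, hd, x, hxO, hxg⟩ := this
    have hgd : g - (d : G) ∈ Δ := Δ.sub_mem hg d.2
    have hsub : g - (d : G) ∈ MG H := by
      rw [← SetLike.mem_coe, hMGset]
      refine ⟨⟨g - (d : G), hgd⟩, ?_, rfl⟩
      have hmem : (⟨g - (d : G), hgd⟩ : ↥Δ) ∈ Subtype.val ⁻¹' O := by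
        simp only [mem_preimage]
        rw [show g - (d : G) = x by rw [sub_eq_iff_eq_add']; exact hxg.symm]
        exact hxO
      rw [hOeq] at hmem
      exact hmem
    have hmk : ((g : G ⧸ MG H)) = (((d : G) : G ⧸ MG H)) := by
      rw [QuotientAddGroup.eq_iff_sub_mem]
      exact hsub
    rw [hmk]
    exact ⟨(d : G), ⟨d, hd, rfl⟩, rfl⟩
  -- apply the key lemma to each quotient
  have hkey := fun H : J => key (φH H) (hφHcont H) (hφHsurj H) (hkerfin H)
  choose Ψ hΨcont hΨadd hΨ0 hΨφ hΨsurj using hkey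
  -- compatibility of the lifts
  have hcompat : ∀ (H1 H2 : J) (hle : MG H1 ≤ MG H2) (x : Fin n → ℝ),
      QuotientAddGroup.map (MG H1) (MG H2) (AddMonoidHom.id G)
        (fun g hg => hle hg) (Ψ H1 x) = Ψ H2 x := by
    intro H1 H2 hle x
    set ν := QuotientAddGroup.map (MG H1) (MG H2) (AddMonoidHom.id G) (fun g hg => hle hg)
      with hν
    have hνmk : ∀ g : G, ν ((g : G ⧸ MG H1)) = ((g : G ⧸ MG H2)) := by
      intro g
      rw [hν]
      rfl
    have hνcont : Continuous ν := by
      rw [(QuotientAddGroup.isQuotientMap_mk (MG H1)).continuous_iff]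
      have hfe : ⇑ν ∘ (QuotientAddGroup.mk : G → G ⧸ MG H1)
          = (QuotientAddGroup.mk : G → G ⧸ MG H2) := funext fun g => hνmk g
      rw [hfe]
      exact QuotientAddGroup.continuous_mk
    have hφν : ∀ q : QM H1, φH H2 (ν q) = φH H1 q := by
      intro q
      obtain ⟨g, rfl⟩ := QuotientAddGroup.mk_surjective q
      rw [hνmk g, hφHmk, hφHmk]
    set d : (Fin n → ℝ) → QM H2 := fun y => ν (Ψ H1 y) - Ψ H2 y with hd
    have hdcont : Continuous d := (hνcont.comp (hΨcont H1)).sub (hΨcont H2)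
    have hdker : ∀ y, d y ∈ ((φH H2).ker : Set (QM H2)) := by
      intro y
      rw [SetLike.mem_coe, AddMonoidHom.mem_ker, hd]
      simp only []
      rw [map_sub, hφν, hΨφ H1, hΨφ H2, sub_self]
    have hd0 : d 0 = 0 := by
      rw [hd]
      simp only []
      rw [hΨ0 H1, hΨ0 H2, map_zero, sub_zero]
    have hconst := const_of_finite_range hdcont (hkerfin H2) hdker x 0
    rw [hd0] at hconst
    have h2 : ν (Ψ H1 x) - Ψ H2 x = 0 := hconst
    rw [sub_eq_zero] at h2
    exact h2
  -- a small open subgroup of Δ fitting into U around δ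
  have hU0open : IsOpen ({x : G | δ + x ∈ U}) :=
    hUopen.preimage (continuous_const.add continuous_id)
  have hδ0 : (0 : ↥Δ) ∈ (Subtype.val ⁻¹' {x : G | δ + x ∈ U} : Set ↥Δ) := by
    simp only [mem_preimage, AddSubgroup.coe_zero, mem_setOf_eq, add_zero]
    exact hUδ
  have hW₀ : (Subtype.val ⁻¹' {x : G | δ + x ∈ U} : Set ↥Δ) ∈ 𝓝 (0 : ↥Δ) :=
    IsOpen.mem_nhds (hU0open.preimage continuous_subtype_val) hδ0
  obtain ⟨K, ⟨hK0, hKclopen⟩, hKsub⟩ := (nhds_basis_clopen (0 : ↥Δ)).mem_iff.mp hW₀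
  obtain ⟨Hsub, hHsubK⟩ :=
    IsTopologicalAddGroup.exist_openAddSubgroup_sub_clopen_nhds_of_zero hKclopen hK0
  let HN : J := ⟨Hsub.toAddSubgroup, Hsub.isOpen⟩
  have hHNU : ∀ y : ↥Δ, y ∈ HN.1 → δ + (y : G) ∈ U := by
    intro y hy
    have := hKsub (hHsubK hy)
    simpa only [mem_preimage, mem_setOf_eq] using this
  -- the element v
  obtain ⟨v, hv⟩ := hΨsurj HN (hConn HN) ((δ : G ⧸ MG HN))
  -- reconstructing a one-parameter subgroup of G
  let ι : G → ∀ H : J, QM H := fun g H => (g : G ⧸ MG H)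
  have hιcont : Continuous ι := continuous_pi fun H => QuotientAddGroup.continuous_mk
  have hιinj : Function.Injective ι := by
    intro g g' hgg
    have hALL : ∀ H : J, g - g' ∈ MG H := by
      intro H
      rw [← QuotientAddGroup.eq_iff_sub_mem]
      exact congrFun hgg H
    have hdΔ : g - g' ∈ Δ := by
      have := hALL ⟨⊤, by rw [AddSubgroup.coe_top]; exact isOpen_univ⟩
      exact hMGle _ this
    by_contra hne
    have hne' : g - g' ≠ 0 := sub_ne_zero.mpr (fun h => hne (by rw [h]))
    set dd : ↥Δ := ⟨g - g', hdΔ⟩ with hdd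
    have hddne : dd ≠ 0 := by
      intro h
      exact hne' (congrArg Subtype.val h)
    have hcompl : ({dd}ᶜ : Set ↥Δ) ∈ 𝓝 (0 : ↥Δ) :=
      IsOpen.mem_nhds isClosed_singleton.isOpen_compl (by simp [hddne.symm])
    obtain ⟨K', ⟨hK0', hKclopen'⟩, hKsub'⟩ := (nhds_basis_clopen (0 : ↥Δ)).mem_iff.mp hcompl
    obtain ⟨H', hH'K⟩ :=
      IsTopologicalAddGroup.exist_openAddSubgroup_sub_clopen_nhds_of_zero hKclopen' hK0'
    have hmem := hALL ⟨H'.toAddSubgroup, H'.isOpen⟩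
    rw [AddSubgroup.mem_map] at hmem
    obtain ⟨y, hy, hyval⟩ := hmem
    have hydd : y = dd := by
      apply Subtype.val_injective
      exact hyval
    rw [hydd] at hy
    exact hKsub' (hH'K hy) rfl
  have hemb := hιcont.isClosedEmbedding hιinj
  let Θ : ℝ → ∀ H : J, QM H := fun t H => Ψ H (t • v)
  have hrange : ∀ t : ℝ, ∃ g : G, ι g = Θ t := by
    intro t
    set C : J → Set G := fun H =>
      (QuotientAddGroup.mk : G → G ⧸ MG H) ⁻¹' {Ψ H (t • v)} with hC
    have hCne : ∀ H : J, (C H).Nonempty := by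
      intro H
      obtain ⟨g, hg⟩ := QuotientAddGroup.mk_surjective (Ψ H (t • v))
      exact ⟨g, by rw [hC]; simp only [mem_preimage, mem_singleton_iff]; exact hg⟩
    have hCclosed : ∀ H : J, IsClosed (C H) :=
      fun H => isClosed_singleton.preimage QuotientAddGroup.continuous_mk
    have hCcpt : ∀ H : J, IsCompact (C H) := fun H => (hCclosed H).isCompact
    have hCdir : Directed (fun x1 x2 : Set G => x1 ⊇ x2) C := by
      intro H1 H2
      have hop : IsOpen ((H1.1 ⊓ H2.1 : AddSubgroup ↥Δ) : Set ↥Δ) := by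
        rw [AddSubgroup.coe_inf]
        exact H1.2.inter H2.2
      refine ⟨⟨H1.1 ⊓ H2.1, hop⟩, ?_, ?_⟩
      · intro g hg
        simp only [hC, mem_preimage, mem_singleton_iff] at hg ⊢
        have hle : MG ⟨H1.1 ⊓ H2.1, hop⟩ ≤ MG H1 :=
          AddSubgroup.map_mono inf_le_left
        rw [← hcompat _ _ hle (t • v), ← hg]
        rfl
      · intro g hg
        simp only [hC, mem_preimage, mem_singleton_iff] at hg ⊢
        have hle : MG ⟨H1.1 ⊓ H2.1, hop⟩ ≤ MG H2 :=
          AddSubgroup.map_mono inf_le_right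
        rw [← hcompat _ _ hle (t • v), ← hg]
        rfl
    obtain ⟨g, hg⟩ :=
      IsCompact.nonempty_iInter_of_directed_nonempty_isCompact_isClosed C hCdir hCne hCcpt
        hCclosed
    refine ⟨g, funext fun H => ?_⟩
    have := mem_iInter.mp hg H
    simpa only [hC, mem_preimage, mem_singleton_iff] using this
  set r : ℝ → G := fun t => (hrange t).choose with hr
  have hrspec : ∀ t, ι (r t) = Θ t := fun t => (hrange t).choose_spec
  have hrmk : ∀ (t : ℝ) (H : J), ((r t : G ⧸ MG H)) = Ψ H (t • v) :=
    fun t H => congrFun (hrspec t) H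
  have hradd : ∀ s t : ℝ, r (s + t) = r s + r t := by
    intro s t
    apply hιinj
    funext H
    show ((r (s+t) : G ⧸ MG H)) = ((r s + r t : G) : G ⧸ MG H)
    have h1 : ((r s + r t : G) : G ⧸ MG H) = ((r s : G ⧸ MG H)) + ((r t : G ⧸ MG H)) := rfl
    rw [h1, hrmk, hrmk, hrmk, add_smul, hΨadd]
  have hrcont : Continuous r := by
    rw [hemb.toIsEmbedding.continuous_iff]
    have hfe : ι ∘ r = Θ := funext fun t => hrspec t
    rw [hfe]
    exact continuous_pi fun H => (hΨcont H).comp (continuous_id.smul continuous_const)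
  -- conclusion
  set z : G := r 1 with hz
  have hz1 : ((z : G ⧸ MG HN)) = ((δ : G ⧸ MG HN)) := by
    rw [hz, hrmk 1 HN, one_smul, hv]
  have hzδ : z - δ ∈ MG HN := by
    rw [← QuotientAddGroup.eq_iff_sub_mem]
    exact hz1
  rw [AddSubgroup.mem_map] at hzδ
  obtain ⟨y, hy, hyval⟩ := hzδ
  have hyval' : (y : G) = z - δ := hyval
  have hzU : z ∈ U := by
    have := hHNU y hy
    rw [hyval'] at this
    have h2 : δ + (z - δ) = z := by abel
    rwa [h2] at this
  have hzΔ : z ∈ Δ := by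
    have : z = δ + (y : G) := by rw [hyval']; abel
    rw [this]
    exact Δ.add_mem hδmem y.2
  have hzexp : z ∈ expImg G := by
    refine ⟨⟨AddMonoidHom.mk' r hradd, hrcont⟩, rfl⟩
  exact ⟨z, hzU, hzΔ, hzexp⟩
end

section
/- Let G be a torus-free protorus and let L(G) be the set of profinite subgroups Δ ⊆ G such that G/Δ is a torus. If Δ ∈ L(G) and n is a nonzero integer, then the preimage μₙ⁻¹(Δ) under multiplication-by-n again lies in L(G). -/
/-- If `Δ ∈ L(G)` for a torus-free protorus `G` and `n ≠ 0`, then `μₙ⁻¹(Δ) ∈ L(G)`. -/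
theorem stmt7 {G : Type} [AddCommGroup G] [TopologicalSpace G] [IsTopologicalAddGroup G]
    [CompactSpace G] [T2Space G] [ConnectedSpace G]
    (htf : TorusFree G) (Δ : AddSubgroup G) (hΔ : IsTQS Δ) (n : ℤ) (hn : n ≠ 0) :
    IsTQS (Δ.comap (smulAddHom ℤ G n)) := by
  obtain ⟨hclosed, htd, m, e, he, he'⟩ := hΔ
  haveI : Fact ((0:ℝ) < 1) := ⟨zero_lt_one⟩
  set T := (Fin m → AddCircle (1 : ℝ)) with hT
  let φ : G →+ T := e.toAddMonoidHom.comp (QuotientAddGroup.mk' Δ)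
  have hφcont : Continuous φ := he.comp continuous_quot_mk
  have hφker : ∀ g : G, φ g = 0 ↔ g ∈ Δ := by
    intro g
    constructor
    · intro h
      have h0 : ((g : G ⧸ Δ)) = 0 := by
        apply e.injective
        rw [map_zero]
        exact h
      exact (QuotientAddGroup.eq_zero_iff g).mp h0
    · intro h
      have h0 : ((g : G ⧸ Δ)) = 0 := (QuotientAddGroup.eq_zero_iff g).mpr h
      show e ((g : G ⧸ Δ)) = 0
      rw [h0, map_zero]
  have hφsurj : Function.Surjective φ :=
    e.surjective.comp (QuotientAddGroup.mk'_surjective Δ)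
  -- the torsion set in the circle
  set S₀ : Set (AddCircle (1:ℝ)) := {u | n • u = 0} with hS₀
  have hS₀fin : S₀.Finite := by
    have hsub : S₀ ⊆ ⋃ d ∈ n.natAbs.divisors, {u : AddCircle (1:ℝ) | addOrderOf u = d} := by
      intro u hu
      have h1 : n.natAbs • u = 0 := by
        have : ((n.natAbs : ℤ)) • u = 0 ∨ (-(n.natAbs : ℤ)) • u = 0 := by
          rcases Int.natAbs_eq n with h | h
          · left; rw [← h]; exact hu
          · right; rw [← h]; exact hu
        rcases this with h | h
        · rwa [natCast_zsmul] at h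
        · rw [neg_zsmul, neg_eq_zero, natCast_zsmul] at h; exact h
      have h2 : addOrderOf u ∣ n.natAbs := addOrderOf_dvd_of_nsmul_eq_zero h1
      have h3 : addOrderOf u ∈ n.natAbs.divisors :=
        Nat.mem_divisors.mpr ⟨h2, Int.natAbs_ne_zero.mpr hn⟩
      exact Set.mem_biUnion h3 rfl
    exact Set.Finite.subset
      (n.natAbs.divisors.finite_toSet.biUnion fun d hd =>
        AddCircle.finite_setOfPred_addOrderOf_eq (1:ℝ) (Nat.pos_of_mem_divisors hd)) hsub
  have hS₀td : IsTotallyDisconnected S₀ := by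
    haveI : Finite ↥S₀ := hS₀fin.to_subtype
    exact totallyDisconnectedSpace_subtype_iff.mp inferInstance
  have hμcont : Continuous (fun g : G => n • g) := continuous_zsmul n
  refine ⟨hclosed.preimage hμcont, ?_, ?_⟩
  · -- totally disconnected
    have htdΔ : IsTotallyDisconnected (Δ : Set G) := totallyDisconnectedSpace_subtype_iff.mp htd
    suffices h : IsTotallyDisconnected ((Δ.comap (smulAddHom ℤ G n) : Set G)) from
      totallyDisconnectedSpace_subtype_iff.mpr h
    intro t hts htpre x hx y hy
    have key : ∀ g ∈ t, φ g = φ x := by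
      intro g hg
      funext i
      have hci : Continuous (fun a : G => φ a i) := (continuous_apply i).comp hφcont
      have hsub : (fun a : G => φ a i) '' t ⊆ S₀ := by
        rintro - ⟨a, ha, rfl⟩
        have hmem : n • a ∈ Δ := hts ha
        show n • (φ a i) = 0
        have h0 : φ (n • a) = 0 := (hφker _).mpr hmem
        calc n • φ a i = φ (n • a) i := by rw [map_zsmul]; rfl
          _ = 0 := by rw [h0]; rfl
      exact hS₀td _ hsub (htpre.image _ hci.continuousOn)
        ⟨g, hg, rfl⟩ ⟨x, hx, rfl⟩
    have hsub : ((fun g => -x + g) '' t) ⊆ (Δ : Set G) := by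
      rintro - ⟨g, hg, rfl⟩
      have : φ (-x + g) = 0 := by
        rw [map_add, map_neg, key g hg, neg_add_cancel]
      exact (hφker _).mp this
    have hpc : IsPreconnected ((fun g => -x + g) '' t) :=
      htpre.image _ (continuous_const.add continuous_id).continuousOn
    have := htdΔ _ hsub hpc ⟨x, hx, rfl⟩ ⟨y, hy, rfl⟩
    exact add_left_cancel this
  · -- quotient is a torus
    refine ⟨m, ?_⟩
    let ψ : G →+ T := (smulAddHom ℤ T n).comp φ
    have hψcont : Continuous ψ := (continuous_zsmul n).comp hφcont
    have hψsurj : Function.Surjective ψ := by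
      intro t0
      obtain ⟨g, hg⟩ := hφsurj (fun i => DivisibleBy.div (t0 i) n)
      refine ⟨g, ?_⟩
      show n • φ g = t0
      rw [hg]
      funext i
      exact DivisibleBy.div_cancel (t0 i) hn
    have hker : Δ.comap (smulAddHom ℤ G n) = ψ.ker := by
      ext g
      rw [AddSubgroup.mem_comap, AddMonoidHom.mem_ker]
      show n • g ∈ Δ ↔ n • φ g = 0
      rw [← map_zsmul φ, hφker]
    rw [hker]
    let e2 := QuotientAddGroup.quotientKerEquivOfSurjective ψ hψsurj
    have hcont : Continuous e2 := by
      rw [(QuotientAddGroup.isQuotientMap_mk ψ.ker).continuous_iff]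
      exact hψcont
    exact ⟨e2, hcont, (Continuous.homeoOfEquivCompactToT2 (f := e2.toEquiv) hcont).symm.continuous⟩
end

section
/- Any two profinite subgroups Δ₁, Δ₂ of a torus-free protorus G which both induce torus quotients are isogenous: there exist nonzero integers k, l and morphisms Δ₁ → Δ₂ (multiplication by k) and Δ₂ → Δ₁ (multiplication by l) whose images have finite index. -/
/- ## Auxiliary lemmas -/

section Circle

/-- Norm of a real number of absolute value at most `1/2`, viewed in `AddCircle 1`. -/
lemma aux_norm_coe {s : ℝ} (h : |s| ≤ 1 / 2) : ‖(s : AddCircle (1 : ℝ))‖ = |s| :=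
  (AddCircle.norm_coe_eq_abs_iff 1 one_ne_zero).mpr (by simpa using h)

/-- Every element of `AddCircle 1` has a representative of absolute value `≤ 1/2`
realising the norm. -/
lemma aux_exists_rep (x : AddCircle (1 : ℝ)) :
    ∃ s : ℝ, (s : AddCircle (1 : ℝ)) = x ∧ |s| ≤ 1 / 2 ∧ ‖x‖ = |s| := by
  induction x using QuotientAddGroup.induction_on with
  | H r =>
    refine ⟨r - round r, ?_, abs_sub_round r, ?_⟩
    · have : ((round r : ℝ) : AddCircle (1 : ℝ)) = 0 := by
        rw [AddCircle.coe_eq_zero_iff]; exact ⟨round r, by simp⟩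
      have h2 := AddCircle.coe_add (p := (1 : ℝ)) (r - round r) (round r)
      rw [sub_add_cancel] at h2
      rw [h2, this, add_zero]
    · have h1 : ((r : ℝ) : AddCircle (1 : ℝ)) = ((r - round r : ℝ) : AddCircle (1 : ℝ)) := by
        have : ((round r : ℝ) : AddCircle (1 : ℝ)) = 0 := by
          rw [AddCircle.coe_eq_zero_iff]; exact ⟨round r, by simp⟩
        have h2 := AddCircle.coe_add (p := (1 : ℝ)) (r - round r) (round r)
        rw [sub_add_cancel] at h2
        rw [h2, this, add_zero]
      rw [h1, aux_norm_coe (abs_sub_round r)]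

/-- Doubling law for small elements of the circle. -/
lemma aux_double {x : AddCircle (1 : ℝ)} (h : ‖x‖ ≤ 1 / 4) : ‖(2 : ℕ) • x‖ = 2 * ‖x‖ := by
  obtain ⟨s, rfl, hs, hns⟩ := aux_exists_rep x
  have h2 : (2 : ℕ) • ((s : ℝ) : AddCircle (1 : ℝ)) = ((2 • s : ℝ) : AddCircle (1 : ℝ)) :=
    (AddCircle.coe_nsmul (p := (1 : ℝ))).symm
  have h2s : (2 : ℕ) • s = 2 * s := by rw [nsmul_eq_mul]; norm_num
  have habs : |(2 : ℕ) • s| ≤ 1 / 2 := by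
    rw [h2s, abs_mul]
    rw [hns] at h
    rw [abs_two]
    nlinarith [abs_nonneg s]
  rw [h2, aux_norm_coe habs, hns, h2s, abs_mul, abs_two]

/-- The circle has no small subgroups: any subgroup inside the ball of radius `1/8`
is trivial. -/
lemma aux_circle_nss (H : AddSubgroup (AddCircle (1 : ℝ))) (hH : ∀ y ∈ H, ‖y‖ < 1 / 8) :
    ∀ x ∈ H, x = 0 := by
  intro x hx
  by_contra hx0
  have hpos : 0 < ‖x‖ := norm_pos_iff.mpr hx0
  have key : ∀ j : ℕ, ‖(2 ^ j : ℕ) • x‖ = 2 ^ j * ‖x‖ := by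
    intro j
    induction j with
    | zero => simp
    | succ j ih =>
      have hmem : (2 ^ j : ℕ) • x ∈ H := AddSubgroup.nsmul_mem H hx _
      have hlt : ‖(2 ^ j : ℕ) • x‖ < 1 / 8 := hH _ hmem
      have hle : ‖(2 ^ j : ℕ) • x‖ ≤ 1 / 4 := by linarith
      have : (2 ^ (j + 1) : ℕ) • x = (2 : ℕ) • ((2 ^ j : ℕ) • x) := by
        rw [← mul_nsmul]; ring_nf
      rw [this, aux_double hle, ih]; ring
  obtain ⟨j, hj⟩ := pow_unbounded_of_one_lt ((1 / 8) / ‖x‖) (by norm_num : (1 : ℝ) < 2)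
  have hmem : (2 ^ j : ℕ) • x ∈ H := AddSubgroup.nsmul_mem H hx _
  have := hH _ hmem
  rw [key j] at this
  have : (1 / 8 : ℝ) / ‖x‖ < 2 ^ j := hj
  have h8 : (1 / 8 : ℝ) < 2 ^ j * ‖x‖ := by
    rw [div_lt_iff₀ hpos] at this; linarith
  linarith [hH _ hmem, key j]

/-- The torus `𝕋ⁿ` has no small subgroups. -/
lemma aux_torus_nss (n : ℕ) :
    ∃ U : Set (Fin n → AddCircle (1 : ℝ)), IsOpen U ∧ 0 ∈ U ∧
      ∀ H : AddSubgroup (Fin n → AddCircle (1 : ℝ)), (H : Set _) ⊆ U → H = ⊥ := by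
  refine ⟨⋂ i, {f | ‖f i‖ < 1 / 8}, ?_, ?_, ?_⟩
  · exact isOpen_iInter_of_finite fun i =>
      (isOpen_lt (by fun_prop) continuous_const)
  · simp
  · intro H hHU
    rw [eq_bot_iff]
    intro x hx
    rw [AddSubgroup.mem_bot]
    funext i
    have := aux_circle_nss (AddSubgroup.map (Pi.evalAddMonoidHom (fun _ => AddCircle (1 : ℝ)) i) H)
      (by
        rintro _ ⟨z, hz, rfl⟩
        have := hHU hz
        simp only [Set.mem_iInter, Set.mem_setOf_eq] at this
        exact this i)
      (x i) ⟨x, hx, rfl⟩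
    simpa using this

end Circle

section OpenSub

/-- In a compact totally disconnected group, every neighbourhood of `0` contains an
open subgroup. -/
lemma aux_open_subgroup {Δ : Type*} [AddGroup Δ] [TopologicalSpace Δ] [IsTopologicalAddGroup Δ]
    [CompactSpace Δ] [T2Space Δ] [TotallyDisconnectedSpace Δ] {U : Set Δ} (hU : IsOpen U)
    (h0 : (0 : Δ) ∈ U) : ∃ V : OpenAddSubgroup Δ, (V : Set Δ) ⊆ U := by
  obtain ⟨W, hWc, hW0, hWU⟩ := compact_exists_isClopen_in_isOpen hU h0
  obtain ⟨V, hV⟩ := IsTopologicalAddGroup.exist_openAddSubgroup_sub_clopen_nhds_of_zero hWc hW0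
  exact ⟨V, hV.trans hWU⟩

/-- Quotients by larger subgroups of a group with finite quotient are finite. -/
lemma aux_quot_mono {A : Type*} [AddCommGroup A] {H K : AddSubgroup A} (h : H ≤ K)
    (hf : Finite (A ⧸ H)) : Finite (A ⧸ K) := by
  refine Finite.of_surjective (QuotientAddGroup.map H K (AddMonoidHom.id A) (by simpa using h)) ?_
  intro q
  induction q using QuotientAddGroup.induction_on with
  | H a => exact ⟨QuotientAddGroup.mk a, by simp [QuotientAddGroup.map_mk]⟩

end OpenSub

section Inter

variable {G : Type} [AddCommGroup G] [TopologicalSpace G] [IsTopologicalAddGroup G]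
  [CompactSpace G] [T2Space G]

/-- Two profinite subgroups with torus quotients have commensurable intersection:
`Δ₂ ∩ Δ₁` has finite index in `Δ₁`. -/
lemma aux_inter_finite (Δ₁ Δ₂ : AddSubgroup G) (h₁ : IsTQS Δ₁) (h₂ : IsTQS Δ₂) :
    Finite (Δ₁ ⧸ Δ₂.addSubgroupOf Δ₁) := by
  obtain ⟨hc₁, htd₁, -⟩ := h₁
  obtain ⟨hc₂, htd₂, n, e, hec, -⟩ := h₂
  haveI : CompactSpace Δ₁ := isCompact_iff_compactSpace.mp hc₁.isCompact
  haveI := htd₁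
  set ψ : Δ₁ →+ (Fin n → AddCircle (1 : ℝ)) :=
    e.toAddMonoidHom.comp ((QuotientAddGroup.mk' Δ₂).comp Δ₁.subtype) with hψ
  have hψc : Continuous ψ := hec.comp (continuous_quot_mk.comp continuous_subtype_val)
  obtain ⟨U, hUo, hU0, hUn⟩ := aux_torus_nss n
  obtain ⟨V, hV⟩ := aux_open_subgroup (hψc.isOpen_preimage U hUo)
    (show (0 : Δ₁) ∈ ψ ⁻¹' U by simp [Set.mem_preimage, map_zero, hU0])
  have hVle : V.toAddSubgroup ≤ Δ₂.addSubgroupOf Δ₁ := by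
    intro v hv
    have h1 : AddSubgroup.map ψ V.toAddSubgroup = ⊥ := by
      apply hUn
      rintro _ ⟨w, hw, rfl⟩
      exact hV hw
    have h2 : ψ v = 0 := by
      have hm : ψ v ∈ AddSubgroup.map ψ V.toAddSubgroup := ⟨v, hv, rfl⟩
      rw [h1] at hm
      simpa using hm
    have h3 : QuotientAddGroup.mk' Δ₂ (v : G) = 0 := by
      apply e.injective
      simpa [hψ] using h2
    rw [AddSubgroup.mem_addSubgroupOf]
    exact (QuotientAddGroup.eq_zero_iff _).mp h3
  have : Finite (Δ₁ ⧸ V.toAddSubgroup) :=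
    AddSubgroup.quotient_finite_of_isOpen _ V.isOpen
  exact aux_quot_mono hVle this

end Inter

section Div

variable {G : Type} [AddCommGroup G] [TopologicalSpace G] [IsTopologicalAddGroup G]
  [CompactSpace G] [T2Space G] [ConnectedSpace G]

/-- A protorus possessing a profinite subgroup with torus quotient is divisible. -/
lemma aux_smul_surjective (Δ : AddSubgroup G) (hΔ : IsTQS Δ) (m : ℕ) (hm : 0 < m) (g : G) :
    ∃ h : G, m • h = g := by
  obtain ⟨hcl, htd, n, e, hec, -⟩ := hΔ
  haveI : CompactSpace Δ := isCompact_iff_compactSpace.mp hcl.isCompact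
  haveI := htd
  -- Step 1: `G = mG + Δ`, using divisibility of the torus.
  have hdiv : ∀ t : AddCircle (1 : ℝ), ∃ s, m • s = t := by
    intro t
    induction t using QuotientAddGroup.induction_on with
    | H r =>
      refine ⟨((r / m : ℝ) : AddCircle (1 : ℝ)), ?_⟩
      rw [← AddCircle.coe_nsmul]
      congr 1
      rw [nsmul_eq_mul]
      field_simp
  have step1 : ∀ x : G, ∃ h : G, x - m • h ∈ Δ := by
    intro x
    choose f hf using hdiv
    set s : Fin n → AddCircle (1 : ℝ) := fun i => f (e (QuotientAddGroup.mk x) i) with hsdef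
    have hs : m • s = e (QuotientAddGroup.mk x) := funext fun i => hf _
    obtain ⟨h, hh⟩ := QuotientAddGroup.mk'_surjective Δ (e.symm s)
    refine ⟨h, ?_⟩
    have key : (QuotientAddGroup.mk x : G ⧸ Δ) = QuotientAddGroup.mk (m • h) := by
      apply e.injective
      have h1 : (QuotientAddGroup.mk (m • h) : G ⧸ Δ) = m • QuotientAddGroup.mk h :=
        (QuotientAddGroup.mk' Δ).map_nsmul m h
      rw [h1]
      have h2 : (QuotientAddGroup.mk h : G ⧸ Δ) = e.symm s := hh
      rw [h2, map_nsmul, AddEquiv.apply_symm_apply, hs]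
    exact QuotientAddGroup.eq_iff_sub_mem.mp key
  -- Step 2: the image of multiplication by `m` is everything.
  set φ : G →+ G := smulAddHom ℕ G m with hφ
  set N : AddSubgroup G := φ.range with hN
  have hNc : IsClosed (N : Set G) := by
    have himg : (N : Set G) = (fun x : G => m • x) '' Set.univ := by
      ext y
      simp [hN, hφ, AddMonoidHom.mem_range, eq_comm]
    rw [himg]
    exact (isCompact_univ.image (continuous_nsmul m)).isClosed
  haveI : IsClosed (N : Set G) := hNc
  haveI : T3Space (G ⧸ N) := QuotientAddGroup.instT3Space N
  haveI : ConnectedSpace (G ⧸ N) := by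
    have hsc : IsConnected (Set.univ : Set (G ⧸ N)) := by
      have : (Set.univ : Set (G ⧸ N)) =
          (QuotientAddGroup.mk : G → G ⧸ N) '' Set.univ := by
        rw [Set.image_univ]
        exact (QuotientAddGroup.mk'_surjective N).range_eq.symm
      rw [this]
      exact isConnected_univ.image _ continuous_quot_mk.continuousOn
    exact connectedSpace_iff_univ.mpr hsc
  set φbar : Δ →+ G ⧸ N := (QuotientAddGroup.mk' N).comp Δ.subtype with hφbar
  have hφbarc : Continuous φbar := continuous_quot_mk.comp continuous_subtype_val
  have hφbars : Function.Surjective φbar := by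
    intro q
    induction q using QuotientAddGroup.induction_on with
    | H x =>
      obtain ⟨h, hh⟩ := step1 x
      refine ⟨⟨x - m • h, hh⟩, ?_⟩
      show (QuotientAddGroup.mk (x - m • h) : G ⧸ N) = QuotientAddGroup.mk x
      rw [QuotientAddGroup.eq_iff_sub_mem]
      have heq : x - m • h - x = -(m • h) := by abel
      rw [heq]
      exact neg_mem ⟨h, rfl⟩
  have hQtriv : ∀ q : G ⧸ N, q = 0 := by
    intro q
    by_contra hq
    have hW : IsOpen ({q}ᶜ : Set (G ⧸ N)) := isOpen_compl_singleton
    have h0W : (0 : G ⧸ N) ∈ ({q}ᶜ : Set (G ⧸ N)) := by simpa using (Ne.symm hq)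
    obtain ⟨V, hV⟩ := aux_open_subgroup (hφbarc.isOpen_preimage _ hW)
      (show (0 : Δ) ∈ φbar ⁻¹' {q}ᶜ by simpa [Set.mem_preimage, map_zero] using h0W)
    set P : AddSubgroup (G ⧸ N) := AddSubgroup.map φbar V.toAddSubgroup with hP
    have hqP : q ∉ P := by
      rintro ⟨v, hv, hvq⟩
      exact (hV hv) hvq
    have hPc : IsClosed (P : Set (G ⧸ N)) := by
      have hPim : (P : Set (G ⧸ N)) = ⇑φbar '' (V.toAddSubgroup : Set Δ) :=
        AddSubgroup.coe_map φbar V.toAddSubgroup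
      rw [hPim]
      exact ((V.isClosed.isCompact).image hφbarc).isClosed
    haveI : Finite (Δ ⧸ V.toAddSubgroup) :=
      AddSubgroup.quotient_finite_of_isOpen _ V.isOpen
    have hfinQ : Finite ((G ⧸ N) ⧸ P) := by
      refine Finite.of_surjective
        (QuotientAddGroup.map V.toAddSubgroup P φbar (show V.toAddSubgroup ≤ P.comap φbar from fun v hv => ⟨v, hv, rfl⟩)) ?_
      intro x
      induction x using QuotientAddGroup.induction_on with
      | H y =>
        obtain ⟨d, hd⟩ := hφbars y
        exact ⟨QuotientAddGroup.mk d, by simp [QuotientAddGroup.map_mk, hd]⟩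
    haveI : P.FiniteIndex := AddSubgroup.finiteIndex_of_finite_quotient
    have hPo : IsOpen (P : Set (G ⧸ N)) :=
      AddSubgroup.isOpen_of_isClosed_of_finiteIndex P hPc
    have huniv : (P : Set (G ⧸ N)) = Set.univ :=
      IsClopen.eq_univ ⟨hPc, hPo⟩ ⟨0, P.zero_mem⟩
    exact hqP (show q ∈ (P : Set (G ⧸ N)) from huniv ▸ Set.mem_univ q)
  have hgN : g ∈ N := by
    have := hQtriv (QuotientAddGroup.mk g)
    exact (QuotientAddGroup.eq_zero_iff g).mp this
  obtain ⟨h, hh⟩ := hgN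
  exact ⟨h, hh⟩

/-- For a profinite subgroup `Δ` with torus quotient, `Δ / mΔ` is finite. -/
lemma aux_quot_smul_finite (Δ : AddSubgroup G) (hΔ : IsTQS Δ) (m : ℕ) (hm : 0 < m) :
    Finite (Δ ⧸ (AddSubgroup.map (smulAddHom ℤ G (m : ℤ)) Δ).addSubgroupOf Δ) := by
  have hsurj := aux_smul_surjective Δ hΔ m hm
  obtain ⟨hcl, htd, n, e, hec, -⟩ := hΔ
  set K : AddSubgroup G := AddSubgroup.comap (smulAddHom ℕ G m) Δ with hK
  have hKmem : ∀ x : G, x ∈ K ↔ m • x ∈ Δ := fun x => Iff.rfl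
  -- the m-torsion of the circle is finite
  have hS₀ : {u : AddCircle (1 : ℝ) | m • u = 0} ⊆
      Set.range (fun j : Fin m => ((((j : ℕ) : ℝ) / (m : ℝ) : ℝ) : AddCircle (1 : ℝ))) := by
    intro u hu
    induction u using QuotientAddGroup.induction_on with
    | H r =>
      have h1 : ((m • r : ℝ) : AddCircle (1 : ℝ)) = 0 := by
        rw [AddCircle.coe_nsmul]; exact hu
      rw [AddCircle.coe_eq_zero_iff] at h1
      obtain ⟨z, hz⟩ := h1
      have hzr : (z : ℝ) = m * r := by
        rw [← nsmul_eq_mul, ← hz, zsmul_eq_mul, mul_one]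
      have hmz : (0 : ℤ) < m := by exact_mod_cast hm
      refine ⟨⟨(z % m).toNat, ?_⟩, ?_⟩
      · have h2 : z % m < m := Int.emod_lt_of_pos z hmz
        have h3 : 0 ≤ z % m := Int.emod_nonneg z (by positivity)
        omega
      · show (((((z % m).toNat : ℕ) : ℝ) / (m : ℝ) : ℝ) : AddCircle (1 : ℝ)) =
            ((r : ℝ) : AddCircle (1 : ℝ))
        rw [QuotientAddGroup.eq_iff_sub_mem]
        refine AddSubgroup.mem_zmultiples_iff.mpr ⟨-(z / m), ?_⟩
        have h3 : 0 ≤ z % m := Int.emod_nonneg z (by positivity)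
        have htn : (((z % m).toNat : ℕ) : ℝ) = ((z % m : ℤ) : ℝ) := by
          exact_mod_cast congrArg (Int.cast : ℤ → ℝ) (Int.toNat_of_nonneg h3)
        have hemod : ((z % m : ℤ) : ℝ) = (z : ℝ) - (m : ℝ) * ((z / m : ℤ) : ℝ) := by
          rw [Int.emod_def]; push_cast; ring
        have hmne : (m : ℝ) ≠ 0 := by positivity
        have hr : r = (z : ℝ) / (m : ℝ) := by
          field_simp [hzr]
          rw [hzr]; ring
        rw [zsmul_eq_mul, mul_one, htn, hemod, hr]
        push_cast
        field_simp
        ring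
  have hS₀fin : ({u : AddCircle (1 : ℝ) | m • u = 0}).Finite :=
    (Set.finite_range _).subset hS₀
  have hSfin : ({t : Fin n → AddCircle (1 : ℝ) | m • t = 0}).Finite := by
    have : {t : Fin n → AddCircle (1 : ℝ) | m • t = 0} ⊆
        Set.pi Set.univ fun _ => {u : AddCircle (1 : ℝ) | m • u = 0} := by
      intro t ht i _
      have := congrFun ht i
      simpa using this
    exact (Set.Finite.pi fun _ => hS₀fin).subset this
  -- the map `K → 𝕋ⁿ` has kernel `Δ` and torsion image, so `K/Δ` is finite
  set ψ : K →+ (Fin n → AddCircle (1 : ℝ)) :=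
    e.toAddMonoidHom.comp ((QuotientAddGroup.mk' Δ).comp K.subtype) with hψ
  have hker : ∀ x : K, ψ x = 0 ↔ (x : G) ∈ Δ := by
    intro x
    constructor
    · intro h
      have : QuotientAddGroup.mk' Δ (x : G) = 0 := by
        apply e.injective; simpa [hψ] using h
      exact (QuotientAddGroup.eq_zero_iff _).mp this
    · intro h
      show e ((QuotientAddGroup.mk' Δ) (K.subtype x)) = 0
      rw [show (QuotientAddGroup.mk' Δ) (K.subtype x) = 0 from
        (QuotientAddGroup.eq_zero_iff _).mpr h, map_zero]
  have htor : ∀ x : K, m • ψ x = 0 := by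
    intro x
    rw [← map_nsmul]
    have : ((m • x : K) : G) ∈ Δ := by
      have hx : (x : G) ∈ K := x.2
      rw [hKmem] at hx
      simpa using hx
    exact (hker _).mpr this
  set χ := QuotientAddGroup.lift (Δ.addSubgroupOf K) ψ
    (fun x hx => (hker x).mpr ((AddSubgroup.mem_addSubgroupOf).mp hx)) with hχ
  have hχinj : Function.Injective χ := by
    rw [injective_iff_map_eq_zero]
    intro a ha
    induction a using QuotientAddGroup.induction_on with
    | H x =>
      have : ψ x = 0 := ha
      rw [QuotientAddGroup.eq_zero_iff]
      exact (AddSubgroup.mem_addSubgroupOf).mpr ((hker x).mp this)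
  have hrange : Set.range χ ⊆ {t : Fin n → AddCircle (1 : ℝ) | m • t = 0} := by
    rintro _ ⟨a, rfl⟩
    induction a using QuotientAddGroup.induction_on with
    | H x => exact htor x
  have hKfin : Finite (K ⧸ Δ.addSubgroupOf K) := by
    haveI := (hSfin.subset hrange).to_subtype
    exact Finite.of_injective
      (fun a => (⟨χ a, Set.mem_range_self a⟩ : Set.range ⇑χ))
      (fun a b h => hχinj (congrArg Subtype.val h))
  -- multiplication by `m` maps `K` onto `Δ`, giving a surjection `K/Δ → Δ/mΔ`
  set μ : K →+ Δ := AddMonoidHom.mk'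
    (fun x => (⟨m • (x : G), (hKmem (x : G)).mp x.2⟩ : Δ))
    (fun x y => by
      ext
      simp [smul_add]) with hμ
  set M : AddSubgroup Δ := (AddSubgroup.map (smulAddHom ℤ G (m : ℤ)) Δ).addSubgroupOf Δ with hM
  have hρ0 : ∀ x ∈ Δ.addSubgroupOf K, (QuotientAddGroup.mk' M).comp μ x = 0 := by
    intro x hx
    have hxΔ : (x : G) ∈ Δ := (AddSubgroup.mem_addSubgroupOf).mp hx
    have hmem : μ x ∈ M := by
      rw [hM, AddSubgroup.mem_addSubgroupOf]
      exact ⟨(x : G), hxΔ, by simp [hμ, AddMonoidHom.mk'_apply, natCast_zsmul]⟩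
    exact (QuotientAddGroup.eq_zero_iff _).mpr hmem
  set ρ := QuotientAddGroup.lift (Δ.addSubgroupOf K) ((QuotientAddGroup.mk' M).comp μ) hρ0
    with hρ
  have hρsurj : Function.Surjective ρ := by
    intro q
    induction q using QuotientAddGroup.induction_on with
    | H d =>
      obtain ⟨g, hg⟩ := hsurj (d : G)
      have hgK : g ∈ K := by
        rw [hKmem, hg]; exact d.2
      refine ⟨QuotientAddGroup.mk (⟨g, hgK⟩ : K), ?_⟩
      have hμg : μ ⟨g, hgK⟩ = d := Subtype.ext (by simpa [hμ] using hg)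
      show QuotientAddGroup.mk' M (μ ⟨g, hgK⟩) = QuotientAddGroup.mk d
      rw [hμg]
      rfl
  exact Finite.of_surjective ρ hρsurj

end Div

/-- Any two profinite subgroups of a torus-free protorus inducing torus quotients are
isogenous: multiplication by suitable nonzero integers maps each into the other with
finite-index image. -/
theorem stmt10 {G : Type} [AddCommGroup G] [TopologicalSpace G] [IsTopologicalAddGroup G]
    [CompactSpace G] [T2Space G] [ConnectedSpace G]
    (htf : TorusFree G) (Δ₁ Δ₂ : AddSubgroup G) (h₁ : IsTQS Δ₁) (h₂ : IsTQS Δ₂) :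
    ∃ k l : ℤ, k ≠ 0 ∧ l ≠ 0 ∧
      AddSubgroup.map (smulAddHom ℤ G k) Δ₁ ≤ Δ₂ ∧
      AddSubgroup.map (smulAddHom ℤ G l) Δ₂ ≤ Δ₁ ∧
      Finite (Δ₂ ⧸ (AddSubgroup.map (smulAddHom ℤ G k) Δ₁).addSubgroupOf Δ₂) ∧
      Finite (Δ₁ ⧸ (AddSubgroup.map (smulAddHom ℤ G l) Δ₂).addSubgroupOf Δ₁) := by
  haveI hf12 : Finite (Δ₁ ⧸ Δ₂.addSubgroupOf Δ₁) := aux_inter_finite Δ₁ Δ₂ h₁ h₂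
  haveI hf21 : Finite (Δ₂ ⧸ Δ₁.addSubgroupOf Δ₂) := aux_inter_finite Δ₂ Δ₁ h₂ h₁
  haveI : (Δ₂.addSubgroupOf Δ₁).FiniteIndex :=
    AddSubgroup.finiteIndex_of_finite_quotient
  haveI : (Δ₁.addSubgroupOf Δ₂).FiniteIndex :=
    AddSubgroup.finiteIndex_of_finite_quotient
  set m₁ := (Δ₂.addSubgroupOf Δ₁).index with hm₁def
  set m₂ := (Δ₁.addSubgroupOf Δ₂).index with hm₂def
  have hm₁ : m₁ ≠ 0 := AddSubgroup.FiniteIndex.index_ne_zero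
  have hm₂ : m₂ ≠ 0 := AddSubgroup.FiniteIndex.index_ne_zero
  have key₁ : ∀ x ∈ Δ₁, m₁ • x ∈ Δ₂ := by
    intro x hx
    have h := AddSubgroup.nsmul_index_mem (Δ₂.addSubgroupOf Δ₁) (⟨x, hx⟩ : Δ₁)
    rw [AddSubgroup.mem_addSubgroupOf] at h
    simpa using h
  have key₂ : ∀ x ∈ Δ₂, m₂ • x ∈ Δ₁ := by
    intro x hx
    have h := AddSubgroup.nsmul_index_mem (Δ₁.addSubgroupOf Δ₂) (⟨x, hx⟩ : Δ₂)
    rw [AddSubgroup.mem_addSubgroupOf] at h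
    simpa using h
  refine ⟨(m₁ : ℤ), (m₂ : ℤ), by exact_mod_cast hm₁, by exact_mod_cast hm₂, ?_, ?_, ?_, ?_⟩
  · rintro _ ⟨x, hx, rfl⟩
    simpa [natCast_zsmul] using key₁ x hx
  · rintro _ ⟨x, hx, rfl⟩
    simpa [natCast_zsmul] using key₂ x hx
  · -- finite index of `m₁Δ₁` in `Δ₂`
    have hJ : AddSubgroup.map (smulAddHom ℤ G ((m₂ * m₁ : ℕ) : ℤ)) Δ₂ ≤
        AddSubgroup.map (smulAddHom ℤ G (m₁ : ℤ)) Δ₁ := by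
      rintro _ ⟨x, hx, rfl⟩
      refine ⟨m₂ • x, key₂ x hx, ?_⟩
      simp only [smulAddHom_apply, natCast_zsmul]
      rw [mul_nsmul]
    have h1 := aux_quot_smul_finite Δ₂ h₂ (m₂ * m₁)
      (Nat.pos_of_ne_zero (by positivity))
    exact aux_quot_mono
      (fun a ha => (AddSubgroup.mem_addSubgroupOf).mpr
        (hJ ((AddSubgroup.mem_addSubgroupOf).mp ha))) h1
  · -- finite index of `m₂Δ₂` in `Δ₁`
    have hJ : AddSubgroup.map (smulAddHom ℤ G ((m₁ * m₂ : ℕ) : ℤ)) Δ₁ ≤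
        AddSubgroup.map (smulAddHom ℤ G (m₂ : ℤ)) Δ₂ := by
      rintro _ ⟨x, hx, rfl⟩
      refine ⟨m₁ • x, key₁ x hx, ?_⟩
      simp only [smulAddHom_apply, natCast_zsmul]
      rw [mul_nsmul]
    have h1 := aux_quot_smul_finite Δ₁ h₁ (m₁ * m₂)
      (Nat.pos_of_ne_zero (by positivity))
    exact aux_quot_mono
      (fun a ha => (AddSubgroup.mem_addSubgroupOf).mpr
        (hJ ((AddSubgroup.mem_addSubgroupOf).mp ha))) h1
end

section
/- Let G be a torus-free protorus and Δ̂ = ∑_{Δ∈L(G)} Δ the union of all profinite subgroups inducing torus quotients. For each Δ ∈ L(G), the quotient Δ̂/Δ is isomorphic (as abstract group) to (ℚ/ℤ)^{dim G}, and G/Δ̂ is isomorphic as an abstract group to (ℝ/ℚ)^{dim G}. -/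
/-- The rationals as an additive subgroup of `ℝ`. -/
noncomputable def ratSub : AddSubgroup ℝ := (Rat.castHom ℝ).toAddMonoidHom.range

open AddSubgroup Set

local notation "𝕋" => AddCircle (1 : ℝ)

lemma intCoe_circle_zero (k : ℤ) : ((k : ℝ) : 𝕋) = 0 :=
  (AddCircle.coe_eq_zero_iff _).2 ⟨k, by simp⟩

lemma norm_coe_circle_eq {x : ℝ} (h : |x| < 1/2) : ‖(x : 𝕋)‖ = |x| := by
  rw [AddCircle.norm_eq]
  have hr : round ((1:ℝ)⁻¹ * x) = 0 := by
    rw [inv_one, one_mul, round_eq, Int.floor_eq_zero_iff]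
    rw [abs_lt] at h
    constructor <;> [linarith; linarith]
  rw [hr]
  simp

lemma norm_two_nsmul_circle {y : 𝕋} (h : ‖y‖ < 1/4) : ‖(2 : ℕ) • y‖ = 2 * ‖y‖ := by
  induction y using QuotientAddGroup.induction_on with
  | _ x₀ =>
    set x : ℝ := x₀ - round x₀ with hxdef
    have hx : (x : 𝕋) = (x₀ : 𝕋) := by
      have : ((x₀ : ℝ) : 𝕋) - ((x : ℝ) : 𝕋) = 0 := by
        rw [← AddCircle.coe_sub]
        have : x₀ - x = ((round x₀ : ℤ) : ℝ) := by rw [hxdef]; ring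
        rw [this, intCoe_circle_zero]
      linear_combination (norm := abel) -this
    have hnorm : ‖(x₀ : 𝕋)‖ = |x| := by
      rw [AddCircle.norm_eq]; simp [hxdef]
    rw [hnorm] at h ⊢
    have h2 : (2:ℕ) • ((x₀ : ℝ) : 𝕋) = ((2 * x : ℝ) : 𝕋) := by
      rw [← hx, ← AddCircle.coe_nsmul]
      norm_num
    rw [h2, norm_coe_circle_eq (by rw [abs_mul]; rw [abs_of_nonneg (by norm_num : (0:ℝ) ≤ 2)]; linarith), abs_mul,
      abs_of_nonneg (by norm_num : (0:ℝ) ≤ 2)]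

lemma circle_eq_zero_of_small {A : AddSubgroup 𝕋} (hA : ∀ a ∈ A, ‖a‖ < 1/4)
    {a : 𝕋} (ha : a ∈ A) : a = 0 := by
  by_contra hne
  have hpos : 0 < ‖a‖ := norm_pos_iff.mpr hne
  have key : ∀ j : ℕ, (2^j : ℕ) • a ∈ A ∧ ‖(2^j : ℕ) • a‖ = 2^j * ‖a‖ := by
    intro j
    induction j with
    | zero => simpa using ha
    | succ j ih =>
      have mem : (2^(j+1) : ℕ) • a ∈ A := A.nsmul_mem ha _
      refine ⟨mem, ?_⟩
      have h2 : (2^(j+1) : ℕ) • a = (2:ℕ) • ((2^j : ℕ) • a) := by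
        rw [← mul_nsmul]; ring_nf
      have hsm : ‖(2^j : ℕ) • a‖ < 1/4 := hA _ ih.1
      rw [h2, norm_two_nsmul_circle hsm, ih.2]
      ring
  obtain ⟨j, hj⟩ : ∃ j : ℕ, (1/4 : ℝ)/‖a‖ < 2^j := pow_unbounded_of_one_lt _ one_lt_two
  have : (1/4 : ℝ) < 2^j * ‖a‖ := by
    rw [div_lt_iff₀ hpos] at hj; linarith
  have := hA _ (key j).1
  rw [(key j).2] at this
  linarith

lemma subsingleton_of_finite_preconnected {X : Type*} [TopologicalSpace X] [T1Space X]
    {s : Set X} (hfin : s.Finite) (hconn : IsPreconnected s) : s.Subsingleton := by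
  intro a ha b hb
  by_contra hne
  obtain ⟨x, hxs, hx1, hx2⟩ := hconn ({a}ᶜ) ((s \ {a})ᶜ) isOpen_compl_singleton
    ((hfin.subset diff_subset).isClosed.isOpen_compl)
    (fun y hy => by
      by_cases h : y = a
      · right; simp [h]
      · left; exact h)
    ⟨b, hb, fun h => hne (by simpa using h.symm)⟩ ⟨a, ha, by simp⟩
  exact hx2 ⟨hxs, hx1⟩

lemma isTotallyDisconnected_of_finite_image {G H : Type*} [AddCommGroup G] [TopologicalSpace G]
    [IsTopologicalAddGroup G] [AddCommGroup H] [TopologicalSpace H] [T1Space H]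
    {Δ Δ' : AddSubgroup G} (htd : IsTotallyDisconnected (Δ : Set G))
    (f : G →+ H) (hf : Continuous f) (hker : ∀ g, f g = 0 ↔ g ∈ Δ)
    (hfin : (f '' (Δ' : Set G)).Finite) : IsTotallyDisconnected (Δ' : Set G) := by
  intro t hts htconn x hx y hy
  have himg : (f '' t).Subsingleton :=
    subsingleton_of_finite_preconnected (hfin.subset (Set.image_mono hts))
      (htconn.image f hf.continuousOn)
  have hconst : ∀ z ∈ t, f z = f x := fun z hz => himg ⟨z, hz, rfl⟩ ⟨x, hx, rfl⟩
  have huconn : IsPreconnected ((fun g => g - x) '' t) :=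
    htconn.image _ (continuous_id.sub continuous_const).continuousOn
  have husub : (fun g => g - x) '' t ⊆ (Δ : Set G) := by
    rintro _ ⟨z, hz, rfl⟩
    show z - x ∈ Δ
    rw [← hker, map_sub, hconst z hz, sub_self]
  have hsub := htd _ husub huconn
  have h1 : y - x ∈ (fun g => g - x) '' t := ⟨y, hy, rfl⟩
  have h2 : x - x ∈ (fun g => g - x) '' t := ⟨x, hx, rfl⟩
  have heq := hsub h1 h2
  have : y - x = 0 := by simpa using heq
  have : y = x := by
    have := sub_eq_zero.mp this
    exact this
  exact this.symm

lemma pi_mem_torsion_iff {ι : Type*} [Finite ι] {A : ι → Type*} [∀ i, AddCommGroup (A i)]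
    (x : ∀ i, A i) : x ∈ AddCommGroup.torsion (∀ i, A i) ↔
      ∀ i, x i ∈ AddCommGroup.torsion (A i) := by
  simp only [AddCommGroup.mem_torsion]
  constructor
  · intro h i
    obtain ⟨m, hm, he⟩ := isOfFinAddOrder_iff_nsmul_eq_zero.1 h
    exact isOfFinAddOrder_iff_nsmul_eq_zero.2 ⟨m, hm, by
      have := congrFun he i
      simpa using this⟩
  · intro h
    cases nonempty_fintype ι
    refine isOfFinAddOrder_iff_nsmul_eq_zero.2 ⟨∏ i, addOrderOf (x i), ?_, ?_⟩
    · exact Finset.prod_pos fun i _ => (h i).addOrderOf_pos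
    · funext i
      have hdvd : addOrderOf (x i) ∣ ∏ i, addOrderOf (x i) :=
        Finset.dvd_prod_of_mem _ (Finset.mem_univ i)
      have := addOrderOf_dvd_iff_nsmul_eq_zero.1 hdvd
      simpa using this

lemma finite_orderOf_eq_circle {d : ℕ} (hd : 0 < d) :
    {u : 𝕋 | addOrderOf u = d}.Finite := by
  haveI : Fact ((0:ℝ) < 1) := ⟨zero_lt_one⟩
  rw [← Set.finite_coe_iff]
  have e := AddCircle.setAddOrderOfEquiv (1 : ℝ) hd
  haveI : Finite ({m | m < d ∧ m.gcd d = 1} : Set ℕ) := by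
    rw [Set.finite_coe_iff]
    exact (Set.finite_Iio d).subset fun m hm => hm.1
  exact Finite.of_equiv _ e.symm

lemma finite_nsmul_ker_circle {m : ℕ} (hm : 0 < m) : {y : 𝕋 | m • y = 0}.Finite := by
  have hsub : {y : 𝕋 | m • y = 0} ⊆ ⋃ d ∈ m.divisors, {u : 𝕋 | addOrderOf u = d} := by
    intro y hy
    have hmem : addOrderOf y ∈ m.divisors :=
      Nat.mem_divisors.2 ⟨addOrderOf_dvd_iff_nsmul_eq_zero.2 hy, hm.ne'⟩
    exact Set.mem_biUnion hmem rfl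
  refine (Set.Finite.biUnion (Set.finite_mem_finset m.divisors) fun d hd => ?_).subset hsub
  exact finite_orderOf_eq_circle (Nat.pos_of_mem_divisors hd)

lemma circle_nsmul_surj {m : ℕ} (hm : 0 < m) :
    Function.Surjective (fun y : 𝕋 => m • y) := by
  intro y
  induction y using QuotientAddGroup.induction_on with
  | _ x =>
    refine ⟨((x / m : ℝ) : 𝕋), ?_⟩
    show m • ((x / m : ℝ) : 𝕋) = _
    rw [← AddCircle.coe_nsmul]
    congr 1
    rw [nsmul_eq_mul]; field_simp [(Nat.cast_pos (α := ℝ)).2 hm |>.ne']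

lemma torsion_image_of_profinite {G : Type} [AddCommGroup G] [TopologicalSpace G]
    [IsTopologicalAddGroup G] [CompactSpace G] [T2Space G]
    {Δ'' : AddSubgroup G} (hcl : IsClosed (Δ'' : Set G)) (htd : TotallyDisconnectedSpace Δ'')
    {n : ℕ} (f : G →+ (Fin n → 𝕋)) (hf : Continuous f) {x : G} (hx : x ∈ Δ'') :
    IsOfFinAddOrder (f x) := by
  haveI : CompactSpace Δ'' := isCompact_iff_compactSpace.mp hcl.isCompact
  set g : Δ'' →+ (Fin n → 𝕋) := f.comp Δ''.subtype with hg
  have hgc : Continuous g := hf.comp continuous_subtype_val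
  set V : Set (Fin n → 𝕋) := Set.pi Set.univ (fun _ => Metric.ball (0:𝕋) (1/4)) with hV
  have hVopen : IsOpen V := isOpen_set_pi Set.finite_univ fun i _ => Metric.isOpen_ball
  have h0U : (0 : Δ'') ∈ g ⁻¹' V := by
    show g 0 ∈ V
    rw [map_zero]
    intro i _
    simpa using by norm_num
  obtain ⟨W, hWclopen, hW0, hWU⟩ :=
    compact_exists_isClopen_in_isOpen (hVopen.preimage hgc) h0U
  obtain ⟨H, hH⟩ :=
    IsTopologicalAddGroup.exist_openAddSubgroup_sub_clopen_nhds_of_zero hWclopen hW0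
  have hHker : ∀ h ∈ H.toAddSubgroup, g h = 0 := by
    intro h hh
    funext i
    have hball : g h ∈ V := hWU (hH hh)
    refine circle_eq_zero_of_small (A := (H.toAddSubgroup.map g).map (Pi.evalAddMonoidHom _ i))
      ?_ ?_
    · rintro a ⟨b, ⟨c, hc, rfl⟩, rfl⟩
      have hb : g c ∈ V := hWU (hH hc)
      have := hb i (Set.mem_univ i)
      simpa [Pi.evalAddMonoidHom, dist_zero_right] using this
    · exact ⟨g h, ⟨h, hh, rfl⟩, rfl⟩
  haveI : Finite (Δ'' ⧸ H.toAddSubgroup) :=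
    AddSubgroup.quotient_finite_of_isOpen H.toAddSubgroup H.isOpen
  set c := Nat.card (Δ'' ⧸ H.toAddSubgroup) with hc
  have hcpos : 0 < c := Nat.card_pos
  have hmem : c • (⟨x, hx⟩ : Δ'') ∈ H.toAddSubgroup := by
    have h0 : (QuotientAddGroup.mk' H.toAddSubgroup) (c • (⟨x, hx⟩ : Δ'')) = 0 := by
      rw [map_nsmul, QuotientAddGroup.mk'_apply, card_nsmul_eq_zero']
    rwa [QuotientAddGroup.mk'_apply, QuotientAddGroup.eq_zero_iff] at h0
  have : g (c • (⟨x, hx⟩ : Δ'')) = 0 := hHker _ hmem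
  rw [map_nsmul] at this
  have hgx : g (⟨x, hx⟩ : Δ'') = f x := rfl
  rw [hgx] at this
  exact isOfFinAddOrder_iff_nsmul_eq_zero.2 ⟨c, hcpos, this⟩

lemma isTQS_nsmul_ker {G : Type} [AddCommGroup G] [TopologicalSpace G] [IsTopologicalAddGroup G]
    [CompactSpace G] [T2Space G] {Δ : AddSubgroup G} (hΔcl : IsClosed (Δ : Set G))
    (hΔtd : TotallyDisconnectedSpace Δ) {n : ℕ} (f : G →+ (Fin n → 𝕋)) (hfc : Continuous f)
    (hfsurj : Function.Surjective f) (hker : ∀ g, f g = 0 ↔ g ∈ Δ) {m : ℕ} (hm : 0 < m) :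
    IsTQS (((zsmulAddGroupHom (m:ℤ)).comp f).ker) := by
  set fm := (zsmulAddGroupHom (m:ℤ)).comp f with hfmdef
  have hfmapply : ∀ g, fm g = m • f g := fun g => by
    show zsmulAddGroupHom (m:ℤ) (f g) = m • f g
    rw [zsmulAddGroupHom_apply, natCast_zsmul]
  have hfmc : Continuous fm := by
    have : (fm : G → Fin n → 𝕋) = (fun y => (m:ℤ) • y) ∘ f := rfl
    rw [this]
    exact (continuous_zsmul (m:ℤ)).comp hfc
  have hfmsurj : Function.Surjective fm := by
    intro y
    have hz : ∀ i, ∃ t : 𝕋, m • t = y i := fun i => circle_nsmul_surj hm (y i)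
    choose z hz using hz
    obtain ⟨g, hg⟩ := hfsurj z
    refine ⟨g, ?_⟩
    rw [hfmapply, hg]
    funext i
    rw [Pi.smul_apply, hz]
  have hkerset : (fm.ker : Set G) = fm ⁻¹' {0} := by
    ext g; simp [AddMonoidHom.mem_ker]
  refine ⟨?_, ?_, n, ?_⟩
  · rw [hkerset]
    exact isClosed_singleton.preimage hfmc
  · refine totallyDisconnectedSpace_subtype_iff.mpr (isTotallyDisconnected_of_finite_image
      (totallyDisconnectedSpace_subtype_iff.mp hΔtd) f hfc hker ?_)
    have hsub : f '' (fm.ker : Set G) ⊆ Set.pi Set.univ (fun _ : Fin n => {y : 𝕋 | m • y = 0}) := by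
      rintro _ ⟨g, hg, rfl⟩ i _
      have h0 : fm g = 0 := hg
      rw [hfmapply] at h0
      have := congrFun h0 i
      simpa using this
    exact ((Set.Finite.pi fun _ => finite_nsmul_ker_circle hm).subset hsub)
  · haveI : CompactSpace (G ⧸ fm.ker) := Quotient.compactSpace
    set E := QuotientAddGroup.quotientKerEquivOfSurjective fm hfmsurj with hE
    have hEc : Continuous E := by
      refine (QuotientAddGroup.isQuotientMap_mk fm.ker).continuous_iff.mpr ?_
      exact hfmc
    exact ⟨E, hEc, (Continuous.homeoOfEquivCompactToT2 (f := E.toEquiv) hEc).symm.continuous⟩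

noncomputable def torsionPiEquiv {ι : Type*} [Finite ι] (A : ι → Type*)
    [∀ i, AddCommGroup (A i)] :
    AddCommGroup.torsion (∀ i, A i) ≃+ (∀ i, AddCommGroup.torsion (A i)) where
  toFun x i := ⟨x.1 i, (pi_mem_torsion_iff x.1).1 x.2 i⟩
  invFun y := ⟨fun i => (y i).1, (pi_mem_torsion_iff _).2 fun i => (y i).2⟩
  left_inv x := by ext; rfl
  right_inv y := by ext; rfl
  map_add' x y := by ext; rfl

lemma rat_coe_isOfFinAddOrder (q : ℚ) : IsOfFinAddOrder (((q : ℝ)) : 𝕋) := by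
  haveI : Fact ((0:ℝ) < 1) := ⟨zero_lt_one⟩
  have h := AddCircle.addOrderOf_coe_rat (p := (1:ℝ)) (q := q)
  rw [mul_one] at h
  rw [← addOrderOf_pos_iff, h]
  exact q.pos

noncomputable def ratPsi : ℚ →+ 𝕋 :=
  (QuotientAddGroup.mk' (AddSubgroup.zmultiples (1:ℝ))).comp (Rat.castHom ℝ).toAddMonoidHom

lemma ratPsi_apply (q : ℚ) : ratPsi q = ((q : ℝ) : 𝕋) := rfl

lemma ratPsi_ker : ratPsi.ker = AddSubgroup.zmultiples (1:ℚ) := by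
  ext q
  rw [AddMonoidHom.mem_ker, ratPsi_apply, AddCircle.coe_eq_zero_iff, AddSubgroup.mem_zmultiples_iff]
  constructor
  · rintro ⟨k, hk⟩
    refine ⟨k, ?_⟩
    have hkr : ((k : ℤ) : ℝ) = ((q : ℚ) : ℝ) := by rw [← hk]; simp [zsmul_eq_mul]
    have hkq : ((k : ℤ) : ℚ) = q := by exact_mod_cast hkr
    rw [← hkq]; simp [zsmul_eq_mul]
  · rintro ⟨k, hk⟩
    refine ⟨k, ?_⟩
    rw [← hk]; push_cast [zsmul_eq_mul]; ring

lemma ratPsi_range : ratPsi.range = AddCommGroup.torsion 𝕋 := by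
  haveI : Fact ((0:ℝ) < 1) := ⟨zero_lt_one⟩
  ext u
  rw [AddMonoidHom.mem_range, AddCommGroup.mem_torsion]
  constructor
  · rintro ⟨q, rfl⟩
    exact rat_coe_isOfFinAddOrder q
  · intro h
    obtain ⟨m, _, _, he⟩ := AddCircle.exists_gcd_eq_one_of_isOfFinAddOrder h
    have hd : 0 < addOrderOf u := h.addOrderOf_pos
    set d := addOrderOf u with hdd
    refine ⟨(m : ℚ) / (d : ℚ), ?_⟩
    rw [ratPsi_apply, ← he, mul_one]
    congr 1
    push_cast
    ring

noncomputable def torsionCircleEquiv : AddCircle (1:ℚ) ≃+ AddCommGroup.torsion 𝕋 :=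
  ((QuotientAddGroup.quotientAddEquivOfEq ratPsi_ker.symm).trans
    (QuotientAddGroup.quotientKerEquivRange ratPsi)).trans
    (AddEquiv.addSubgroupCongr ratPsi_range)

noncomputable def piQuotientTorsionEquiv {ι : Type*} [Finite ι] (A : ι → Type*)
    [∀ i, AddCommGroup (A i)] :
    ((∀ i, A i) ⧸ AddCommGroup.torsion (∀ i, A i)) ≃+
      (∀ i, A i ⧸ AddCommGroup.torsion (A i)) := by
  set F : (∀ i, A i) →+ (∀ i, A i ⧸ AddCommGroup.torsion (A i)) :=
    AddMonoidHom.mk' (fun x i => QuotientAddGroup.mk (x i))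
      (fun a b => funext fun i => by simp) with hFdef
  have hker : F.ker = AddCommGroup.torsion (∀ i, A i) := by
    ext x
    rw [AddMonoidHom.mem_ker]
    have hFx : F x = fun i => (QuotientAddGroup.mk (x i) : A i ⧸ AddCommGroup.torsion (A i)) := rfl
    rw [hFx, funext_iff]
    constructor
    · intro h
      refine (pi_mem_torsion_iff x).2 fun i => ?_
      have := h i
      rwa [Pi.zero_apply, QuotientAddGroup.eq_zero_iff] at this
    · intro h i
      rw [Pi.zero_apply, QuotientAddGroup.eq_zero_iff]
      exact (pi_mem_torsion_iff x).1 h i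
  have hsurj : Function.Surjective F := by
    intro y
    have hy : ∀ i, ∃ t, (QuotientAddGroup.mk t : A i ⧸ AddCommGroup.torsion (A i)) = y i :=
      fun i => QuotientAddGroup.mk_surjective (y i)
    choose z hz using hy
    exact ⟨z, funext hz⟩
  exact (QuotientAddGroup.quotientAddEquivOfEq hker.symm).trans
    (QuotientAddGroup.quotientKerEquivOfSurjective F hsurj)

noncomputable def circleQuotientTorsionEquiv :
    (ℝ ⧸ ratSub) ≃+ (𝕋 ⧸ AddCommGroup.torsion 𝕋) := by
  set F : ℝ →+ (𝕋 ⧸ AddCommGroup.torsion 𝕋) :=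
    (QuotientAddGroup.mk' (AddCommGroup.torsion 𝕋)).comp
      (QuotientAddGroup.mk' (AddSubgroup.zmultiples (1:ℝ))) with hF
  have hFsurj : Function.Surjective F :=
    (QuotientAddGroup.mk'_surjective _).comp (QuotientAddGroup.mk'_surjective _)
  have hFker : F.ker = ratSub := by
    ext x
    rw [AddMonoidHom.mem_ker]
    have hFx : F x = QuotientAddGroup.mk ((x : ℝ) : 𝕋) := rfl
    rw [hFx, QuotientAddGroup.eq_zero_iff, AddCommGroup.mem_torsion]
    constructor
    · intro h
      obtain ⟨m, hm, hmx⟩ := isOfFinAddOrder_iff_nsmul_eq_zero.1 h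
      rw [← AddCircle.coe_nsmul, AddCircle.coe_eq_zero_iff] at hmx
      obtain ⟨k, hk⟩ := hmx
      refine ⟨(k : ℚ) / (m : ℚ), ?_⟩
      show ((((k:ℚ)/(m:ℚ) : ℚ)) : ℝ) = x
      have hm' : (m : ℝ) ≠ 0 := Nat.cast_ne_zero.2 hm.ne'
      push_cast
      rw [div_eq_iff hm']
      rw [zsmul_eq_mul, mul_one, nsmul_eq_mul] at hk
      rw [hk]
      ring
    · rintro ⟨q, rfl⟩
      exact rat_coe_isOfFinAddOrder q
  exact (QuotientAddGroup.quotientAddEquivOfEq hFker.symm).trans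
    (QuotientAddGroup.quotientKerEquivOfSurjective F hFsurj)

/-- For a torus-free protorus `G` with no `ℚ^∨`-factors, `Δ̂` the union of all members of
`L(G)`, and `Δ ∈ L(G)` with `G/Δ ≅ 𝕋ⁿ` (`n = dim G`): `Δ̂/Δ ≅ (ℚ/ℤ)ⁿ` and
`G/Δ̂ ≅ (ℝ/ℚ)ⁿ` as abstract groups. -/
theorem stmt14 {G : Type} [AddCommGroup G] [TopologicalSpace G] [IsTopologicalAddGroup G]
    [CompactSpace G] [T2Space G] [ConnectedSpace G]
    (htf : TorusFree G) (Δ : AddSubgroup G) (hΔ : IsTQS Δ) (n : ℕ)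
    (htor : TopIso (G ⧸ Δ) (Fin n → AddCircle (1 : ℝ))) :
    Nonempty ((↥(sSup {Δ' : AddSubgroup G | IsTQS Δ'}) ⧸
        (Δ.addSubgroupOf (sSup {Δ' : AddSubgroup G | IsTQS Δ'}))) ≃+
        (Fin n → AddCircle (1 : ℚ))) ∧
    Nonempty ((G ⧸ sSup {Δ' : AddSubgroup G | IsTQS Δ'}) ≃+ (Fin n → ℝ ⧸ ratSub)) := by
  classical
  obtain ⟨e, he, -⟩ := htor
  set S := {Δ' : AddSubgroup G | IsTQS Δ'} with hS
  set f : G →+ (Fin n → 𝕋) := e.toAddMonoidHom.comp (QuotientAddGroup.mk' Δ) with hfdef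
  have hfapply : ∀ g : G, f g = e (QuotientAddGroup.mk g) := fun g => rfl
  have hfc : Continuous f := he.comp continuous_quot_mk
  have hfsurj : Function.Surjective f := e.surjective.comp (QuotientAddGroup.mk'_surjective Δ)
  have hker : ∀ g : G, f g = 0 ↔ g ∈ Δ := by
    intro g
    rw [hfapply]
    have h1 : e (QuotientAddGroup.mk g) = 0 ↔ (QuotientAddGroup.mk g : G ⧸ Δ) = 0 :=
      ⟨fun h => e.injective (by rw [h, map_zero]), fun h => by rw [h, map_zero]⟩
    rw [h1, QuotientAddGroup.eq_zero_iff]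
  set T := AddCommGroup.torsion (Fin n → 𝕋) with hT
  have hhat : sSup S = T.comap f := by
    apply le_antisymm
    · refine sSup_le fun Δ'' hΔ'' => fun x hx => ?_
      rw [AddSubgroup.mem_comap]
      exact (AddCommGroup.mem_torsion _).2
        (torsion_image_of_profinite hΔ''.1 hΔ''.2.1 f hfc hx)
    · intro x hx
      rw [AddSubgroup.mem_comap, hT] at hx
      rw [AddCommGroup.mem_torsion] at hx
      obtain ⟨m, hm, hmx⟩ := isOfFinAddOrder_iff_nsmul_eq_zero.1 hx
      have hmemS : (((zsmulAddGroupHom (m:ℤ)).comp f).ker) ∈ S :=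
        isTQS_nsmul_ker hΔ.1 hΔ.2.1 f hfc hfsurj hker hm
      have hxmem : x ∈ ((zsmulAddGroupHom (m:ℤ)).comp f).ker :=
        AddMonoidHom.mem_ker.2 (by
          show zsmulAddGroupHom (m:ℤ) (f x) = 0
          rw [zsmulAddGroupHom_apply, natCast_zsmul, hmx])
      exact le_sSup hmemS hxmem
  constructor
  · have hmemT : ∀ x : (sSup S : AddSubgroup G), f x.1 ∈ T := fun x => by
      have hx : x.1 ∈ AddSubgroup.comap f T := hhat.le x.2
      exact AddSubgroup.mem_comap.1 hx
    set φ : (sSup S : AddSubgroup G) →+ T :=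
      AddMonoidHom.codRestrict (f.comp (sSup S).subtype) T (fun x => hmemT x) with hφ
    have hφsurj : Function.Surjective φ := by
      rintro ⟨t, ht⟩
      obtain ⟨g, hg⟩ := hfsurj t
      have hgmem : g ∈ sSup S :=
        hhat.ge (AddSubgroup.mem_comap.2 (by rw [hg]; exact ht))
      exact ⟨⟨g, hgmem⟩, Subtype.ext hg⟩
    have hφker : φ.ker = Δ.addSubgroupOf (sSup S) := by
      ext x
      rw [AddMonoidHom.mem_ker, AddSubgroup.mem_addSubgroupOf, ← hker x.1]
      constructor
      · intro h
        exact congrArg Subtype.val h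
      · intro h
        exact Subtype.ext h
    exact ⟨(QuotientAddGroup.quotientAddEquivOfEq hφker.symm).trans
      ((QuotientAddGroup.quotientKerEquivOfSurjective φ hφsurj).trans
        ((torsionPiEquiv (fun _ : Fin n => 𝕋)).trans
          (AddEquiv.piCongrRight fun _ => torsionCircleEquiv.symm)))⟩
  · set F : G →+ ((Fin n → 𝕋) ⧸ T) := (QuotientAddGroup.mk' T).comp f with hF
    have hFsurj : Function.Surjective F :=
      (QuotientAddGroup.mk'_surjective T).comp hfsurj
    have hFker : F.ker = sSup S := by
      ext g
      rw [AddMonoidHom.mem_ker, hhat, AddSubgroup.mem_comap]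
      show (QuotientAddGroup.mk (f g) : (Fin n → 𝕋) ⧸ T) = 0 ↔ _
      rw [QuotientAddGroup.eq_zero_iff]
    exact ⟨(QuotientAddGroup.quotientAddEquivOfEq hFker.symm).trans
      ((QuotientAddGroup.quotientKerEquivOfSurjective F hFsurj).trans
        ((piQuotientTorsionEquiv (fun _ : Fin n => 𝕋)).trans
          (AddEquiv.piCongrRight fun _ => circleQuotientTorsionEquiv.symm)))⟩
end

section
/- For a torus-free protorus G, the path component of the identity, exp_G 𝔏(G), is a divisible torsion-free subgroup of G. -/
/-- For a torus-free protorus `G`, the path component of the identity `exp_G 𝔏(G)` is a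
divisible and torsion-free subgroup of `G`. -/
theorem stmt15 {G : Type} [AddCommGroup G] [TopologicalSpace G] [IsTopologicalAddGroup G]
    [CompactSpace G] [T2Space G] [ConnectedSpace G]
    (htf : TorusFree G) :
    (∀ g ∈ expImg G, ∀ n : ℤ, n ≠ 0 → ∃ h ∈ expImg G, n • h = g) ∧
    (∀ g ∈ expImg G, ∀ n : ℕ, n ≠ 0 → n • g = 0 → g = 0) := by
  constructor
  · rintro g ⟨r, rfl⟩ n hn
    have hn' : (n : ℝ) ≠ 0 := Int.cast_ne_zero.mpr hn
    refine ⟨r ((n : ℝ)⁻¹), ⟨⟨r.toAddMonoidHom.comp (AddMonoidHom.mulRight ((n:ℝ)⁻¹)),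
      r.continuous.comp (continuous_id.mul continuous_const)⟩, by show r (1 * ((n:ℝ))⁻¹) = r ((n:ℝ))⁻¹; rw [one_mul]⟩, ?_⟩
    have := map_zsmul r.toAddMonoidHom n ((n:ℝ)⁻¹)
    simp only [zsmul_eq_mul, mul_inv_cancel₀ hn'] at this
    simpa using this.symm ▸ rfl
  · rintro g ⟨r, rfl⟩ n hn hng
    by_contra hg
    -- kernel of r
    set K : AddSubgroup ℝ := (r.toAddMonoidHom).ker with hK
    have hKclosed : IsClosed (K : Set ℝ) := by
      have : (K : Set ℝ) = r ⁻¹' {0} := rfl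
      rw [this]
      exact IsClosed.preimage r.continuous isClosed_singleton
    have hnK : (n : ℝ) ∈ K := by
      have h1 : r ((n:ℕ) • (1:ℝ)) = (n:ℕ) • r 1 := map_nsmul r.toAddMonoidHom n 1
      have : r ((n:ℕ):ℝ) = 0 := by
        rw [show ((n:ℕ):ℝ) = (n:ℕ) • (1:ℝ) by simp, h1, hng]
      exact this
    have hnot : K ≠ ⊤ := by
      intro h
      have : (1:ℝ) ∈ K := h ▸ AddSubgroup.mem_top (1:ℝ)
      exact hg this
    rcases AddSubgroup.dense_or_cyclic K with hd | ⟨a, ha⟩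
    · refine hnot (SetLike.ext' ?_)
      have := hKclosed.closure_eq
      rw [hd.closure_eq] at this
      simp [← this]
    · have hmem : ∀ x, x ∈ K ↔ ∃ k : ℤ, k • a = x := by
        intro x; rw [ha, AddSubgroup.mem_closure_singleton]
      have ha0 : a ≠ 0 := by
        rintro rfl
        obtain ⟨k, hk⟩ := (hmem _).mp hnK
        simp at hk
        exact (Nat.cast_ne_zero (R := ℝ)).mpr hn hk.symm
      -- f : ℝ →+ G, t ↦ r (a * t); kernel is zmultiples 1
      set f : ℝ →+ G := r.toAddMonoidHom.comp (AddMonoidHom.mulLeft a) with hf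
      have hfc : Continuous f := r.continuous.comp (continuous_const.mul continuous_id)
      have hker : ∀ x : ℝ, f x = 0 ↔ x ∈ AddSubgroup.zmultiples (1:ℝ) := by
        intro x
        constructor
        · intro hx
          have : a * x ∈ K := hx
          obtain ⟨k, hk⟩ := (hmem _).mp this
          refine ⟨k, ?_⟩
          have hx' : x = (k : ℝ) := by
            rw [zsmul_eq_mul] at hk
            have := mul_left_cancel₀ ha0 (by linarith : a * x = a * k)
            linarith
          simp [zsmul_eq_mul, hx']
        · rintro ⟨k, rfl⟩
          show r (a * ((k:ℤ) • (1:ℝ))) = 0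
          have h2 : a * ((k:ℤ) • (1:ℝ)) = k • a := by
            simp [zsmul_eq_mul, mul_comm]
          rw [h2]
          exact (hmem (k • a)).mpr ⟨k, rfl⟩
      -- lift to AddCircle 1
      haveI : Fact ((0:ℝ) < 1) := ⟨one_pos⟩
      let φ : AddCircle (1:ℝ) →+ G :=
        QuotientAddGroup.lift (AddSubgroup.zmultiples (1:ℝ)) f
          (fun x hx => (hker x).mpr hx)
      have hφc : Continuous φ := continuous_quot_lift _ hfc
      have hφinj : Function.Injective φ := by
        intro x y hxy
        induction x using QuotientAddGroup.induction_on
        induction y using QuotientAddGroup.induction_on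
        rename_i u v
        rw [QuotientAddGroup.eq]
        refine (hker _).mp ?_
        have hu : φ ((u : AddCircle (1:ℝ))) = f u := rfl
        have hv : φ ((v : AddCircle (1:ℝ))) = f v := rfl
        rw [hu, hv] at hxy
        rw [map_add, map_neg, hxy]
        simp
      have hsurj : Function.Surjective φ.rangeRestrict := φ.rangeRestrict_surjective
      have hinj' : Function.Injective φ.rangeRestrict := fun x y h =>
        hφinj (Subtype.ext_iff.mp h)
      let e : AddCircle (1:ℝ) ≃+ φ.range := AddEquiv.ofBijective φ.rangeRestrict ⟨hinj', hsurj⟩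
      have hec : Continuous e := Continuous.subtype_mk hφc _
      let homeo := Continuous.homeoOfEquivCompactToT2 (f := e.toEquiv) hec
      exact htf φ.range ⟨e.symm, homeo.symm.continuous, homeo.continuous⟩
end

section
/- Let G be a torus-free protorus and L a sublattice of L(G) (profinite subgroups with torus quotient) with ⋂L = 0. Then the group Δ̂_L = ⋃_{Δ∈L} Δ, topologized by declaring the members of L to be a neighborhood basis of 0 consisting of open subgroups, is a locally compact, totally disconnected, Hausdorff topological abelian group in which every element generates a relatively compact cyclic subgroup (i.e., Δ̂_L is periodic), and the identity map from this topology to the subspace topology inherited from G is continuous. -/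
open Filter Set Topology

lemma addCircle_two_nsmul_norm {z : AddCircle (1:ℝ)} (hz : ‖z‖ < 1/4) :
    ‖(2:ℕ) • z‖ = 2 * ‖z‖ := by
  induction z using QuotientAddGroup.induction_on with
  | H x₀ =>
    set x : ℝ := x₀ - round x₀ with hxdef
    have hco : ((x : ℝ) : AddCircle (1:ℝ)) = ((x₀ : ℝ) : AddCircle (1:ℝ)) := by
      rw [hxdef]
      have h0 : (((round x₀ : ℝ)) : AddCircle (1:ℝ)) = 0 := by
        rw [QuotientAddGroup.eq_zero_iff]
        exact ⟨round x₀, by simp⟩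
      rw [sub_eq_add_neg, QuotientAddGroup.mk_add, QuotientAddGroup.mk_neg, h0]
      simp
    have hxle : |x| ≤ 1/2 := abs_sub_round x₀
    have hnorm : ‖((x : ℝ) : AddCircle (1:ℝ))‖ = |x| :=
      (AddCircle.norm_coe_eq_abs_iff (p := 1) one_ne_zero).mpr (by rw [abs_one]; linarith)
    rw [← hco, hnorm] at hz ⊢
    have h2 : (2:ℕ) • ((x : ℝ) : AddCircle (1:ℝ)) = ((x + x : ℝ) : AddCircle (1:ℝ)) := by
      rw [two_smul, QuotientAddGroup.mk_add]
    rw [h2]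
    have : ‖((x + x : ℝ) : AddCircle (1:ℝ))‖ = |x + x| := by
      refine (AddCircle.norm_coe_eq_abs_iff (p := 1) one_ne_zero).mpr ?_
      rw [abs_one]
      calc |x + x| ≤ |x| + |x| := abs_add_le _ _
        _ ≤ 1/2 := by linarith
    rw [this]
    rw [← two_mul, abs_mul, abs_two]

lemma addCircle_eq_zero {y : AddCircle (1:ℝ)}
    (h : ∀ m : ℕ, ‖((2:ℕ)^m) • y‖ < 1/4) : y = 0 := by
  by_contra hy
  have hc : 0 < ‖y‖ := norm_pos_iff.mpr hy
  have hiter : ∀ m : ℕ, ‖((2:ℕ)^m) • y‖ = (2:ℝ)^m * ‖y‖ := by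
    intro m
    induction m with
    | zero => simp
    | succ m ih =>
      have h2 : ((2:ℕ)^(m+1)) • y = (2:ℕ) • (((2:ℕ)^m) • y) := by
        rw [pow_succ, mul_comm, mul_smul]
      rw [h2, addCircle_two_nsmul_norm (h m), ih]
      ring
  obtain ⟨m, hm⟩ := pow_unbounded_of_one_lt ((1/4) / ‖y‖) (one_lt_two (α := ℝ))
  have h1 : (1/4 : ℝ) < 2 ^ m * ‖y‖ := (div_lt_iff₀ hc).mp hm
  have := h m
  rw [hiter m] at this
  linarith

lemma pi_addCircle_eq_zero {n : ℕ} {x : Fin n → AddCircle (1:ℝ)}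
    (h : ∀ m : ℕ, ∀ i, ‖(((2:ℕ)^m) • x) i‖ < 1/4) : x = 0 := by
  funext i
  exact addCircle_eq_zero (fun m => by simpa using h m i)

lemma relOpen {G : Type} [AddCommGroup G] [TopologicalSpace G] [IsTopologicalAddGroup G]
    [CompactSpace G] [T2Space G] (D Δ' : AddSubgroup G) (hDc : IsClosed (D : Set G))
    (hDtd : TotallyDisconnectedSpace D) (hΔ' : IsTQS Δ') :
    IsOpen {x : ↥D | (x : G) ∈ Δ'} := by
  haveI : CompactSpace ↥D := isCompact_iff_compactSpace.mp hDc.isCompact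
  obtain ⟨hcl, htd, n, e, he, he'⟩ := hΔ'
  set F : ↥D →+ (Fin n → AddCircle (1:ℝ)) :=
    e.toAddMonoidHom.comp ((QuotientAddGroup.mk' Δ').comp D.subtype) with hF
  have hFc : Continuous F := by
    exact he.comp (continuous_quot_mk.comp continuous_subtype_val)
  set U : Set (Fin n → AddCircle (1:ℝ)) := Set.pi Set.univ (fun _ => Metric.ball 0 (1/4)) with hU
  have hUo : IsOpen U := isOpen_set_pi Set.finite_univ (fun i _ => Metric.isOpen_ball)
  have h0U : (0 : Fin n → AddCircle (1:ℝ)) ∈ U := by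
    intro i _
    simp only [Pi.zero_apply, Metric.mem_ball, dist_self]
    norm_num
  have h0W : (0 : ↥D) ∈ F ⁻¹' U := by simpa [map_zero] using h0U
  obtain ⟨V, hVclopen, h0V, hVW⟩ :=
    compact_exists_isClopen_in_isOpen (hUo.preimage hFc) h0W
  obtain ⟨H, hH⟩ :=
    IsTopologicalAddGroup.exist_openAddSubgroup_sub_clopen_nhds_of_zero hVclopen h0V
  have hHsub : (H : Set ↥D) ⊆ {x : ↥D | (x : G) ∈ Δ'} := by
    intro v hv
    have hFv : F v = 0 := by
      apply pi_addCircle_eq_zero (x := F v)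
      intro m i
      have hmem : ((2:ℕ)^m) • v ∈ H.toAddSubgroup := AddSubgroup.nsmul_mem _ hv _
      have hmem2 : F (((2:ℕ)^m) • v) ∈ U := hVW (hH hmem)
      rw [map_nsmul] at hmem2
      have := hmem2 i (Set.mem_univ i)
      simpa [Metric.mem_ball, dist_zero_right] using this
    have h0 : e ((QuotientAddGroup.mk' Δ') (v : G)) = 0 := hFv
    have hq : ((QuotientAddGroup.mk' Δ') (v : G)) = 0 :=
      e.injective (by rw [map_zero]; exact h0)
    rw [QuotientAddGroup.mk'_apply, QuotientAddGroup.eq_zero_iff] at hq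
    exact hq
  have hle : H.toAddSubgroup ≤ Δ'.comap D.subtype := fun v hv => hHsub hv
  have : IsOpen ((Δ'.comap D.subtype : AddSubgroup ↥D) : Set ↥D) :=
    AddSubgroup.isOpen_mono hle H.isOpen
  exact this

/-- Let `L` be a nonempty sublattice of `L(G)` with `⋂L = 0`, for a torus-free protorus `G`.
Then `Δ̂_L = ⋃_{Δ∈L} Δ` (= `sSup L`), topologized with the members of `L` as a neighborhood
basis of `0`, is a locally compact totally disconnected Hausdorff topological abelian group in
which the closure of every cyclic subgroup is compact (a periodic group), and the identity map
from this topology to the subspace topology inherited from `G` is continuous. -/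
theorem stmt16 {G : Type} [AddCommGroup G] [TopologicalSpace G] [IsTopologicalAddGroup G]
    [CompactSpace G] [T2Space G] [ConnectedSpace G]
    (htf : TorusFree G) (L : Set (AddSubgroup G)) (hne : L.Nonempty)
    (hL : ∀ Δ ∈ L, IsTQS Δ)
    (hsup : ∀ Δ ∈ L, ∀ Δ' ∈ L, Δ ⊔ Δ' ∈ L)
    (hinf : ∀ Δ ∈ L, ∀ Δ' ∈ L, Δ ⊓ Δ' ∈ L)
    (hzero : ∀ x : G, (∀ Δ ∈ L, x ∈ Δ) → x = 0) :
    ∃ τ : TopologicalSpace ↥(sSup L),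
      (@nhds _ τ 0).HasBasis (fun Δ : AddSubgroup G => Δ ∈ L)
        (fun Δ => (Subtype.val ⁻¹' (Δ : Set G) : Set ↥(sSup L))) ∧
      @IsTopologicalAddGroup ↥(sSup L) τ _ ∧
      @LocallyCompactSpace ↥(sSup L) τ ∧
      @T2Space ↥(sSup L) τ ∧
      @TotallyDisconnectedSpace ↥(sSup L) τ ∧
      (∀ x : ↥(sSup L), @IsCompact ↥(sSup L) τ (@closure _ τ (Set.range fun k : ℤ => k • x))) ∧
      @Continuous ↥(sSup L) ↥(sSup L) τ instTopologicalSpaceSubtype id := by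
  classical
  let pre : AddSubgroup G → Set ↥(sSup L) := fun Δ => (Subtype.val ⁻¹' (Δ : Set G))
  -- facts in the subspace topology, established before introducing τ
  have hsubcpt : ∀ Δ ∈ L, IsCompact (pre Δ) := by
    intro Δ hΔ
    have hΔle : Δ ≤ sSup L := le_sSup hΔ
    have himg : Subtype.val '' (Subtype.val ⁻¹' (Δ : Set G) : Set ↥(sSup L)) = (Δ : Set G) := by
      rw [Set.image_preimage_eq_inter_range]
      exact Set.inter_eq_left.mpr (fun g hg => ⟨⟨g, hΔle hg⟩, rfl⟩)
    rw [show pre Δ = Subtype.val ⁻¹' (Δ : Set G) from rfl,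
      Topology.IsEmbedding.subtypeVal.isCompact_iff, himg]
    exact (hL Δ hΔ).1.isCompact
  have hnbhd : ∀ Δ ∈ L, ∀ Δ' ∈ L, ∀ x : ↥(sSup L), x ∈ pre Δ →
      ∀ᶠ y in nhdsWithin x (pre Δ), y ∈ (fun z => x + z) '' (pre Δ') := by
    intro Δ hΔ Δ' hΔ' x hx
    have hΔ'' : Δ ⊓ Δ' ∈ L := hinf Δ hΔ Δ' hΔ'
    have hrel : IsOpen {y : ↥Δ | (y : G) ∈ Δ ⊓ Δ'} :=
      relOpen Δ (Δ ⊓ Δ') (hL Δ hΔ).1 (hL Δ hΔ).2.1 (hL _ hΔ'')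
    obtain ⟨O, hOo, hOeq⟩ := isOpen_induced_iff.mp hrel
    have hOiff : ∀ g : G, g ∈ Δ → (g ∈ O ↔ g ∈ Δ') := by
      intro g hg
      have := Set.ext_iff.mp hOeq ⟨g, hg⟩
      simpa using this
    set N : Set ↥(sSup L) := (fun y : ↥(sSup L) => (y : G) - (x : G)) ⁻¹' O with hNdef
    have hNo : IsOpen N := hOo.preimage (continuous_subtype_val.sub continuous_const)
    have hxN : x ∈ N := by
      have h0 : (0 : G) ∈ O := (hOiff 0 (Δ.zero_mem)).mpr (Δ'.zero_mem)
      simpa [hNdef, sub_self] using h0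
    refine Filter.eventually_iff.mpr (Filter.mem_of_superset
      (Filter.inter_mem (mem_nhdsWithin_of_mem_nhds (hNo.mem_nhds hxN))
        self_mem_nhdsWithin) ?_)
    rintro y ⟨hyN, hyΔ⟩
    refine ⟨y - x, ?_, by simp⟩
    have hsubmem : (y : G) - (x : G) ∈ Δ := Δ.sub_mem hyΔ hx
    exact (hOiff _ hsubmem).mp hyN
  have hsubopen : ∀ U : Set ↥(sSup L), IsOpen U →
      ∀ x ∈ U, ∃ U₀ : Set G, IsOpen U₀ ∧ Subtype.val ⁻¹' U₀ ⊆ U ∧ (x : G) ∈ U₀ := by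
    intro U hU x hx
    obtain ⟨U₀, hU₀, rfl⟩ := isOpen_induced_iff.mp hU
    exact ⟨U₀, hU₀, subset_rfl, hx⟩
  -- the additive group filter basis
  let B : AddGroupFilterBasis ↥(sSup L) := addGroupFilterBasisOfComm (pre '' L)
    (hne.image _)
    (by
      rintro _ _ ⟨Δ, hΔ, rfl⟩ ⟨Δ', hΔ', rfl⟩
      exact ⟨pre (Δ ⊓ Δ'), ⟨_, hinf Δ hΔ Δ' hΔ', rfl⟩, fun x hx => ⟨hx.1, hx.2⟩⟩)
    (by rintro _ ⟨Δ, hΔ, rfl⟩; exact Δ.zero_mem)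
    (by
      rintro _ ⟨Δ, hΔ, rfl⟩
      refine ⟨pre Δ, ⟨Δ, hΔ, rfl⟩, ?_⟩
      rintro x ⟨a, ha, b, hb, rfl⟩
      exact Δ.add_mem ha hb)
    (by
      rintro _ ⟨Δ, hΔ, rfl⟩
      exact ⟨pre Δ, ⟨Δ, hΔ, rfl⟩, fun x hx => Δ.neg_mem hx⟩)
  letI τ : TopologicalSpace ↥(sSup L) := B.topology
  haveI hTG : @IsTopologicalAddGroup ↥(sSup L) τ _ := B.isTopologicalAddGroup
  have hBmem : ∀ Δ ∈ L, pre Δ ∈ B := fun Δ hΔ => ⟨Δ, hΔ, rfl⟩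
  have hbasis0 : (@nhds _ τ (0 : ↥(sSup L))).HasBasis (fun Δ : AddSubgroup G => Δ ∈ L)
      (fun Δ => pre Δ) := by
    refine (B.nhds_zero_hasBasis).to_hasBasis ?_ ?_
    · rintro _ ⟨Δ, hΔ, rfl⟩; exact ⟨Δ, hΔ, subset_rfl⟩
    · intro Δ hΔ; exact ⟨pre Δ, hBmem Δ hΔ, subset_rfl⟩
  have hopen : ∀ Δ ∈ L, @IsOpen _ τ (pre Δ) := by
    intro Δ hΔ
    have hmem : pre Δ ∈ @nhds _ τ 0 := hbasis0.mem_of_mem hΔ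
    exact AddSubgroup.isOpen_of_mem_nhds (Δ.comap (sSup L).subtype) hmem
  have hclosed : ∀ Δ ∈ L, @IsClosed _ τ (pre Δ) := fun Δ hΔ =>
    AddSubgroup.isClosed_of_isOpen (Δ.comap (sSup L).subtype) (hopen Δ hΔ)
  -- small subgroups of G inside any neighborhood of 0
  have hsmall : ∀ W : Set G, IsOpen W → (0:G) ∈ W → ∃ Δ ∈ L, (Δ : Set G) ⊆ W := by
    intro W hWo h0W
    have hempty : (Set.univ ∩ ⋂ (i : ↥L), ((i.1 : Set G) ∩ Wᶜ)) = ∅ := by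
      ext g
      simp only [Set.mem_inter_iff, Set.mem_iInter, Set.mem_empty_iff_false, iff_false,
        Set.mem_univ, true_and, not_forall]
      by_contra hcon
      push_neg at hcon
      have : g = 0 := hzero g (fun Δ hΔ => (hcon ⟨Δ, hΔ⟩).1)
      obtain ⟨Δ, hΔ⟩ := hne
      exact (hcon ⟨Δ, hΔ⟩).2 (by rw [this]; exact h0W)
    obtain ⟨t, ht⟩ := CompactSpace.isCompact_univ.elim_finite_subfamily_closed
      (fun i : ↥L => ((i.1 : Set G) ∩ Wᶜ))
      (fun i => ((hL i.1 i.2).1).inter hWo.isClosed_compl) hempty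
    have hlb : ∀ s : Finset ↥L, ∃ Δ₀ ∈ L, ∀ i ∈ s, Δ₀ ≤ i.1 := by
      intro s
      induction s using Finset.induction with
      | empty => obtain ⟨Δ, hΔ⟩ := hne; exact ⟨Δ, hΔ, by simp⟩
      | @insert j s hjs ih =>
        obtain ⟨Δ₀, hΔ₀L, hΔ₀le⟩ := ih
        refine ⟨Δ₀ ⊓ j.1, hinf Δ₀ hΔ₀L j.1 j.2, ?_⟩
        intro i hi
        rcases Finset.mem_insert.mp hi with h | h
        · rw [h]; exact inf_le_right
        · exact le_trans inf_le_left (hΔ₀le i h)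
    obtain ⟨Δ₀, hΔ₀L, hΔ₀le⟩ := hlb t
    refine ⟨Δ₀, hΔ₀L, ?_⟩
    intro g hg
    by_contra hgW
    have hmem : g ∈ Set.univ ∩ ⋂ i ∈ t, ((i.1 : Set G) ∩ Wᶜ) := by
      refine ⟨trivial, ?_⟩
      simp only [Set.mem_iInter]
      intro i hi
      exact ⟨hΔ₀le i hi hg, hgW⟩
    rw [ht] at hmem
    exact hmem
  -- compactness of pre Δ in τ
  have hcpt : ∀ Δ ∈ L, @IsCompact _ τ (pre Δ) := by
    intro Δ hΔ
    have hcont : ∀ x ∈ pre Δ, Filter.Tendsto id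
        (@nhdsWithin _ instTopologicalSpaceSubtype x (pre Δ)) (@nhds _ τ x) := by
      intro x hx
      refine ((B.nhds_hasBasis x).tendsto_right_iff).mpr ?_
      rintro _ ⟨Δ', hΔ', rfl⟩
      exact hnbhd Δ hΔ Δ' hΔ' x hx
    have hcont' : @ContinuousOn _ _ instTopologicalSpaceSubtype τ id (pre Δ) :=
      fun x hx => hcont x hx
    have : @IsCompact _ τ (id '' (pre Δ)) :=
      @IsCompact.image_of_continuousOn _ _ instTopologicalSpaceSubtype τ _ id
        (hsubcpt Δ hΔ) hcont'
    simpa using this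
  -- T2
  haveI hT2 : @T2Space _ τ := by
    refine IsTopologicalAddGroup.t2Space_of_zero_sep ?_
    intro x hx
    have hxval : (x : G) ≠ 0 := fun h => hx (Subtype.ext h)
    have hnot : ∃ Δ ∈ L, (x : G) ∉ Δ := by
      by_contra hcon
      push_neg at hcon
      exact hxval (hzero _ hcon)
    obtain ⟨Δ, hΔ, hxΔ⟩ := hnot
    exact ⟨pre Δ, hbasis0.mem_of_mem hΔ, hxΔ⟩
  -- locally compact
  haveI hLC : @LocallyCompactSpace _ τ := by
    obtain ⟨Δ₀, hΔ₀⟩ := hne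
    exact (hcpt Δ₀ hΔ₀).locallyCompactSpace_of_mem_nhds_of_addGroup (hbasis0.mem_of_mem hΔ₀)
  -- totally disconnected
  haveI hTD : @TotallyDisconnectedSpace _ τ := by
    refine ⟨?_⟩
    intro C _ hC x hx y hy
    have key : ∀ Δ ∈ L, (y : G) - (x : G) ∈ Δ := by
      intro Δ hΔ
      have hclp : @IsClopen _ τ (pre Δ) := ⟨hclosed Δ hΔ, hopen Δ hΔ⟩
      have hmap : @Continuous _ _ τ τ (fun s : ↥(sSup L) => s - x) :=
        continuous_id.sub continuous_const
      have hQclopen : @IsClopen _ τ ((fun s : ↥(sSup L) => s - x) ⁻¹' (pre Δ)) :=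
        hclp.preimage hmap
      have hCsub : C ⊆ (fun s : ↥(sSup L) => s - x) ⁻¹' (pre Δ) := by
        refine hC.subset_isClopen hQclopen ⟨x, hx, ?_⟩
        show ((x - x : ↥(sSup L)) : G) ∈ Δ
        simp only [sub_self]
        exact Δ.zero_mem
      have := hCsub hy
      exact this
    have h0 : (y : G) - (x : G) = 0 := hzero _ key
    exact (Subtype.ext (sub_eq_zero.mp h0)).symm
  refine ⟨τ, hbasis0, hTG, hLC, hT2, hTD, ?_, ?_⟩
  · -- periodic: cyclic subgroups relatively compact
    intro x
    have hxmem : (x : G) ∈ sSup L := x.2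
    have hdir : DirectedOn (· ≤ ·) L := fun a ha b hb =>
      ⟨a ⊔ b, hsup a ha b hb, le_sup_left, le_sup_right⟩
    obtain ⟨Δ, hΔ, hxΔ⟩ := (AddSubgroup.mem_sSup_of_directedOn hne hdir).mp hxmem
    have hrange : (Set.range fun k : ℤ => k • x) ⊆ pre Δ := by
      rintro _ ⟨k, rfl⟩
      show ((k • x : ↥(sSup L)) : G) ∈ Δ
      rw [AddSubgroup.coe_zsmul]
      exact Δ.zsmul_mem hxΔ k
    have hclsub : @closure _ τ (Set.range fun k : ℤ => k • x) ⊆ pre Δ :=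
      closure_minimal hrange (hclosed Δ hΔ)
    exact (hcpt Δ hΔ).of_isClosed_subset isClosed_closure hclsub
  · -- continuity of id to the subspace topology
    rw [@continuous_def]
    intro U hU
    rw [@isOpen_iff_mem_nhds]
    intro x hx
    obtain ⟨U₀, hU₀, hU₀sub, hxU₀⟩ := hsubopen U hU x hx
    have hW : IsOpen ((fun g : G => (x : G) + g) ⁻¹' U₀) :=
      hU₀.preimage (continuous_const.add continuous_id)
    have h0W : (0:G) ∈ ((fun g : G => (x : G) + g) ⁻¹' U₀) := by
      simpa using hxU₀
    obtain ⟨Δ, hΔ, hΔW⟩ := hsmall _ hW h0W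
    rw [(B.nhds_hasBasis x).mem_iff]
    refine ⟨pre Δ, hBmem Δ hΔ, ?_⟩
    rintro _ ⟨v, hv, rfl⟩
    exact hU₀sub (hΔW hv)
end
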